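/- arXiv:math/0602575 — 5 statements merged into one kernel-verified Lean document; each statement's English description precedes it below -/
import Mathlib

section
/- Matrix-Tree Theorem for weighted multigraphs (Tutte). For any weighted graph G on a finite vertex set V = {1,…,n} and any vertices i, j ∈ V, the cofactor L^{ij} of the (i,j) entry of the Laplacian matrix L(G) equals ε(𝒯), the sum of the weights of all spanning trees of G. In particular all n² cofactors of L(G) are equal. -/
open scoped Classical

/-- The Laplacian (Kirchhoff) matrix of a weighted graph on vertex set `α` with
symmetric edge weights `ε`: `ℓ i j = -ε i j` for `j ≠ i`, and `ℓ i i = ∑_{k ≠ i} ε i k`. -/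
noncomputable def lap {α : Type*} [Fintype α] [DecidableEq α]
    (ε : α → α → ℝ) : Matrix α α ℝ :=
  Matrix.of fun i j =>
    if i = j then ∑ k ∈ Finset.univ.erase i, ε i k else - ε i j

/-- The weight of a set of (undirected) edges: the product of the edge weights. -/
noncomputable def edgeWt {α : Type*} (ε : α → α → ℝ) (hsym : ∀ a b, ε a b = ε b a)
    (F : Finset (Sym2 α)) : ℝ :=
  ∏ e ∈ F, Sym2.lift ⟨ε, hsym⟩ e

/-- `(F, R)` is a spanning rooted forest: the edges of `F` join distinct vertices, the
spanning subgraph with edge set `F` contains no cycles, and `R` contains exactly one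
vertex (the root) from each connected component. -/
def IsRootedSpanningForest {α : Type*} [Fintype α] [DecidableEq α]
    (F : Finset (Sym2 α)) (R : Finset α) : Prop :=
  (∀ e ∈ F, ¬ e.IsDiag) ∧
  (SimpleGraph.fromEdgeSet (↑F : Set (Sym2 α))).IsAcyclic ∧
  ∀ v : α, ∃! r, r ∈ R ∧ (SimpleGraph.fromEdgeSet (↑F : Set (Sym2 α))).Reachable v r

/-- The cofactor of the `(i,j)` entry of `M`: `(-1)^(i+j)` times the determinant of the
matrix obtained from `M` by deleting row `i` and column `j`. -/
noncomputable def cofactor {m : ℕ} (M : Matrix (Fin (m + 1)) (Fin (m + 1)) ℝ)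
    (i j : Fin (m + 1)) : ℝ :=
  (-1 : ℝ) ^ ((i : ℕ) + (j : ℕ)) * (M.submatrix i.succAbove j.succAbove).det

/-- `T` is a spanning tree: the edges join distinct vertices and the spanning subgraph
with edge set `T` is connected and contains no cycles. -/
def IsSpanningTree {α : Type*} [Fintype α] [DecidableEq α] (T : Finset (Sym2 α)) : Prop :=
  (∀ e ∈ T, ¬ e.IsDiag) ∧
  (SimpleGraph.fromEdgeSet (↑T : Set (Sym2 α))).Connected ∧
  (SimpleGraph.fromEdgeSet (↑T : Set (Sym2 α))).IsAcyclic

/-! ### Auxiliary machinery for the matrix-tree theorem -/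

namespace MTT

variable {n : ℕ}

/-- The "step toward the root" map associated to a choice `r` of a successor for
each non-root vertex. The root `i` is a fixed point. -/
noncomputable def stepV (i : Fin (n + 1)) (r : Fin n → Fin (n + 1)) (v : Fin (n + 1)) :
    Fin (n + 1) :=
  match finSuccEquiv' i v with
  | none => i
  | some k => r k

@[simp] lemma stepV_at (i : Fin (n + 1)) (r : Fin n → Fin (n + 1)) : stepV i r i = i := by
  simp [stepV, finSuccEquiv'_at]

@[simp] lemma stepV_succAbove (i : Fin (n + 1)) (r : Fin n → Fin (n + 1)) (k : Fin n) :
    stepV i r (i.succAbove k) = r k := by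
  simp [stepV, finSuccEquiv'_succAbove]

/-- `r` is a "good" successor choice: from every vertex, iterating the step map
eventually reaches the root `i`. -/
def GoodF (i : Fin (n + 1)) (r : Fin n → Fin (n + 1)) : Prop :=
  ∀ v, ∃ t, (stepV i r)^[t] v = i

lemma iterate_stepV_at (i : Fin (n + 1)) (r : Fin n → Fin (n + 1)) (t : ℕ) :
    (stepV i r)^[t] i = i :=
  Function.iterate_fixed (stepV_at i r) t

lemma iterate_eq_i_mono {i : Fin (n + 1)} {r : Fin n → Fin (n + 1)} {v : Fin (n + 1)} {t : ℕ}
    (h : (stepV i r)^[t] v = i) {t' : ℕ} (ht : t ≤ t') : (stepV i r)^[t'] v = i := by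
  obtain ⟨d, hd⟩ := Nat.exists_eq_add_of_le ht
  rw [hd, add_comm t d, Function.iterate_add_apply, h, iterate_stepV_at]

lemma not_good_of_periodic {i : Fin (n + 1)} {r : Fin n → Fin (n + 1)} {v : Fin (n + 1)} {p : ℕ}
    (hp : 0 < p) (hv : v ≠ i) (hcyc : (stepV i r)^[p] v = v) (t : ℕ) :
    (stepV i r)^[t] v ≠ i := by
  intro ht
  have h1 : ∀ j, (stepV i r)^[p * j] v = v := by
    intro j
    rw [Function.iterate_mul]
    exact Function.iterate_fixed hcyc j
  have h2 : (stepV i r)^[p * t] v = i := iterate_eq_i_mono ht (Nat.le_mul_of_pos_left t hp)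
  exact hv ((h1 t).symm.trans h2)

/-- time to reach the root -/
noncomputable def timeV {i : Fin (n + 1)} {r : Fin n → Fin (n + 1)} (hg : GoodF i r)
    (v : Fin (n + 1)) : ℕ :=
  Nat.find (hg v)

lemma timeV_spec {i : Fin (n + 1)} {r : Fin n → Fin (n + 1)} (hg : GoodF i r) (v : Fin (n + 1)) :
    (stepV i r)^[timeV hg v] v = i :=
  Nat.find_spec (hg v)

lemma timeV_step_lt {i : Fin (n + 1)} {r : Fin n → Fin (n + 1)} (hg : GoodF i r)
    {v : Fin (n + 1)} (hv : v ≠ i) : timeV hg (stepV i r v) < timeV hg v := by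
  have h0 : timeV hg v ≠ 0 := by
    intro h
    have hs := timeV_spec hg v
    rw [h] at hs
    exact hv hs
  obtain ⟨t, ht⟩ : ∃ t, timeV hg v = t + 1 := ⟨timeV hg v - 1, by omega⟩
  have hstep : (stepV i r)^[t] (stepV i r v) = i := by
    have hs := timeV_spec hg v
    rwa [ht, Function.iterate_succ_apply] at hs
  have hle : timeV hg (stepV i r v) ≤ t := Nat.find_le hstep
  omega

/-- The set of edges determined by a successor choice. -/
noncomputable def Tset (i : Fin (n + 1)) (r : Fin n → Fin (n + 1)) : Finset (Sym2 (Fin (n + 1))) :=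
  Finset.univ.image fun k => s(i.succAbove k, r k)

/-- The spanning subgraph determined by a successor choice. -/
noncomputable def Gr (i : Fin (n + 1)) (r : Fin n → Fin (n + 1)) : SimpleGraph (Fin (n + 1)) :=
  SimpleGraph.fromEdgeSet (↑(Tset i r) : Set (Sym2 (Fin (n + 1))))

lemma exists_eq_succAbove {i v : Fin (n + 1)} (hv : v ≠ i) : ∃ k, v = i.succAbove k := by
  obtain ⟨k, hk⟩ := Fin.exists_succAbove_eq hv
  exact ⟨k, hk.symm⟩

lemma adj_step {i : Fin (n + 1)} {r : Fin n → Fin (n + 1)} (hne : ∀ k, r k ≠ i.succAbove k)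
    (k : Fin n) : (Gr i r).Adj (i.succAbove k) (r k) := by
  rw [Gr, SimpleGraph.fromEdgeSet_adj]
  exact ⟨Finset.mem_coe.2 (Finset.mem_image_of_mem _ (Finset.mem_univ k)), fun h => hne k h.symm⟩

lemma adj_cases {i : Fin (n + 1)} {r : Fin n → Fin (n + 1)} {u v : Fin (n + 1)}
    (h : (Gr i r).Adj u v) :
    ∃ k, (u = i.succAbove k ∧ v = r k) ∨ (v = i.succAbove k ∧ u = r k) := by
  rw [Gr, SimpleGraph.fromEdgeSet_adj] at h
  obtain ⟨h1, _⟩ := h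
  rw [Finset.mem_coe, Tset, Finset.mem_image] at h1
  obtain ⟨k, -, hk⟩ := h1
  rw [Sym2.eq_iff] at hk
  rcases hk with ⟨h1, h2⟩ | ⟨h1, h2⟩
  · exact ⟨k, Or.inl ⟨h1.symm, h2.symm⟩⟩
  · exact ⟨k, Or.inr ⟨h1.symm, h2.symm⟩⟩

lemma no_two_cycle {i : Fin (n + 1)} {r : Fin n → Fin (n + 1)} (hg : GoodF i r) {k k' : Fin n}
    (h1 : r k = i.succAbove k') (h2 : r k' = i.succAbove k) : False := by
  have hcyc : (stepV i r)^[2] (i.succAbove k) = i.succAbove k := by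
    show stepV i r (stepV i r (i.succAbove k)) = _
    rw [stepV_succAbove, h1, stepV_succAbove, h2]
  obtain ⟨t, ht⟩ := hg (i.succAbove k)
  exact not_good_of_periodic (by norm_num) (Fin.succAbove_ne i k) hcyc t ht

lemma edgemap_injective {i : Fin (n + 1)} {r : Fin n → Fin (n + 1)} (hg : GoodF i r) :
    Function.Injective fun k => s(i.succAbove k, r k) := by
  intro k k' h
  rw [Sym2.eq_iff] at h
  rcases h with ⟨h1, -⟩ | ⟨h1, h2⟩
  · exact i.succAbove_right_injective h1
  · exact (no_two_cycle hg h2 h1.symm).elim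

lemma reachable_root {i : Fin (n + 1)} {r : Fin n → Fin (n + 1)}
    (hne : ∀ k, r k ≠ i.succAbove k) (hg : GoodF i r) (v : Fin (n + 1)) :
    (Gr i r).Reachable v i := by
  by_cases hv : v = i
  · exact hv ▸ SimpleGraph.Reachable.refl v
  · have hlt := timeV_step_lt hg hv
    have ih := reachable_root hne hg (stepV i r v)
    obtain ⟨k, hk⟩ := exists_eq_succAbove hv
    have hadj : (Gr i r).Adj v (stepV i r v) := by
      rw [hk, stepV_succAbove]; exact adj_step hne k
    exact hadj.reachable.trans ih
termination_by timeV hg v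

lemma connected_Gr {i : Fin (n + 1)} {r : Fin n → Fin (n + 1)}
    (hne : ∀ k, r k ≠ i.succAbove k) (hg : GoodF i r) : (Gr i r).Connected := by
  exact ⟨fun u v => (reachable_root hne hg u).trans (reachable_root hne hg v).symm⟩

lemma acyclic_Gr {i : Fin (n + 1)} {r : Fin n → Fin (n + 1)}
    (hne : ∀ k, r k ≠ i.succAbove k) (hg : GoodF i r) : (Gr i r).IsAcyclic := by
  rw [SimpleGraph.isAcyclic_iff_forall_adj_isBridge]
  have aux : ∀ k : Fin n,
      ¬ ((Gr i r) \ SimpleGraph.fromEdgeSet {s(i.succAbove k, r k)}).Reachable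
          (i.succAbove k) (r k) := by
    intro k hreach
    set S : Set (Fin (n + 1)) := {x | ∃ t, (stepV i r)^[t] x = i.succAbove k} with hS
    have haS : i.succAbove k ∈ S := ⟨0, rfl⟩
    have hbS : r k ∉ S := by
      rintro ⟨t, ht⟩
      have hcyc : (stepV i r)^[t + 1] (i.succAbove k) = i.succAbove k := by
        rw [Function.iterate_succ_apply, stepV_succAbove]
        exact ht
      obtain ⟨t', ht'⟩ := hg (i.succAbove k)
      exact not_good_of_periodic (Nat.succ_pos t) (Fin.succAbove_ne i k) hcyc t' ht'
    obtain ⟨pwalk⟩ := hreach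
    obtain ⟨d, hd, hdS, hdnS⟩ := pwalk.exists_boundary_dart S haS hbS
    have hdadj := d.adj
    rw [SimpleGraph.sdiff_adj] at hdadj
    obtain ⟨k₁, hk₁⟩ := adj_cases hdadj.1
    rcases hk₁ with ⟨hfst, hsnd⟩ | ⟨hsnd, hfst⟩
    · obtain ⟨t, ht⟩ := hdS
      cases t with
      | zero =>
        rw [Function.iterate_zero_apply] at ht
        have hkk : k₁ = k := i.succAbove_right_injective (hfst.symm.trans ht)
        refine hdadj.2 ?_
        rw [SimpleGraph.fromEdgeSet_adj]
        constructor
        · rw [hfst, hsnd, hkk]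
          exact Set.mem_singleton _
        · rw [hfst, hsnd, hkk]
          exact fun h => hne k h.symm
      | succ t =>
        refine hdnS ⟨t, ?_⟩
        have : stepV i r d.fst = d.snd := by
          rw [hfst, stepV_succAbove, hsnd]
        rw [Function.iterate_succ_apply, this] at ht
        exact ht
    · refine hdnS ?_
      obtain ⟨t, ht⟩ := hdS
      refine ⟨t + 1, ?_⟩
      have : stepV i r d.snd = d.fst := by
        rw [hsnd, stepV_succAbove, hfst]
      rw [Function.iterate_succ_apply, this]
      exact ht
  intro u v hadj
  obtain ⟨k, hk⟩ := adj_cases hadj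
  rw [SimpleGraph.isBridge_iff]
  rcases hk with ⟨rfl, rfl⟩ | ⟨rfl, rfl⟩
  · exact aux k
  · refine fun h => aux k ?_
    have hsw : s(r k, i.succAbove k) = s(i.succAbove k, r k) := Sym2.eq_swap
    rw [hsw] at h
    exact h.symm

lemma exists_path {i : Fin (n + 1)} {r : Fin n → Fin (n + 1)} (hg : GoodF i r)
    {G : SimpleGraph (Fin (n + 1))} (hadjG : ∀ k, G.Adj (i.succAbove k) (r k))
    (v : Fin (n + 1)) (hv : v ≠ i) :
    ∃ p : G.Walk v i, p.IsPath ∧ p.getVert 1 = stepV i r v ∧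
      ∀ u ∈ p.support, ∃ s, (stepV i r)^[s] v = u := by
  obtain ⟨k, hk⟩ := exists_eq_succAbove hv
  have hadj : G.Adj v (stepV i r v) := by
    rw [hk, stepV_succAbove]
    exact hadjG k
  by_cases hstep : stepV i r v = i
  · rw [hstep] at hadj
    refine ⟨SimpleGraph.Walk.cons hadj SimpleGraph.Walk.nil, ?_, ?_, ?_⟩
    · rw [SimpleGraph.Walk.cons_isPath_iff]
      refine ⟨SimpleGraph.Walk.IsPath.nil, ?_⟩
      simp [hv]
    · show SimpleGraph.Walk.nil.getVert 0 = stepV i r v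
      rw [SimpleGraph.Walk.getVert_zero, hstep]
    · intro u hu
      rw [SimpleGraph.Walk.support_cons, List.mem_cons] at hu
      rcases hu with rfl | hu
      · exact ⟨0, rfl⟩
      · rw [SimpleGraph.Walk.support_nil, List.mem_singleton] at hu
        subst hu
        exact ⟨1, hstep⟩
  · have hlt := timeV_step_lt hg hv
    obtain ⟨p, hp, hp1, hsupp⟩ := exists_path hg hadjG (stepV i r v) hstep
    refine ⟨SimpleGraph.Walk.cons hadj p, ?_, ?_, ?_⟩
    · rw [SimpleGraph.Walk.cons_isPath_iff]
      refine ⟨hp, fun hmem => ?_⟩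
      obtain ⟨s, hs⟩ := hsupp v hmem
      have hcyc : (stepV i r)^[s + 1] v = v := by
        rw [Function.iterate_succ_apply]
        exact hs
      obtain ⟨t, ht⟩ := hg v
      exact not_good_of_periodic (Nat.succ_pos s) hv hcyc t ht
    · show p.getVert 0 = stepV i r v
      rw [SimpleGraph.Walk.getVert_zero]
    · intro u hu
      rw [SimpleGraph.Walk.support_cons, List.mem_cons] at hu
      rcases hu with rfl | hu
      · exact ⟨0, rfl⟩
      · obtain ⟨s, hs⟩ := hsupp u hu
        refine ⟨s + 1, ?_⟩
        rw [Function.iterate_succ_apply]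
        exact hs
termination_by timeV hg v

lemma tset_injective {i : Fin (n + 1)} {r r' : Fin n → Fin (n + 1)}
    (hne : ∀ k, r k ≠ i.succAbove k) (hne' : ∀ k, r' k ≠ i.succAbove k)
    (hg : GoodF i r) (hg' : GoodF i r') (h : Tset i r = Tset i r') : r = r' := by
  have hGr : Gr i r' = Gr i r := by rw [Gr, Gr, ← h]
  have htree : (Gr i r).IsTree := ⟨connected_Gr hne hg, acyclic_Gr hne hg⟩
  funext k
  have hvne : i.succAbove k ≠ i := Fin.succAbove_ne i k
  have hadj' : ∀ k', (Gr i r).Adj (i.succAbove k') (r' k') := fun k' =>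
    hGr ▸ adj_step hne' k'
  obtain ⟨p, hp, hp1, -⟩ := exists_path hg (fun k' => adj_step hne k') (i.succAbove k) hvne
  obtain ⟨p', hp', hp1', -⟩ := exists_path hg' hadj' (i.succAbove k) hvne
  have hpp : p = p' := ((htree.existsUnique_path (i.succAbove k) i).unique hp hp')
  rw [stepV_succAbove] at hp1 hp1'
  rw [← hp1, ← hp1', hpp]

lemma tset_surjective {i : Fin (n + 1)} (T : Finset (Sym2 (Fin (n + 1))))
    (hT : IsSpanningTree T) :
    ∃ r : Fin n → Fin (n + 1), (∀ k, r k ≠ i.succAbove k) ∧ GoodF i r ∧ Tset i r = T := by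
  set G := SimpleGraph.fromEdgeSet (↑T : Set (Sym2 (Fin (n + 1)))) with hG
  have htree : G.IsTree := ⟨hT.2.1, hT.2.2⟩
  have hup := htree.existsUnique_path
  set P : ∀ k : Fin n, G.Walk (i.succAbove k) i := fun k => (hup (i.succAbove k) i).choose
    with hPdef
  have hP : ∀ k, (P k).IsPath := fun k => (hup (i.succAbove k) i).choose_spec.1
  have huniq : ∀ k (q : G.Walk (i.succAbove k) i), q.IsPath → q = P k := fun k q hq =>
    (hup (i.succAbove k) i).choose_spec.2 q hq
  set r : Fin n → Fin (n + 1) := fun k => (P k).getVert 1 with hrdef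
  have hnotnil : ∀ k, ¬ (P k).Nil := fun k =>
    SimpleGraph.Walk.not_nil_of_ne (Fin.succAbove_ne i k)
  have hadj : ∀ k, G.Adj (i.succAbove k) (r k) := fun k =>
    SimpleGraph.Walk.adj_snd (hnotnil k)
  have hne : ∀ k, r k ≠ i.succAbove k := fun k h => (hadj k).ne h.symm
  have htail : ∀ k k', r k = i.succAbove k' → (P k').length < (P k).length := by
    intro k k' hr
    have hq'path : ((P k).tail.copy hr rfl).IsPath := by
      rw [SimpleGraph.Walk.isPath_copy]
      exact (hP k).tail
    have hq' := huniq k' ((P k).tail.copy hr rfl) hq'path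
    have hlen : (P k').length = (P k).tail.length := by
      rw [← hq', SimpleGraph.Walk.length_copy]
    have hlen2 : (P k).tail.length + 1 = (P k).length :=
      SimpleGraph.Walk.length_tail_add_one (hnotnil k)
    omega
  have claim : ∀ N, ∀ k : Fin n, (P k).length ≤ N →
      ∃ t, (stepV i r)^[t] (i.succAbove k) = i := by
    intro N
    induction N with
    | zero =>
      intro k hk
      have : (P k).length = 0 := Nat.le_zero.mp hk
      exact absurd (SimpleGraph.Walk.eq_of_length_eq_zero this) (Fin.succAbove_ne i k)
    | succ N ih =>
      intro k hk
      by_cases hrk : r k = i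
      · refine ⟨1, ?_⟩
        rw [Function.iterate_one, stepV_succAbove]
        exact hrk
      · obtain ⟨k', hk'⟩ := exists_eq_succAbove hrk
        have hlen := htail k k' hk'
        obtain ⟨t, ht⟩ := ih k' (by omega)
        refine ⟨t + 1, ?_⟩
        rw [Function.iterate_succ_apply, stepV_succAbove, hk']
        exact ht
  have hgood : GoodF i r := by
    intro v
    by_cases hv : v = i
    · exact ⟨0, hv⟩
    · obtain ⟨k, hk⟩ := exists_eq_succAbove hv
      rw [hk]
      exact claim (P k).length k le_rfl
  have hsub : Tset i r ⊆ T := by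
    intro x hx
    rw [Tset, Finset.mem_image] at hx
    obtain ⟨k, -, rfl⟩ := hx
    have hmem : s(i.succAbove k, r k) ∈ G.edgeSet := (hadj k)
    rw [hG, SimpleGraph.edgeSet_fromEdgeSet, Set.mem_diff] at hmem
    exact Finset.mem_coe.mp hmem.1
  have hcardT : T.card = n := by
    have hc := htree.card_edgeFinset
    have hef : G.edgeFinset = T := by
      ext x
      rw [SimpleGraph.mem_edgeFinset, hG, SimpleGraph.edgeSet_fromEdgeSet, Set.mem_diff]
      simp only [Set.mem_setOf_eq, Finset.mem_coe, and_iff_left_iff_imp]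
      exact fun hx hdiag => hT.1 x hx hdiag
    rw [hef] at hc
    simp only [Fintype.card_fin] at hc
    omega
  have hcardTset : (Tset i r).card = n := by
    rw [Tset, Finset.card_image_of_injective _ (edgemap_injective hgood),
      Finset.card_univ, Fintype.card_fin]
  exact ⟨r, hne, hgood, Finset.eq_of_subset_of_card_le hsub (by omega)⟩

lemma isSpanningTree_Tset {i : Fin (n + 1)} {r : Fin n → Fin (n + 1)}
    (hne : ∀ k, r k ≠ i.succAbove k) (hg : GoodF i r) : IsSpanningTree (Tset i r) := by
  refine ⟨?_, connected_Gr hne hg, acyclic_Gr hne hg⟩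
  intro e he
  rw [Tset, Finset.mem_image] at he
  obtain ⟨k, -, rfl⟩ := he
  simp only [Sym2.isDiag_iff_proj_eq]
  exact fun h => hne k h.symm

/-! ### Determinant side -/

/-- The 0-1 matrix encoding whether each vertex's successor avoids the root. -/
noncomputable def Nmat (i : Fin (n + 1)) (r : Fin n → Fin (n + 1)) : Matrix (Fin n) (Fin n) ℝ :=
  Matrix.of fun k l => (if k = l then (1 : ℝ) else 0) - (if r k = i.succAbove l then 1 else 0)

lemma det_Nmat_good {i : Fin (n + 1)} {r : Fin n → Fin (n + 1)}
    (hne : ∀ k, r k ≠ i.succAbove k) (hg : GoodF i r) : (Nmat i r).det = 1 := by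
  set g : Fin n → ℕ := fun a => timeV hg (i.succAbove a) with hgdef
  set σ := Tuple.sort g with hσ
  have hmono : Monotone (g ∘ σ) := Tuple.monotone_sort g
  rw [← Matrix.det_submatrix_equiv_self σ (Nmat i r)]
  have htri : ((Nmat i r).submatrix σ σ).BlockTriangular OrderDual.toDual := by
    intro a b hab
    have hab' : a < b := hab
    have h1 : σ a ≠ σ b := fun h => (ne_of_lt hab') (σ.injective h)
    have h2 : r (σ a) ≠ i.succAbove (σ b) := by
      intro h
      have hst : stepV i r (i.succAbove (σ a)) = i.succAbove (σ b) := by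
        rw [stepV_succAbove, h]
      have hlt : g (σ b) < g (σ a) := by
        have := timeV_step_lt hg (Fin.succAbove_ne i (σ a))
        rwa [hst] at this
      exact absurd (hmono hab'.le) (not_le.mpr hlt)
    simp [Nmat, Matrix.submatrix_apply, h1, h2]
  rw [Matrix.det_of_lowerTriangular _ htri]
  refine Finset.prod_eq_one fun a _ => ?_
  have : r (σ a) ≠ i.succAbove (σ a) := hne (σ a)
  simp [Nmat, Matrix.submatrix_apply, this]

lemma det_Nmat_bad {i : Fin (n + 1)} {r : Fin n → Fin (n + 1)}
    (hng : ¬ GoodF i r) : (Nmat i r).det = 0 := by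
  rw [GoodF] at hng
  push_neg at hng
  obtain ⟨v, hv⟩ := hng
  have main : ∀ x y : ℕ, x < y → (stepV i r)^[x] v = (stepV i r)^[y] v →
      (Nmat i r).det = 0 := by
    intro x y hlt heq
    set f := stepV i r with hf
    set c := f^[x] v with hc
    set p := y - x with hpdef
    have hp : 0 < p := by omega
    have hcyc : f^[p] c = c := by
      rw [hc, ← Function.iterate_add_apply]
      have : p + x = y := by omega
      rw [this, ← heq]
    have hciter : ∀ s, f^[s] c ≠ i := by
      intro s h
      refine hv (s + x) ?_
      rw [Function.iterate_add_apply]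
      exact h
    set w : Fin n → ℝ := fun l => ∑ s ∈ Finset.range p,
      if f^[s] c = i.succAbove l then (1 : ℝ) else 0 with hw
    obtain ⟨k₀, hk₀⟩ := exists_eq_succAbove (hciter 0)
    rw [Function.iterate_zero_apply] at hk₀
    have hwk₀ : (1 : ℝ) ≤ w k₀ := by
      have h0 : (if f^[0] c = i.succAbove k₀ then (1 : ℝ) else 0) = 1 := by
        rw [Function.iterate_zero_apply, if_pos hk₀]
      calc (1 : ℝ) = (if f^[0] c = i.succAbove k₀ then (1 : ℝ) else 0) := h0.symm
        _ ≤ w k₀ := Finset.single_le_sum (f := fun s => if f^[s] c = i.succAbove k₀ then (1:ℝ) else 0)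
            (fun s _ => by positivity) (Finset.mem_range.mpr hp)
    have hw0 : w ≠ 0 := by
      intro h
      have := congrFun h k₀
      simp only [Pi.zero_apply] at this
      linarith
    have hvm : Matrix.vecMul w (Nmat i r) = 0 := by
      funext l
      have hexp : Matrix.vecMul w (Nmat i r) l = ∑ m, w m * Nmat i r m l := by
        simp [Matrix.vecMul, dotProduct]
      rw [hexp]
      have hsplit : ∀ m : Fin n, w m * Nmat i r m l
          = (if m = l then w m else 0) - w m * (if r m = i.succAbove l then (1:ℝ) else 0) := by
        intro m
        simp only [Nmat, Matrix.of_apply]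
        split <;> split <;> ring
      rw [Finset.sum_congr rfl fun m _ => hsplit m, Finset.sum_sub_distrib,
        Finset.sum_ite_eq' Finset.univ l w]
      simp only [Finset.mem_univ, if_true]
      have hsecond : ∑ m, w m * (if r m = i.succAbove l then (1:ℝ) else 0)
          = ∑ s ∈ Finset.range p, (if f^[s + 1] c = i.succAbove l then (1:ℝ) else 0) := by
        have : ∀ m : Fin n, w m * (if r m = i.succAbove l then (1:ℝ) else 0)
            = ∑ s ∈ Finset.range p, (if f^[s] c = i.succAbove m then (1:ℝ) else 0)
                * (if r m = i.succAbove l then (1:ℝ) else 0) := by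
          intro m
          rw [hw, Finset.sum_mul]
        rw [Finset.sum_congr rfl fun m _ => this m, Finset.sum_comm]
        refine Finset.sum_congr rfl fun s _ => ?_
        obtain ⟨m₀, hm₀⟩ := exists_eq_succAbove (hciter s)
        rw [Finset.sum_eq_single m₀]
        · rw [if_pos hm₀, one_mul]
          have : f^[s + 1] c = r m₀ := by
            rw [Function.iterate_succ_apply', hm₀, hf, stepV_succAbove]
          rw [this]
        · intro m _ hm
          have : f^[s] c ≠ i.succAbove m := by
            intro h
            exact hm (i.succAbove_right_injective (hm₀.symm.trans h)).symm
          rw [if_neg this, zero_mul]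
        · intro h
          exact absurd (Finset.mem_univ m₀) h
      rw [hsecond]
      have e1 := Finset.sum_range_succ' (fun s => if f^[s] c = i.succAbove l then (1:ℝ) else 0) p
      have e2 := Finset.sum_range_succ (fun s => if f^[s] c = i.succAbove l then (1:ℝ) else 0) p
      have e3 : (if f^[p] c = i.succAbove l then (1:ℝ) else 0)
          = (if f^[0] c = i.succAbove l then (1:ℝ) else 0) := by
        rw [hcyc, Function.iterate_zero_apply]
      have hwl : w l = ∑ s ∈ Finset.range p, (if f^[s] c = i.succAbove l then (1:ℝ) else 0) := rfl
      rw [Pi.zero_apply]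
      rw [hwl]
      linarith
    exact Matrix.exists_vecMul_eq_zero_iff.mp ⟨w, hw0, hvm⟩
  obtain ⟨x, y, hxy, haxy⟩ :=
    Finite.exists_ne_map_eq_of_infinite (fun t : ℕ => (stepV i r)^[t] v)
  rcases hxy.lt_or_gt with h | h
  · exact main x y h haxy
  · exact main y x h haxy.symm

lemma det_expand (ε : Fin (n + 1) → Fin (n + 1) → ℝ) (i : Fin (n + 1)) :
    ((lap ε).submatrix i.succAbove i.succAbove).det =
      ∑ r ∈ Fintype.piFinset (fun k : Fin n => Finset.univ.erase (i.succAbove k)),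
        (∏ k, ε (i.succAbove k) (r k)) * (Nmat i r).det := by
  classical
  have hrow : ∀ k l, (lap ε).submatrix i.succAbove i.succAbove k l
      = ∑ m ∈ Finset.univ.erase (i.succAbove k),
          ε (i.succAbove k) m
            * ((if k = l then (1:ℝ) else 0) - (if m = i.succAbove l then 1 else 0)) := by
    intro k l
    rw [Matrix.submatrix_apply, lap, Matrix.of_apply]
    by_cases hkl : k = l
    · subst hkl
      rw [if_pos rfl]
      refine Finset.sum_congr rfl fun m hm => ?_
      rw [Finset.mem_erase] at hm
      rw [if_pos rfl, if_neg hm.1]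
      ring
    · have hkl' : i.succAbove k ≠ i.succAbove l := fun h =>
        hkl (i.succAbove_right_injective h)
    
      rw [if_neg hkl']
      have : ∀ m ∈ Finset.univ.erase (i.succAbove k),
          ε (i.succAbove k) m
            * ((if k = l then (1:ℝ) else 0) - (if m = i.succAbove l then 1 else 0))
          = -(if m = i.succAbove l then ε (i.succAbove k) m else 0) := by
        intro m _
        rw [if_neg hkl]
        split <;> ring
      rw [Finset.sum_congr rfl this, Finset.sum_neg_distrib,
        Finset.sum_ite_eq' (Finset.univ.erase (i.succAbove k)) (i.succAbove l)]
      rw [if_pos (Finset.mem_erase.mpr ⟨fun h => hkl' h.symm, Finset.mem_univ _⟩)]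
  have hM : ((lap ε).submatrix i.succAbove i.succAbove : Matrix (Fin n) (Fin n) ℝ)
      = fun k => ∑ m ∈ Finset.univ.erase (i.succAbove k),
          ε (i.succAbove k) m
            • (fun l => (if k = l then (1:ℝ) else 0) - (if m = i.succAbove l then 1 else 0)) := by
    funext k l
    rw [hrow]
    rw [Finset.sum_apply]
    simp only [Pi.smul_apply, smul_eq_mul]
  have hdet : ((lap ε).submatrix i.succAbove i.succAbove).det
      = (Matrix.detRowAlternating : (Fin n → ℝ) [⋀^Fin n]→ₗ[ℝ] ℝ).toMultilinearMap
        (fun k => ∑ m ∈ Finset.univ.erase (i.succAbove k),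
          ε (i.succAbove k) m
            • (fun l => (if k = l then (1:ℝ) else 0) - (if m = i.succAbove l then 1 else 0))) := by
    rw [← hM]
    rfl
  rw [hdet, MultilinearMap.map_sum_finset]
  refine Finset.sum_congr rfl fun r _ => ?_
  rw [MultilinearMap.map_smul_univ]
  rw [smul_eq_mul]
  rfl

lemma principal_minor (ε : Fin (n + 1) → Fin (n + 1) → ℝ)
    (hsym : ∀ a b, ε a b = ε b a) (i : Fin (n + 1)) :
    ((lap ε).submatrix i.succAbove i.succAbove).det =
      ∑ T ∈ Finset.univ.filter (IsSpanningTree (α := Fin (n + 1))), edgeWt ε hsym T := by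
  rw [det_expand ε i]
  have hne_of_mem : ∀ r ∈ Fintype.piFinset (fun k : Fin n => Finset.univ.erase (i.succAbove k)),
      ∀ k, r k ≠ i.succAbove k := by
    intro r hr k
    have := (Fintype.mem_piFinset.mp hr) k
    exact (Finset.mem_erase.mp this).1
  have step1 : ∑ r ∈ Fintype.piFinset (fun k : Fin n => Finset.univ.erase (i.succAbove k)),
        (∏ k, ε (i.succAbove k) (r k)) * (Nmat i r).det
      = ∑ r ∈ (Fintype.piFinset
            (fun k : Fin n => Finset.univ.erase (i.succAbove k))).filter (GoodF i),
          ∏ k, ε (i.succAbove k) (r k) := by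
    rw [Finset.sum_filter]
    refine Finset.sum_congr rfl fun r hr => ?_
    by_cases hgood : GoodF i r
    · rw [det_Nmat_good (hne_of_mem r hr) hgood, if_pos hgood, mul_one]
    · rw [det_Nmat_bad hgood, if_neg hgood, mul_zero]
  rw [step1]
  refine Finset.sum_bij (fun r _ => Tset i r) ?_ ?_ ?_ ?_
  · intro r hr
    rw [Finset.mem_filter] at hr ⊢
    exact ⟨Finset.mem_univ _, isSpanningTree_Tset (hne_of_mem r hr.1) hr.2⟩
  · intro r₁ hr₁ r₂ hr₂ heq
    rw [Finset.mem_filter] at hr₁ hr₂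
    exact tset_injective (hne_of_mem r₁ hr₁.1) (hne_of_mem r₂ hr₂.1) hr₁.2 hr₂.2 heq
  · intro T hT
    rw [Finset.mem_filter] at hT
    obtain ⟨r, hne, hgood, hTset⟩ := tset_surjective T hT.2
    refine ⟨r, ?_, hTset⟩
    rw [Finset.mem_filter]
    constructor
    · rw [Fintype.mem_piFinset]
      intro k
      exact Finset.mem_erase.mpr ⟨hne k, Finset.mem_univ _⟩
    · exact hgood
  · intro r hr
    rw [Finset.mem_filter] at hr
    rw [edgeWt]
    unfold Tset
    rw [Finset.prod_image ?inj]
    case inj =>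
      intro x _ y _ hxy
      exact edgemap_injective hr.2 hxy
    refine Finset.prod_congr rfl fun k _ => ?_
    rw [Sym2.lift_mk]

lemma cofactor_eq_det_updateRow {m : ℕ} (M : Matrix (Fin (m + 1)) (Fin (m + 1)) ℝ)
    (i j : Fin (m + 1)) :
    cofactor M i j = (M.updateRow i (Pi.single j 1)).det := by
  rw [Matrix.det_succ_row _ i]
  rw [Finset.sum_eq_single j]
  · have hsub : (M.updateRow i (Pi.single j 1)).submatrix i.succAbove j.succAbove
        = M.submatrix i.succAbove j.succAbove := by
      ext a b
      rw [Matrix.submatrix_apply, Matrix.submatrix_apply,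
        Matrix.updateRow_ne (Fin.succAbove_ne i a)]
    rw [hsub, Matrix.updateRow_self, Pi.single_eq_same, cofactor]
    ring
  · intro l _ hl
    rw [Matrix.updateRow_self, Pi.single_eq_of_ne hl]
    ring
  · intro h
    exact absurd (Finset.mem_univ j) h

lemma sum_pi_single_one {m : ℕ} (j : Fin (m + 1)) :
    ∑ l, (Pi.single j 1 : Fin (m + 1) → ℝ) l = 1 := by
  simp [Pi.single_apply]

lemma cofactor_const {m : ℕ} (M : Matrix (Fin (m + 1)) (Fin (m + 1)) ℝ)
    (hrow : ∀ k, ∑ l, M k l = 0) (i j : Fin (m + 1)) :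
    cofactor M i j = cofactor M i i := by
  rw [cofactor_eq_det_updateRow, cofactor_eq_det_updateRow]
  have key : (M.updateRow i (fun l => (if l = j then (1 : ℝ) else 0) - (if l = i then (1 : ℝ) else 0))).det = 0 := by
    refine Matrix.exists_mulVec_eq_zero_iff.mp ⟨fun _ => 1, ?_, ?_⟩
    · intro h
      have := congrFun h i
      norm_num at this
    · funext k
      show (∑ l, (M.updateRow i fun l => (if l = j then (1 : ℝ) else 0) - (if l = i then (1 : ℝ) else 0)) k l * 1) = 0
      by_cases hk : k = i
      · subst hk
        simp only [Matrix.updateRow_self, mul_one]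
        rw [Finset.sum_sub_distrib]
        simp
      · simp only [Matrix.updateRow_ne hk, mul_one]
        exact hrow k
  have hdecomp : (Pi.single j 1 : Fin (m + 1) → ℝ)
      = (Pi.single i 1 : Fin (m + 1) → ℝ)
        + fun l => (if l = j then (1 : ℝ) else 0) - (if l = i then (1 : ℝ) else 0) := by
    funext l
    simp [Pi.single_apply]
  rw [hdecomp, Matrix.det_updateRow_add, key, add_zero]

lemma lap_row_sum (ε : Fin (n + 1) → Fin (n + 1) → ℝ) (k : Fin (n + 1)) :
    ∑ l, lap ε k l = 0 := by
  rw [← Finset.add_sum_erase _ _ (Finset.mem_univ k)]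
  have h1 : lap ε k k = ∑ m ∈ Finset.univ.erase k, ε k m := by simp [lap]
  have h2 : ∀ l ∈ Finset.univ.erase k, lap ε k l = - ε k l := by
    intro l hl
    rw [Finset.mem_erase] at hl
    have : ¬ (k = l) := fun h => hl.1 h.symm
    simp [lap, this]
  rw [h1, Finset.sum_congr rfl h2, Finset.sum_neg_distrib]
  ring

end MTT

/-- **Matrix-Tree Theorem for weighted multigraphs** (Tutte). For any weighted graph `G`
and any vertices `i, j`, the cofactor `L^{ij}` of the Laplacian matrix equals `ε(𝒯)`,
the sum of the weights of all spanning trees of `G`. -/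
theorem matrix_tree_theorem_undirected (n : ℕ) (ε : Fin (n + 1) → Fin (n + 1) → ℝ)
    (hsym : ∀ a b, ε a b = ε b a) (hdiag : ∀ a, ε a a = 0) (i j : Fin (n + 1)) :
    cofactor (lap ε) i j
      = ∑ T ∈ Finset.univ.filter (IsSpanningTree (α := Fin (n + 1))),
          edgeWt ε hsym T := by
  rw [MTT.cofactor_const (lap ε) (MTT.lap_row_sum ε) i j]
  rw [cofactor]
  have : (-1 : ℝ) ^ ((i : ℕ) + (i : ℕ)) = 1 := Even.neg_one_pow ⟨(i : ℕ), rfl⟩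
  rw [this, one_mul]
  exact MTT.principal_minor ε hsym i
end

section
/- Matrix-Tree Theorem for weighted multidigraphs (Tutte). For any weighted digraph Γ on a finite vertex set V = {1,…,n} and any vertices i, j ∈ V, the cofactor L^{ij} of the (i,j) entry of the Kirchhoff matrix L(Γ) equals ε(𝒯^i), the sum of the weights of all spanning trees of Γ diverging from i. In particular all cofactors of entries in one row of L(Γ) are equal. -/
open scoped Classical

/-- The Kirchhoff (Laplacian) matrix of a weighted digraph on vertex set `α` with arc
weights `ε`: `ℓ i j = -ε j i` for `j ≠ i`, and `ℓ i i = ∑_{k ≠ i} ε k i`. -/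
noncomputable def kirchhoff {α : Type*} [Fintype α] [DecidableEq α]
    (ε : α → α → ℝ) : Matrix α α ℝ :=
  Matrix.of fun i j =>
    if i = j then ∑ k ∈ Finset.univ.erase i, ε k i else - ε j i

/-- `F` is a spanning diverging forest: every arc joins distinct vertices, every vertex
has at most one incoming arc, and there are no cycles. -/
def IsDivForest {α : Type*} [Fintype α] [DecidableEq α] (F : Finset (α × α)) : Prop :=
  (∀ p ∈ F, p.1 ≠ p.2) ∧
  (∀ b : α, (F.filter fun p => p.2 = b).card ≤ 1) ∧
  ∀ a : α, ¬ Relation.TransGen (fun x y : α => (x, y) ∈ F) a a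

/-- The weight of a set of arcs: the product of the arc weights. -/
noncomputable def arcWt {α : Type*} (ε : α → α → ℝ) (F : Finset (α × α)) : ℝ :=
  ∏ p ∈ F, ε p.1 p.2

/-- The set of roots of `F`, i.e. the vertices of in-degree 0. -/
noncomputable def rootSet {α : Type*} [Fintype α] [DecidableEq α]
    (F : Finset (α × α)) : Finset α :=
  Finset.univ.filter fun v => ∀ a, (a, v) ∉ F

/-- The set of all spanning diverging forests. -/
noncomputable def divForests (α : Type*) [Fintype α] [DecidableEq α] :
    Finset (Finset (α × α)) :=
  Finset.univ.filter IsDivForest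

/-- The set `𝔉^{i→j}` of spanning diverging forests in which `i` is a root and there is
a directed path from `i` to `j`. -/
noncomputable def divForestsFromTo {α : Type*} [Fintype α] [DecidableEq α] (i j : α) :
    Finset (Finset (α × α)) :=
  Finset.univ.filter fun F => IsDivForest F ∧ (∀ a, (a, i) ∉ F) ∧
    Relation.ReflTransGen (fun x y : α => (x, y) ∈ F) i j

/-- `T` is a spanning tree diverging from the root `r`: every arc joins distinct
vertices, every vertex other than `r` has exactly one incoming arc, `r` has none, and
there are no cycles. -/
def IsDivTreeFrom {α : Type*} [Fintype α] [DecidableEq α] (r : α)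
    (T : Finset (α × α)) : Prop :=
  (∀ p ∈ T, p.1 ≠ p.2) ∧
  (∀ v : α, v ≠ r → (T.filter fun p => p.2 = v).card = 1) ∧
  (∀ a, (a, r) ∉ T) ∧
  ∀ a : α, ¬ Relation.TransGen (fun x y : α => (x, y) ∈ T) a a

namespace MTTaux

variable {n : ℕ}

/-- Building block: row of the incidence-type matrix. -/
noncomputable def Drow (i : Fin (n + 1)) (v : Fin n) (k : Fin (n + 1)) : Fin n → ℝ :=
  fun c => (if c = v then (1 : ℝ) else 0) - (if i.succAbove c = k then 1 else 0)

/-- `Rel i f a b` : the arc of `f` into `i.succAbove b` comes from `i.succAbove a`. -/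
def Rel (i : Fin (n + 1)) (f : Fin n → Fin (n + 1)) (a b : Fin n) : Prop :=
  f b = i.succAbove a

def Acyc (i : Fin (n + 1)) (f : Fin n → Fin (n + 1)) : Prop :=
  ∀ v, ¬ Relation.TransGen (Rel i f) v v

noncomputable def Dmat (i : Fin (n + 1)) (f : Fin n → Fin (n + 1)) :
    Matrix (Fin n) (Fin n) ℝ :=
  Matrix.of fun v c => Drow i v (f v) c

theorem det_Dmat_of_acyc (i : Fin (n + 1)) (f : Fin n → Fin (n + 1)) (hf : Acyc i f) :
    (Dmat i f).det = 1 := by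
  rw [Matrix.det_apply']
  rw [Finset.sum_eq_single (1 : Equiv.Perm (Fin n))]
  · have hne : ∀ v, ¬ (i.succAbove v = f v) := by
      intro v h
      exact hf v (Relation.TransGen.single (h.symm : Rel i f v v))
    simp [Dmat, Drow, hne]
  · intro σ _ hσ
    have hzero : ∏ c, Dmat i f (σ c) c = 0 := by
      by_contra hprod
      have hfac : ∀ c, Dmat i f (σ c) c ≠ 0 := by
        intro c hc
        exact hprod (Finset.prod_eq_zero (Finset.mem_univ c) hc)
      have hstep : ∀ c, σ c ≠ c → Rel i f c (σ c) := by
        intro c hc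
        have h := hfac c
        simp only [Dmat, Drow, Matrix.of_apply] at h
        rw [if_neg (fun hh : c = σ c => hc hh.symm)] at h
        by_cases hcase : i.succAbove c = f (σ c)
        · exact hcase.symm
        · rw [if_neg hcase] at h; simp at h
      obtain ⟨v, hv⟩ : ∃ v, σ v ≠ v := by
        by_contra hall
        push_neg at hall
        exact hσ (Equiv.ext hall)
      have hclosed : ∀ m : ℕ, σ ((σ ^ m) v) ≠ (σ ^ m) v := by
        intro m
        induction m with
        | zero => simpa using hv
        | succ m ih =>
          rw [pow_succ', Equiv.Perm.mul_apply]
          intro h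
          exact ih (σ.injective h)
      have hchain : ∀ m : ℕ, Relation.TransGen (Rel i f) v ((σ ^ (m + 1)) v) := by
        intro m
        induction m with
        | zero => simpa using Relation.TransGen.single (hstep v hv)
        | succ m ih =>
          have hstep2 := hstep ((σ ^ (m + 1)) v) (hclosed (m + 1))
          have heq : (σ ^ (m + 2)) v = σ ((σ ^ (m + 1)) v) := by
            rw [pow_succ', Equiv.Perm.mul_apply]
          rw [heq]
          exact Relation.TransGen.tail ih hstep2
      have hm1 : 1 ≤ orderOf σ := orderOf_pos σ
      have hfix : (σ ^ orderOf σ) v = v := by rw [pow_orderOf_eq_one]; rfl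
      have := hchain (orderOf σ - 1)
      rw [Nat.sub_add_cancel hm1, hfix] at this
      exact hf v this
    rw [hzero]
    ring
  · simp

theorem det_Dmat_of_cyc (i : Fin (n + 1)) (f : Fin n → Fin (n + 1)) (hf : ¬ Acyc i f) :
    (Dmat i f).det = 0 := by
  rw [Acyc, not_forall] at hf
  obtain ⟨v, hv⟩ := hf
  rw [not_not] at hv
  set p : Fin n → Fin n := fun w => if h : ∃ a, f w = i.succAbove a then h.choose else w with hp
  have pspec : ∀ a w, Rel i f a w → p w = a := by
    intro a w h
    have hex : ∃ a, f w = i.succAbove a := ⟨a, h⟩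
    rw [hp]
    simp only
    rw [dif_pos hex]
    exact Fin.succAbove_right_injective (hex.choose_spec.symm.trans h)
  have hext : ∀ x y : Fin n, Relation.TransGen (Rel i f) x y →
      ∃ m, 1 ≤ m ∧ p^[m] y = x ∧ ∀ t < m, ∃ a, Rel i f a (p^[t] y) := by
    intro x y h
    induction h with
    | single h1 =>
      refine ⟨1, le_refl 1, by simpa using pspec _ _ h1, ?_⟩
      intro t ht
      interval_cases t
      exact ⟨x, h1⟩
    | tail h1 h2 ih =>
      obtain ⟨m, hm1, hpm, hpar⟩ := ih
      rename_i b c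
      refine ⟨m + 1, le_add_self.trans (le_refl _), ?_, ?_⟩
      · rw [Function.iterate_succ_apply, pspec b c h2, hpm]
      · intro t ht
        match t with
        | 0 => exact ⟨b, h2⟩
        | Nat.succ s =>
          rw [Function.iterate_succ_apply, pspec b c h2]
          exact hpar s (by omega)
  obtain ⟨m, hm1, hfix, hpar⟩ := hext v v hv
  have hmpos : 0 < m := hm1
  have hperiod : ∀ q t : ℕ, p^[q * m + t] v = p^[t] v := by
    intro q
    induction q with
    | zero => intro t; simp
    | succ q ih =>
      intro t
      have : (q + 1) * m + t = m + (q * m + t) := by ring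
      rw [this, Function.iterate_add_apply, ih, ← Function.iterate_add_apply, Nat.add_comm,
        Function.iterate_add_apply, hfix]
  have hmod : ∀ t : ℕ, p^[t] v = p^[t % m] v := by
    intro t
    conv_lhs => rw [← Nat.div_add_mod t m]
    rw [Nat.mul_comm]
    exact hperiod (t / m) (t % m)
  have hparall : ∀ t : ℕ, ∃ a, Rel i f a (p^[t] v) := by
    intro t
    rw [hmod t]
    exact hpar _ (Nat.mod_lt _ hmpos)
  have hpnext : ∀ t : ℕ, f (p^[t] v) = i.succAbove (p^[t + 1] v) := by
    intro t
    obtain ⟨a, ha⟩ := hparall t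
    rw [Function.iterate_succ_apply', pspec a _ ha]
    exact ha
  set O : Finset (Fin n) := (Finset.range m).image (fun t => p^[t] v) with hO
  have hvO : v ∈ O := by
    rw [hO]
    exact Finset.mem_image.mpr ⟨0, Finset.mem_range.mpr hmpos, rfl⟩
  have hiterO : ∀ w ∈ O, ∀ s : ℕ, p^[s] w ∈ O := by
    intro w hw s
    obtain ⟨t, _, rfl⟩ := Finset.mem_image.mp hw
    rw [← Function.iterate_add_apply, hmod (s + t)]
    exact Finset.mem_image.mpr ⟨(s + t) % m, Finset.mem_range.mpr (Nat.mod_lt _ hmpos), rfl⟩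
  have hfixO : ∀ w ∈ O, p^[m] w = w := by
    intro w hw
    obtain ⟨t, _, rfl⟩ := Finset.mem_image.mp hw
    rw [← Function.iterate_add_apply, Nat.add_comm, Function.iterate_add_apply, hfix]
  rw [← Matrix.exists_vecMul_eq_zero_iff]
  refine ⟨fun c => if c ∈ O then (1 : ℝ) else 0, ?_, ?_⟩
  · intro h
    have := congrFun h v
    rw [if_pos hvO] at this
    exact one_ne_zero this
  · funext c
    simp only [Matrix.vecMul, dotProduct, Pi.zero_apply]
    have hsum : ∀ w : Fin n, (if w ∈ O then (1:ℝ) else 0) * Dmat i f w c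
        = if w ∈ O then Dmat i f w c else 0 := by
      intro w; split <;> simp
    rw [Finset.sum_congr rfl fun w _ => hsum w, Finset.sum_ite_mem, Finset.univ_inter]
    have hrow : ∀ w ∈ O, Dmat i f w c
        = (if c = w then (1:ℝ) else 0) - (if c = p w then 1 else 0) := by
      intro w hw
      have hparw : f w = i.succAbove (p w) := by
        obtain ⟨t, _, rfl⟩ := Finset.mem_image.mp hw
        rw [hpnext t, Function.iterate_succ_apply']
      simp only [Dmat, Drow, Matrix.of_apply, hparw]
      congr 1
      by_cases hc : c = p w
      · rw [if_pos (by rw [hc]), if_pos hc]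
      · rw [if_neg (fun h => hc (Fin.succAbove_right_injective h)), if_neg hc]
    rw [Finset.sum_congr rfl hrow, Finset.sum_sub_distrib]
    have hbij : ∑ w ∈ O, (if c = p w then (1:ℝ) else 0) = ∑ w ∈ O, (if c = w then (1:ℝ) else 0) := by
      refine Finset.sum_nbij' p (fun w => p^[m - 1] w) ?_ ?_ ?_ ?_ ?_
      · intro a ha
        have := hiterO a ha 1
        simpa using this
      · intro a ha; exact hiterO a ha (m - 1)
      · intro a ha
        show p^[m - 1] (p a) = a
        calc p^[m - 1] (p a) = p^[m - 1 + 1] a := (Function.iterate_succ_apply p (m - 1) a).symm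
          _ = p^[m] a := by rw [Nat.sub_add_cancel hm1]
          _ = a := hfixO a ha
      · intro a ha
        show p (p^[m - 1] a) = a
        calc p (p^[m - 1] a) = p^[m - 1 + 1] a := (Function.iterate_succ_apply' p (m - 1) a).symm
          _ = p^[m] a := by rw [Nat.sub_add_cancel hm1]
          _ = a := hfixO a ha
      · intro a _; rfl
    rw [hbij]
    ring


theorem kirchhoff_minor_row (ε : Fin (n + 1) → Fin (n + 1) → ℝ) (i : Fin (n + 1)) :
    (kirchhoff ε).submatrix i.succAbove i.succAbove
      = Matrix.of fun v => ∑ k : Fin (n + 1), ε k (i.succAbove v) • Drow i v k := by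
  ext v c
  simp only [Matrix.submatrix_apply, kirchhoff, Matrix.of_apply, Drow, Finset.sum_apply,
    Pi.smul_apply, smul_eq_mul]
  by_cases hc : c = v
  · subst hc
    rw [if_pos rfl]
    have : ∀ k : Fin (n + 1),
        ε k (i.succAbove c) * ((if c = c then (1:ℝ) else 0) - (if i.succAbove c = k then 1 else 0))
        = ε k (i.succAbove c) - (if k = i.succAbove c then ε k (i.succAbove c) else 0) := by
      intro k
      rw [if_pos rfl]
      by_cases hk : i.succAbove c = k
      · rw [if_pos hk, if_pos hk.symm]; ring
      · rw [if_neg hk, if_neg (fun h => hk h.symm)]; ring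
    rw [Finset.sum_congr rfl fun k _ => this k, Finset.sum_sub_distrib,
      Finset.sum_ite_eq' Finset.univ (i.succAbove c) (fun k => ε k (i.succAbove c))]
    rw [if_pos (Finset.mem_univ _)]
    rw [← Finset.add_sum_erase _ (fun k => ε k (i.succAbove c)) (Finset.mem_univ (i.succAbove c))]
    ring
  · rw [if_neg (fun h => hc (Fin.succAbove_right_injective h).symm)]
    have : ∀ k : Fin (n + 1),
        ε k (i.succAbove v) * ((if c = v then (1:ℝ) else 0) - (if i.succAbove c = k then 1 else 0))
        = -(if k = i.succAbove c then ε k (i.succAbove v) else 0) := by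
      intro k
      rw [if_neg hc]
      by_cases hk : i.succAbove c = k
      · rw [if_pos hk, if_pos hk.symm]; ring
      · rw [if_neg hk, if_neg (fun h => hk h.symm)]; ring
    rw [Finset.sum_congr rfl fun k _ => this k, Finset.sum_neg_distrib,
      Finset.sum_ite_eq' Finset.univ (i.succAbove c) (fun k => ε k (i.succAbove v))]
    rw [if_pos (Finset.mem_univ _)]

theorem det_minor (ε : Fin (n + 1) → Fin (n + 1) → ℝ) (i : Fin (n + 1)) :
    ((kirchhoff ε).submatrix i.succAbove i.succAbove).det
      = ∑ f ∈ (Fintype.piFinset fun _ : Fin n => (Finset.univ : Finset (Fin (n + 1)))).filter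
          (Acyc i), ∏ v, ε (f v) (i.succAbove v) := by
  rw [kirchhoff_minor_row]
  have h1 : (Matrix.of fun v => ∑ k : Fin (n + 1), ε k (i.succAbove v) • Drow i v k).det
      = (Matrix.detRowAlternating (R := ℝ) (n := Fin n)).toMultilinearMap
          (fun v => ∑ k ∈ Finset.univ, ε k (i.succAbove v) • Drow i v k) :=
    rfl
  rw [h1, (Matrix.detRowAlternating (R := ℝ) (n := Fin n)).toMultilinearMap.map_sum_finset
    (fun v k => ε k (i.succAbove v) • Drow i v k) (fun _ => Finset.univ)]
  rw [Finset.sum_filter]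
  apply Finset.sum_congr rfl
  intro f _
  have h2 : (Matrix.detRowAlternating (R := ℝ) (n := Fin n)).toMultilinearMap
        (fun v => ε (f v) (i.succAbove v) • Drow i v (f v))
      = (∏ v, ε (f v) (i.succAbove v)) • (Dmat i f).det := by
    rw [MultilinearMap.map_smul_univ]
    rfl
  rw [h2]
  by_cases hA : Acyc i f
  · rw [det_Dmat_of_acyc i f hA, if_pos hA, smul_eq_mul, mul_one]
  · rw [det_Dmat_of_cyc i f hA, if_neg hA, smul_eq_mul, mul_zero]

noncomputable def par (i : Fin (n + 1)) (T : Finset (Fin (n + 1) × Fin (n + 1))) (v : Fin n) :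
    Fin (n + 1) :=
  if h : ∃ a, (a, i.succAbove v) ∈ T then h.choose else i

theorem par_mem {i : Fin (n + 1)} {T : Finset (Fin (n + 1) × Fin (n + 1))} {v : Fin n}
    (h : ∃ a, (a, i.succAbove v) ∈ T) : (par i T v, i.succAbove v) ∈ T := by
  rw [par, dif_pos h]
  exact h.choose_spec

theorem no_path_to_root {β : Type*} (A : β → β → Prop) (i : β)
    (h : ∀ x y, A x y → y ≠ i) (x : β) : ¬ Relation.TransGen A x i := by
  intro hx
  obtain ⟨b, -, hb⟩ := Relation.TransGen.tail'_iff.mp hx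
  exact h _ _ hb rfl

theorem transfer (i : Fin (n + 1)) (f : Fin n → Fin (n + 1)) {x y : Fin (n + 1)}
    (h : Relation.TransGen
      (fun x y => (x, y) ∈ Finset.image (fun v => (f v, i.succAbove v)) Finset.univ) x y) :
    ∀ u w : Fin n, x = i.succAbove u → y = i.succAbove w →
      Relation.TransGen (Rel i f) u w := by
  have htar : ∀ x y : Fin (n + 1),
      (x, y) ∈ Finset.image (fun v => (f v, i.succAbove v)) Finset.univ → y ≠ i := by
    intro x y hxy
    obtain ⟨v, -, hv⟩ := Finset.mem_image.mp hxy
    injection hv with hv1 hv2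
    rw [← hv2]
    exact Fin.succAbove_ne i v
  induction h with
  | @single b h1 =>
    intro u w hx hy
    obtain ⟨v, -, hv⟩ := Finset.mem_image.mp h1
    injection hv with hv1 hv2
    have hvw : v = w := Fin.succAbove_right_injective (hv2.trans hy)
    exact Relation.TransGen.single (show f w = i.succAbove u by rw [← hvw, hv1, hx])
  | @tail b c h1 h2 ih =>
    intro u w hx hy
    obtain ⟨v, -, hv⟩ := Finset.mem_image.mp h2
    injection hv with hv1 hv2
    have hvw : v = w := Fin.succAbove_right_injective (hv2.trans hy)
    have hbne : b ≠ i := fun hbi => no_path_to_root _ i htar x (hbi ▸ h1)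
    obtain ⟨u', hu'⟩ := Fin.exists_succAbove_eq hbne
    exact Relation.TransGen.tail (ih u u' hx hu'.symm)
      (show f w = i.succAbove u' by rw [← hvw, hv1, hu'])

theorem toTree_isTree (i : Fin (n + 1)) (f : Fin n → Fin (n + 1)) (hf : Acyc i f) :
    IsDivTreeFrom i (Finset.image (fun v => (f v, i.succAbove v)) Finset.univ) := by
  have hmem : ∀ p : Fin (n + 1) × Fin (n + 1),
      p ∈ Finset.image (fun v => (f v, i.succAbove v)) Finset.univ
        ↔ ∃ v, (f v, i.succAbove v) = p := by
    intro p
    simp [Finset.mem_image]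
  refine ⟨?_, ?_, ?_, ?_⟩
  · intro p hp
    obtain ⟨v, hv⟩ := (hmem p).mp hp
    rw [← hv]
    simp only
    intro hEq
    exact hf v (Relation.TransGen.single (hEq : Rel i f v v))
  · intro u hu
    obtain ⟨z, hz⟩ := Fin.exists_succAbove_eq hu
    have hset : (Finset.image (fun v => (f v, i.succAbove v)) Finset.univ).filter
        (fun p => p.2 = u) = {(f z, i.succAbove z)} := by
      ext p
      simp only [Finset.mem_filter, Finset.mem_singleton]
      constructor
      · rintro ⟨hp, hp2⟩
        obtain ⟨v, hv⟩ := (hmem p).mp hp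
        have hv2 : i.succAbove v = p.2 := by rw [← hv]
        have hvz : v = z :=
          Fin.succAbove_right_injective ((hv2.trans hp2).trans hz.symm)
        rw [← hv, hvz]
      · rintro rfl
        exact ⟨(hmem _).mpr ⟨z, rfl⟩, hz⟩
    rw [hset, Finset.card_singleton]
  · intro a hai
    obtain ⟨v, hv⟩ := (hmem _).mp hai
    injection hv with hv1 hv2
    exact Fin.succAbove_ne i v hv2
  · intro a ha
    have htar : ∀ x y : Fin (n + 1),
        (x, y) ∈ Finset.image (fun v => (f v, i.succAbove v)) Finset.univ → y ≠ i := by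
      intro x y hxy
      obtain ⟨v, -, hv⟩ := Finset.mem_image.mp hxy
      injection hv with hv1 hv2
      rw [← hv2]
      exact Fin.succAbove_ne i v
    have hane : a ≠ i := fun hai => no_path_to_root _ i htar a (hai ▸ ha)
    obtain ⟨w, hw⟩ := Fin.exists_succAbove_eq hane
    exact hf w (transfer i f ha w w hw.symm hw.symm)

theorem sum_trees (ε : Fin (n + 1) → Fin (n + 1) → ℝ) (i : Fin (n + 1)) :
    ∑ f ∈ (Fintype.piFinset fun _ : Fin n => (Finset.univ : Finset (Fin (n + 1)))).filter
        (Acyc i), ∏ v, ε (f v) (i.succAbove v)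
      = ∑ T ∈ Finset.univ.filter (IsDivTreeFrom i), arcWt ε T := by
  refine Finset.sum_nbij' (fun f => Finset.image (fun v => (f v, i.succAbove v)) Finset.univ)
    (fun T => fun v => par i T v) ?_ ?_ ?_ ?_ ?_
  · intro f hf
    rw [Finset.mem_filter] at hf ⊢
    exact ⟨Finset.mem_univ _, toTree_isTree i f hf.2⟩
  · intro T hT
    rw [Finset.mem_filter] at hT
    obtain ⟨-, -, h2, -, h4⟩ := hT
    rw [Finset.mem_filter]
    refine ⟨Fintype.mem_piFinset.mpr fun v => Finset.mem_univ _, ?_⟩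
    intro v hv
    have harc : ∀ a b : Fin n, Rel i (fun v => par i T v) a b →
        ((i.succAbove a, i.succAbove b) ∈ T) := by
      intro a b hr
      have hex : ∃ x, (x, i.succAbove b) ∈ T := by
        obtain ⟨q, hq⟩ := Finset.card_eq_one.mp (h2 (i.succAbove b) (Fin.succAbove_ne i b))
        have hqm := hq ▸ Finset.mem_singleton_self q
        rw [Finset.mem_filter] at hqm
        exact ⟨q.1, by rw [← hqm.2]; simpa using hqm.1⟩
      have hmem := par_mem hex
      rw [show par i T b = i.succAbove a from hr] at hmem
      exact hmem
    exact h4 (i.succAbove v) (Relation.TransGen.lift (p := fun x y => (x, y) ∈ T) i.succAbove harc _ _ hv)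
  · intro f hf
    funext v
    have hex : ∃ a, (a, i.succAbove v) ∈ Finset.image
        (fun v => (f v, i.succAbove v)) Finset.univ :=
      ⟨f v, Finset.mem_image.mpr ⟨v, Finset.mem_univ v, rfl⟩⟩
    have hm := par_mem hex
    obtain ⟨v', -, hv'⟩ := Finset.mem_image.mp hm
    injection hv' with h1 h2
    have hveq : v' = v := Fin.succAbove_right_injective h2
    show par i (Finset.image (fun v => (f v, i.succAbove v)) Finset.univ) v = f v
    rw [← h1, hveq]
  · intro T hT
    rw [Finset.mem_filter] at hT
    obtain ⟨-, -, ht2, ht3, -⟩ := hT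
    ext p
    simp only [Finset.mem_image, Finset.mem_univ, true_and]
    constructor
    · rintro ⟨v, hv⟩
      have hex : ∃ x, (x, i.succAbove v) ∈ T := by
        obtain ⟨q, hq⟩ := Finset.card_eq_one.mp (ht2 (i.succAbove v) (Fin.succAbove_ne i v))
        have hqm := hq ▸ Finset.mem_singleton_self q
        rw [Finset.mem_filter] at hqm
        exact ⟨q.1, by rw [← hqm.2]; simpa using hqm.1⟩
      rw [← hv]
      exact par_mem hex
    · intro hpT
      have hne : p.2 ≠ i := by
        intro h
        exact ht3 p.1 (by rw [← h, Prod.mk.eta]; exact hpT)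
      obtain ⟨w, hw⟩ := Fin.exists_succAbove_eq hne
      refine ⟨w, ?_⟩
      obtain ⟨q, hq⟩ := Finset.card_eq_one.mp (ht2 (i.succAbove w) (Fin.succAbove_ne i w))
      have hexw : ∃ x, (x, i.succAbove w) ∈ T := by
        have hqm := hq ▸ Finset.mem_singleton_self q
        rw [Finset.mem_filter] at hqm
        exact ⟨q.1, by rw [← hqm.2]; simpa using hqm.1⟩
      have h1 : (par i T w, i.succAbove w) ∈ T.filter (fun r => r.2 = i.succAbove w) :=
        Finset.mem_filter.mpr ⟨par_mem hexw, rfl⟩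
      have h2 : p ∈ T.filter (fun r => r.2 = i.succAbove w) :=
        Finset.mem_filter.mpr ⟨hpT, hw.symm⟩
      rw [hq, Finset.mem_singleton] at h1 h2
      exact h1.trans h2.symm
  · intro f hf
    have hinj : ∀ a ∈ (Finset.univ : Finset (Fin n)), ∀ b ∈ Finset.univ,
        (fun v : Fin n => (f v, i.succAbove v)) a = (fun v => (f v, i.succAbove v)) b →
          a = b := by
      intro a _ b _ hab
      have hab' : (f a, i.succAbove a) = (f b, i.succAbove b) := hab
      injection hab' with h1 h2
      exact Fin.succAbove_right_injective h2
    rw [arcWt, Finset.prod_image hinj]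

theorem cofactor_eq_update {m : ℕ} (M : Matrix (Fin (m + 1)) (Fin (m + 1)) ℝ)
    (i j : Fin (m + 1)) :
    cofactor M i j = (M.updateRow i (Pi.single j 1)).det := by
  rw [Matrix.det_succ_row (M.updateRow i (Pi.single j 1)) i]
  have hzero : ∀ c ∈ (Finset.univ : Finset (Fin (m + 1))), c ≠ j →
      (-1 : ℝ) ^ ((i : ℕ) + (c : ℕ)) * (M.updateRow i (Pi.single j 1)) i c *
        ((M.updateRow i (Pi.single j 1)).submatrix i.succAbove c.succAbove).det = 0 := by
    intro c _ hc
    rw [Matrix.updateRow_self, Pi.single_eq_of_ne hc]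
    ring
  rw [Finset.sum_eq_single_of_mem j (Finset.mem_univ j) hzero]
  have hsub : (M.updateRow i (Pi.single j 1)).submatrix i.succAbove j.succAbove
      = M.submatrix i.succAbove j.succAbove := by
    ext v c
    simp [Matrix.submatrix_apply, Matrix.updateRow_ne (Fin.succAbove_ne i v)]
  rw [Matrix.updateRow_self, Pi.single_eq_same, hsub, cofactor]
  ring

theorem kirchhoff_row_sum (ε : Fin (n + 1) → Fin (n + 1) → ℝ) (v : Fin (n + 1)) :
    ∑ c, kirchhoff ε v c = 0 := by
  simp only [kirchhoff, Matrix.of_apply]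
  rw [← Finset.add_sum_erase _ _ (Finset.mem_univ v), if_pos rfl]
  have hrest : ∀ c ∈ Finset.univ.erase v,
      (if v = c then ∑ k ∈ Finset.univ.erase v, ε k v else - ε c v) = - ε c v := by
    intro c hc
    rw [if_neg (fun h => (Finset.mem_erase.mp hc).1 h.symm)]
  rw [Finset.sum_congr rfl hrest, Finset.sum_neg_distrib]
  ring

theorem update_det_eq (ε : Fin (n + 1) → Fin (n + 1) → ℝ) (i j : Fin (n + 1)) (hj : j ≠ i) :
    ((kirchhoff ε).updateRow i (Pi.single j 1)).det
      = ((kirchhoff ε).updateRow i (Pi.single i 1)).det := by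
  have hsplit : (Pi.single j (1 : ℝ) : Fin (n + 1) → ℝ)
      = Pi.single i 1 + (Pi.single j 1 - Pi.single i 1) := by
    abel
  rw [hsplit, Matrix.det_updateRow_add]
  have hz : ((kirchhoff ε).updateRow i (Pi.single j 1 - Pi.single i 1)).det = 0 := by
    rw [← Matrix.exists_mulVec_eq_zero_iff]
    refine ⟨fun _ => 1, fun h => one_ne_zero (congrFun h i), ?_⟩
    funext v
    simp only [Matrix.mulVec, dotProduct, mul_one, Pi.zero_apply]
    by_cases hv : v = i
    · subst hv
      simp only [Matrix.updateRow_self, Pi.sub_apply, Pi.single_apply,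
        Finset.sum_sub_distrib]
      simp [hj]
    · have hrow : ∀ c, (kirchhoff ε).updateRow i (Pi.single j 1 - Pi.single i 1) v c
          = kirchhoff ε v c := fun c => congrFun (Matrix.updateRow_ne hv) c
      rw [Finset.sum_congr rfl fun c _ => hrow c]
      exact kirchhoff_row_sum ε v
  rw [hz, add_zero]

end MTTaux

/-- **Matrix-Tree Theorem for weighted multidigraphs** (Tutte). For any weighted digraph
`Γ` and any vertices `i, j`, the cofactor `L^{ij}` of the Kirchhoff matrix equals
`ε(𝒯^i)`, the sum of the weights of all spanning trees of `Γ` diverging from `i`. -/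
theorem matrix_tree_theorem_directed (n : ℕ) (ε : Fin (n + 1) → Fin (n + 1) → ℝ)
    (hdiag : ∀ a, ε a a = 0) (i j : Fin (n + 1)) :
    cofactor (kirchhoff ε) i j
      = ∑ T ∈ Finset.univ.filter (IsDivTreeFrom i), arcWt ε T := by
  have h1 : cofactor (kirchhoff ε) i j = cofactor (kirchhoff ε) i i := by
    by_cases hji : j = i
    · rw [hji]
    · rw [MTTaux.cofactor_eq_update, MTTaux.cofactor_eq_update,
        MTTaux.update_det_eq ε i j hji]
  have heven : (-1 : ℝ) ^ ((i : ℕ) + (i : ℕ)) = 1 := Even.neg_one_pow ⟨(i : ℕ), rfl⟩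
  rw [h1, cofactor, heven, one_mul, MTTaux.det_minor ε i, MTTaux.sum_trees ε i]
end

section
/- Theorem 3 (Matrix-Forest Theorem for digraphs, determinant form). For any weighted digraph Γ on a finite vertex set V = {1,…,n}, det W = ε(𝔉), i.e., the determinant of W = I + L(Γ) equals the sum of the weights of all spanning diverging forests of Γ. -/
open scoped Classical

namespace MFD

open Matrix Finset Relation Function Polynomial

variable {n : ℕ}

/-- The arc relation of the functional digraph of `r`: `x → y` iff `r y = x ≠ y`. -/
def Rel (r : Fin n → Fin n) (x y : Fin n) : Prop := r y = x ∧ r y ≠ y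

/-- Adjacency matrix of the (reversed) functional digraph. -/
noncomputable def Pm (r : Fin n → Fin n) : Matrix (Fin n) (Fin n) ℝ :=
  Matrix.of fun i j => if r i ≠ i ∧ j = r i then 1 else 0

def Acyc (r : Fin n → Fin n) : Prop := ∀ a, ¬ Relation.TransGen (Rel r) a a

lemma iterate_reflTransGen (r : Fin n → Fin n) (z : Fin n) (m : ℕ)
    (h : ∀ k < m, r (r^[k] z) ≠ r^[k] z) :
    Relation.ReflTransGen (Rel r) (r^[m] z) z := by
  induction m with
  | zero => exact Relation.ReflTransGen.refl
  | succ m ih =>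
      refine Relation.ReflTransGen.head ?_ (ih fun k hk => h k (hk.trans (Nat.lt_succ_self m)))
      exact ⟨(Function.iterate_succ_apply' r m z).symm, h m (Nat.lt_succ_self m)⟩

lemma Pm_pow_apply (r : Fin n → Fin n) (k : ℕ) (i j : Fin n) :
    ((Pm r) ^ k) i j
      = if (∀ m < k, r (r^[m] i) ≠ r^[m] i) ∧ j = r^[k] i then 1 else 0 := by
  induction k generalizing j with
  | zero => simp [Matrix.one_apply, eq_comm]
  | succ k ih =>
      rw [pow_succ, Matrix.mul_apply]
      simp only [ih]
      by_cases hG : ∀ m < k, r (r^[m] i) ≠ r^[m] i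
      · have hsum : ∑ l, (if (∀ m < k, r (r^[m] i) ≠ r^[m] i) ∧ l = r^[k] i then 1 else 0)
            * Pm r l j = Pm r (r^[k] i) j := by
          have : ∀ l, (if (∀ m < k, r (r^[m] i) ≠ r^[m] i) ∧ l = r^[k] i then (1:ℝ) else 0)
              * Pm r l j = if l = r^[k] i then Pm r l j else 0 := by
            intro l
            by_cases hl : l = r^[k] i
            · rw [if_pos ⟨hG, hl⟩, if_pos hl, one_mul]
            · rw [if_neg (fun h => hl h.2), if_neg hl, zero_mul]
          rw [Finset.sum_congr rfl fun l _ => this l]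
          simp
        rw [hsum]
        have hgood : (∀ m < k + 1, r (r^[m] i) ≠ r^[m] i)
            ↔ r (r^[k] i) ≠ r^[k] i := by
          constructor
          · intro h; exact h k (Nat.lt_succ_self k)
          · intro h m hm
            rcases Nat.lt_succ_iff_lt_or_eq.mp hm with hm | rfl
            · exact hG m hm
            · exact h
        by_cases hc : r (r^[k] i) ≠ r^[k] i
        · have hall : ∀ m ≤ k, ¬ r (r^[m] i) = r^[m] i :=
            fun m hm => hgood.mpr hc m (Nat.lt_succ_of_le hm)
          simp [Pm, hc, hgood, Function.iterate_succ_apply' r k i]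
          simp only [and_iff_right hall]
        · simp only [Pm, Matrix.of_apply, hc]
          rw [if_neg (by tauto), if_neg (by rw [hgood]; tauto)]
      · have : ∀ l, (if (∀ m < k, r (r^[m] i) ≠ r^[m] i) ∧ l = r^[k] i then (1:ℝ) else 0)
            * Pm r l j = 0 := by intro l; simp [hG]
        rw [Finset.sum_congr rfl fun l _ => this l, Finset.sum_const_zero]
        rw [if_neg]
        rintro ⟨h1, -⟩
        exact hG fun m hm => h1 m (hm.trans (Nat.lt_succ_self k))

lemma Pm_pow_n (r : Fin n → Fin n) (hA : Acyc r) : Pm r ^ n = 0 := by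
  ext i j
  rw [Pm_pow_apply, Matrix.zero_apply, if_neg]
  rintro ⟨hgood, -⟩
  obtain ⟨a, b, hab, heq⟩ := Fintype.exists_ne_map_eq_of_card_lt
    (fun m : Fin (n + 1) => r^[(m : ℕ)] i) (by simp)
  -- wlog a < b
  wlog hlt : (a : ℕ) < (b : ℕ) generalizing a b
  · exact this b a hab.symm heq.symm
      (lt_of_le_of_ne (Nat.le_of_not_lt hlt) (fun h => hab (Fin.ext h.symm)))
  set x := r^[(a : ℕ)] i with hx
  have hbn : (b : ℕ) ≤ n := Nat.lt_succ_iff.mp b.isLt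
  have hgood' : ∀ m, (a : ℕ) + m < (b : ℕ) → r (r^[m] x) ≠ r^[m] x := by
    intro m hm
    have : r^[m] x = r^[m + (a : ℕ)] i := by
      rw [Function.iterate_add_apply]
    rw [this]
    exact hgood (m + (a : ℕ)) (by omega)
  have hcyc : r^[(b : ℕ) - (a : ℕ)] x = x := by
    conv_lhs => rw [hx]
    rw [← Function.iterate_add_apply]
    have h' : (b : ℕ) - (a : ℕ) + (a : ℕ) = (b : ℕ) := by omega
    rw [h']
    exact heq.symm.trans hx
  set c := (b : ℕ) - (a : ℕ) with hc
  have hc1 : 1 ≤ c := by omega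
  have hstep : Rel r x (r^[c - 1] x) := by
    constructor
    · have h' : c - 1 + 1 = c := by omega
      have h5 : r^[c - 1 + 1] x = x := by rw [h']; exact hcyc
      rw [Function.iterate_succ_apply'] at h5
      exact h5
    · exact hgood' (c - 1) (by omega)
  have htail : Relation.ReflTransGen (Rel r) (r^[c - 1] x) x :=
    iterate_reflTransGen r x (c - 1) fun k hk => hgood' k (by omega)
  exact hA x (Relation.TransGen.head' hstep htail)

lemma det_one_sub_Pm (r : Fin n → Fin n) (hA : Acyc r) : (1 - Pm r).det = 1 := by
  have hnil : IsNilpotent (Pm r) := ⟨n, Pm_pow_n r hA⟩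
  have hch : (Pm r).charpoly = X ^ (Fintype.card (Fin n)) := by
    have h := (Matrix.isNilpotent_charpoly_sub_pow_of_isNilpotent hnil).eq_zero
    exact sub_eq_zero.mp h
  have h1 : (1 - Pm r).det = Polynomial.eval (1 : ℝ) (Pm r).charpoly := by
    rw [Matrix.charpoly, eval_det, matPolyEquiv_charmatrix]
    simp
  rw [h1, hch]
  simp

lemma transGen_iterate (r : Fin n → Fin n) {x y : Fin n}
    (h : Relation.TransGen (Rel r) x y) :
    ∃ k, x = r^[k + 1] y ∧ ∀ m < k + 1, r (r^[m] y) ≠ r^[m] y := by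
  induction h with
  | single h =>
      refine ⟨0, by simpa using h.1.symm, ?_⟩
      intro m hm
      interval_cases m
      simpa using h.2
  | tail _ hrel ih =>
      obtain ⟨k, hk1, hk2⟩ := ih
      obtain ⟨hc1, hc2⟩ := hrel
      refine ⟨k + 1, ?_, ?_⟩
      · rw [Function.iterate_succ_apply, hc1, ← hk1]
      · intro m hm
        match m with
        | 0 => simpa using hc2
        | Nat.succ m' =>
            rw [Function.iterate_succ_apply, hc1]
            exact hk2 m' (by omega)

lemma det_one_sub_Pm_zero (r : Fin n → Fin n) (hA : ¬ Acyc r) : (1 - Pm r).det = 0 := by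
  rw [Acyc, not_forall] at hA
  obtain ⟨a, ha⟩ := hA
  rw [not_not] at ha
  obtain ⟨k, hk1, hk2⟩ := transGen_iterate r ha
  set C : Finset (Fin n) := (Finset.range (k + 1)).image (fun m => r^[m] a) with hC
  have haC : a ∈ C := Finset.mem_image.mpr ⟨0, Finset.mem_range.mpr (Nat.succ_pos k), rfl⟩
  have hne : ∀ i ∈ C, r i ≠ i := by
    intro i hi
    obtain ⟨m, hm, rfl⟩ := Finset.mem_image.mp hi
    exact hk2 m (Finset.mem_range.mp hm)
  have himg : C.image r = C := by
    apply Finset.Subset.antisymm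
    · intro x hx
      obtain ⟨i, hi, rfl⟩ := Finset.mem_image.mp hx
      obtain ⟨m, hm, rfl⟩ := Finset.mem_image.mp hi
      rw [Finset.mem_range] at hm
      rcases Nat.lt_succ_iff_lt_or_eq.mp hm with hm | rfl
      · exact Finset.mem_image.mpr ⟨m + 1, Finset.mem_range.mpr (by omega),
          (Function.iterate_succ_apply' r m a)⟩
      · rw [← Function.iterate_succ_apply' r m a, ← hk1]
        exact haC
    · intro x hx
      obtain ⟨m, hm, rfl⟩ := Finset.mem_image.mp hx
      rw [Finset.mem_range] at hm
      match m with
      | 0 =>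
          refine Finset.mem_image.mpr ⟨r^[k] a, ?_, ?_⟩
          · exact Finset.mem_image.mpr ⟨k, Finset.mem_range.mpr (by omega), rfl⟩
          · show r (r^[k] a) = r^[0] a
            rw [← Function.iterate_succ_apply' r k a, ← hk1]
            simp
      | Nat.succ m' =>
          refine Finset.mem_image.mpr ⟨r^[m'] a, ?_, ?_⟩
          · exact Finset.mem_image.mpr ⟨m', Finset.mem_range.mpr (by omega), rfl⟩
          · exact (Function.iterate_succ_apply' r m' a).symm
  have hinj : Set.InjOn r C := Finset.injOn_of_card_image_eq (by rw [himg])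
  apply Matrix.exists_vecMul_eq_zero_iff.mp
  refine ⟨fun i => if i ∈ C then 1 else 0, ?_, ?_⟩
  · intro h
    have := congrFun h a
    simp [haC] at this
  · funext j
    show ((fun i => if i ∈ C then (1:ℝ) else 0) ᵥ* (1 - Pm r)) j = (0 : Fin n → ℝ) j
    have hvm : ((fun i => if i ∈ C then (1:ℝ) else 0) ᵥ* (1 - Pm r)) j
        = ∑ i, (if i ∈ C then (1:ℝ) else 0) * (1 - Pm r) i j := by
      simp [Matrix.vecMul, dotProduct]
    rw [hvm]
    have h1 : ∑ i, (if i ∈ C then (1:ℝ) else 0) * (1 - Pm r) i j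
        = ∑ i ∈ C, (1 - Pm r) i j := by
      simp only [ite_mul, one_mul, zero_mul]
      rw [Finset.sum_ite_mem, Finset.univ_inter]
    rw [h1]
    have h2 : ∀ i ∈ C, (1 - Pm r) i j
        = (if i = j then (1:ℝ) else 0) - (if j = r i then 1 else 0) := by
      intro i hi
      simp [Pm, Matrix.sub_apply, Matrix.one_apply, hne i hi]
    rw [Finset.sum_congr rfl h2, Finset.sum_sub_distrib]
    have h3 : ∑ i ∈ C, (if i = j then (1:ℝ) else 0) = if j ∈ C then 1 else 0 :=
      Finset.sum_ite_eq' C j (fun _ => (1:ℝ))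
    have h4 : ∑ i ∈ C, (if j = r i then (1:ℝ) else 0) = if j ∈ C then 1 else 0 := by
      have h4' : ∑ x ∈ C.image r, (if j = x then (1:ℝ) else 0)
          = ∑ i ∈ C, (if j = r i then (1:ℝ) else 0) :=
        Finset.sum_image (fun a ha b hb h => hinj ha hb h)
      rw [← h4', himg]
      exact Finset.sum_ite_eq C j (fun _ => (1:ℝ))
    rw [h3, h4, sub_self]
    simp

end MFD
namespace MFD

open Matrix Finset Relation Function Polynomial

variable {n : ℕ}

noncomputable def gRow (ε : Fin n → Fin n → ℝ) (i k : Fin n) : Fin n → ℝ := fun j =>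
  if k = i then (if i = j then 1 else 0)
  else ε k i * ((if i = j then 1 else 0) - (if j = k then 1 else 0))

lemma row_decomp (ε : Fin n → Fin n → ℝ) :
    (1 + kirchhoff ε) = Matrix.of fun i => ∑ k : Fin n, gRow ε i k := by
  ext i j
  show (1 + kirchhoff ε) i j = (∑ k : Fin n, gRow ε i k) j
  rw [Finset.sum_apply]
  rw [← Finset.sum_erase_add _ _ (Finset.mem_univ i)]
  have h0 : gRow ε i i j = if i = j then 1 else 0 := by simp [gRow]
  have h1 : ∀ k ∈ Finset.univ.erase i, gRow ε i k j
      = ε k i * ((if i = j then 1 else 0) - (if j = k then 1 else 0)) := by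
    intro k hk
    have hk' : k ≠ i := (Finset.mem_erase.mp hk).1
    simp [gRow, hk']
  rw [Finset.sum_congr rfl h1, h0]
  by_cases hij : i = j
  · subst hij
    have h2 : ∀ k ∈ Finset.univ.erase i,
        ε k i * ((if i = i then (1:ℝ) else 0) - (if i = k then 1 else 0)) = ε k i := by
      intro k hk
      have hk' : i ≠ k := fun h => (Finset.mem_erase.mp hk).1 h.symm
      simp [hk']
    rw [Finset.sum_congr rfl h2]
    simp [Matrix.add_apply, Matrix.one_apply, kirchhoff, add_comm]
  · have h2 : ∀ k ∈ Finset.univ.erase i,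
        ε k i * ((if i = j then (1:ℝ) else 0) - (if j = k then 1 else 0))
          = if k = j then -ε j i else 0 := by
      intro k hk
      by_cases hkj : k = j
      · subst hkj
        simp [hij]
      · have : j ≠ k := fun h => hkj h.symm
        simp [hij, this, hkj]
    rw [Finset.sum_congr rfl h2, Finset.sum_ite_eq' (Finset.univ.erase i) j
      (fun _ => -ε j i)]
    have hji : j ∈ Finset.univ.erase i := Finset.mem_erase.mpr ⟨fun h => hij h.symm,
      Finset.mem_univ j⟩
    rw [if_pos hji]
    simp [Matrix.add_apply, Matrix.one_apply, kirchhoff, hij]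

lemma det_expand (ε : Fin n → Fin n → ℝ) :
    (1 + kirchhoff ε).det
      = ∑ r : Fin n → Fin n, Matrix.det (Matrix.of fun i => gRow ε i (r i)) := by
  rw [row_decomp ε]
  exact (Matrix.detRowAlternating (R := ℝ) (n := Fin n)).toMultilinearMap.map_sum
    (g := gRow ε)

lemma det_gRow (ε : Fin n → Fin n → ℝ) (r : Fin n → Fin n) :
    Matrix.det (Matrix.of fun i => gRow ε i (r i))
      = (∏ i, if r i = i then (1:ℝ) else ε (r i) i) * (1 - Pm r).det := by
  rw [← Matrix.det_mul_column]
  congr 1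
  ext i j
  show gRow ε i (r i) j = (if r i = i then (1:ℝ) else ε (r i) i) * (1 - Pm r) i j
  by_cases h : r i = i
  · simp [gRow, Pm, h, Matrix.one_apply]
  · simp [gRow, Pm, h, Matrix.one_apply]

lemma det_W (ε : Fin n → Fin n → ℝ) :
    (1 + kirchhoff ε).det
      = ∑ r ∈ Finset.univ.filter (fun r : Fin n → Fin n => Acyc r),
          ∏ i, (if r i = i then (1:ℝ) else ε (r i) i) := by
  rw [det_expand, Finset.sum_congr rfl (fun r _ => det_gRow ε r)]
  rw [← Finset.sum_filter_add_sum_filter_not Finset.univ Acyc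
    (fun r => (∏ i, if r i = i then (1:ℝ) else ε (r i) i) * (1 - Pm r).det)]
  have h1 : ∑ r ∈ Finset.univ.filter (fun r : Fin n → Fin n => Acyc r),
      (∏ i, if r i = i then (1:ℝ) else ε (r i) i) * (1 - Pm r).det
      = ∑ r ∈ Finset.univ.filter (fun r : Fin n → Fin n => Acyc r),
          ∏ i, (if r i = i then (1:ℝ) else ε (r i) i) :=
    Finset.sum_congr rfl fun r hr => by
      rw [det_one_sub_Pm r (Finset.mem_filter.mp hr).2, mul_one]
  have h2 : ∑ r ∈ Finset.univ.filter (fun r : Fin n → Fin n => ¬ Acyc r),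
      (∏ i, if r i = i then (1:ℝ) else ε (r i) i) * (1 - Pm r).det = 0 :=
    Finset.sum_eq_zero fun r hr => by
      rw [det_one_sub_Pm_zero r (Finset.mem_filter.mp hr).2, mul_zero]
  rw [h1, h2, add_zero]

noncomputable def AF (r : Fin n → Fin n) : Finset (Fin n × Fin n) :=
  (Finset.univ.filter fun i => r i ≠ i).image fun i => (r i, i)

lemma mem_AF {r : Fin n → Fin n} {x y : Fin n} :
    (x, y) ∈ AF r ↔ (r y = x ∧ r y ≠ y) := by
  constructor
  · intro h
    obtain ⟨i, hi, heq⟩ := Finset.mem_image.mp h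
    rw [Prod.mk.injEq] at heq
    obtain ⟨hx, hy⟩ := heq
    subst hy
    exact ⟨hx, (Finset.mem_filter.mp hi).2⟩
  · rintro ⟨h1, h2⟩
    exact Finset.mem_image.mpr ⟨y, Finset.mem_filter.mpr ⟨Finset.mem_univ y, h2⟩,
      by rw [h1]⟩

lemma rel_AF (r : Fin n → Fin n) :
    (fun x y : Fin n => (x, y) ∈ AF r) = Rel r := by
  funext x y
  exact propext mem_AF

lemma AF_forest {r : Fin n → Fin n} (hr : Acyc r) : IsDivForest (AF r) := by
  refine ⟨?_, ?_, ?_⟩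
  · rintro ⟨x, y⟩ hp
    obtain ⟨h1, h2⟩ := mem_AF.mp hp
    show x ≠ y
    rw [← h1]
    exact h2
  · intro b
    apply Finset.card_le_one.mpr
    rintro ⟨px, py⟩ hp ⟨qx, qy⟩ hq
    rw [Finset.mem_filter] at hp hq
    obtain ⟨hp1, hp2⟩ := hp
    obtain ⟨hq1, hq2⟩ := hq
    simp only at hp2 hq2
    subst hp2; subst hq2
    rw [(mem_AF.mp hp1).1.symm.trans (mem_AF.mp hq1).1]
  · intro a h
    rw [rel_AF] at h
    exact hr a h

noncomputable def rf (F : Finset (Fin n × Fin n)) : Fin n → Fin n :=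
  fun i => if h : ∃ a, (a, i) ∈ F then h.choose else i

lemma rf_mem {F : Finset (Fin n × Fin n)} {i : Fin n} (h : ∃ a, (a, i) ∈ F) :
    (rf F i, i) ∈ F := by
  rw [rf, dif_pos h]
  exact h.choose_spec

lemma forest_unique {F : Finset (Fin n × Fin n)} (hF : IsDivForest F)
    {x y b : Fin n} (hx : (x, b) ∈ F) (hy : (y, b) ∈ F) : x = y := by
  have h := Finset.card_le_one.mp (hF.2.1 b) (x, b)
    (Finset.mem_filter.mpr ⟨hx, rfl⟩) (y, b) (Finset.mem_filter.mpr ⟨hy, rfl⟩)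
  exact congrArg Prod.fst h

lemma rf_spec {F : Finset (Fin n × Fin n)} (hF : IsDivForest F) {x y : Fin n} :
    (x, y) ∈ F ↔ (rf F y = x ∧ rf F y ≠ y) := by
  constructor
  · intro h
    have he : ∃ a, (a, y) ∈ F := ⟨x, h⟩
    have h1 : rf F y = x := forest_unique hF (rf_mem he) h
    refine ⟨h1, ?_⟩
    rw [h1]
    exact hF.1 (x, y) h
  · rintro ⟨h1, h2⟩
    by_cases he : ∃ a, (a, y) ∈ F
    · have := rf_mem he
      rwa [h1] at this
    · exfalso
      apply h2
      rw [rf, dif_neg he]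

lemma AF_rf {F : Finset (Fin n × Fin n)} (hF : IsDivForest F) : AF (rf F) = F := by
  ext ⟨x, y⟩
  rw [mem_AF, rf_spec hF]

lemma rf_AF (r : Fin n → Fin n) : rf (AF r) = r := by
  funext i
  by_cases hri : r i = i
  · have he : ¬ ∃ a, (a, i) ∈ AF r := by
      rintro ⟨a, ha⟩
      exact (mem_AF.mp ha).2 hri
    rw [rf, dif_neg he, hri]
  · have he : ∃ a, (a, i) ∈ AF r := ⟨r i, mem_AF.mpr ⟨rfl, hri⟩⟩
    exact (mem_AF.mp (rf_mem he)).1.symm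

lemma rf_acyc {F : Finset (Fin n × Fin n)} (hF : IsDivForest F) : Acyc (rf F) := by
  intro a h
  apply hF.2.2 a
  have hrel : Rel (rf F) = fun x y : Fin n => (x, y) ∈ F := by
    funext x y
    exact propext (rf_spec hF).symm
  rwa [hrel] at h

lemma cprod_eq (ε : Fin n → Fin n → ℝ) (r : Fin n → Fin n) :
    (∏ i, if r i = i then (1:ℝ) else ε (r i) i) = arcWt ε (AF r) := by
  rw [arcWt, AF, Finset.prod_image (fun a _ b _ h => congrArg Prod.snd h)]
  rw [Finset.prod_filter]
  exact Finset.prod_congr rfl fun i _ => by by_cases h : r i = i <;> simp [h]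

end MFD

/-- **Theorem 3** (Matrix-Forest Theorem for digraphs, determinant form). For any
weighted digraph `Γ`, `det W = ε(𝔉)`, where `W = I + L(Γ)` and `𝔉` is the set of all
spanning diverging forests of `Γ`. -/
theorem matrix_forest_det_digraph (n : ℕ) (ε : Fin n → Fin n → ℝ)
    (hdiag : ∀ a, ε a a = 0) :
    (1 + kirchhoff ε).det = ∑ F ∈ divForests (Fin n), arcWt ε F := by
  rw [MFD.det_W ε]
  refine Finset.sum_nbij' MFD.AF MFD.rf ?_ ?_ ?_ ?_ ?_
  · intro r hr
    rw [divForests, Finset.mem_filter]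
    exact ⟨Finset.mem_univ _, MFD.AF_forest (Finset.mem_filter.mp hr).2⟩
  · intro F hF
    rw [divForests, Finset.mem_filter] at hF
    exact Finset.mem_filter.mpr ⟨Finset.mem_univ _, MFD.rf_acyc hF.2⟩
  · intro r _
    exact MFD.rf_AF r
  · intro F hF
    rw [divForests, Finset.mem_filter] at hF
    exact MFD.AF_rf hF.2
  · intro r _
    exact MFD.cprod_eq ε r
end

section
/- Theorem 5 (Matrix-Forest Theorem for graphs, determinant form). For any weighted graph G on a finite vertex set V = {1,…,n}, det W = ε(𝔉), i.e., the determinant of W = I + L(G) equals the sum of the weights of all spanning rooted forests of G. -/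
open scoped Classical

/-- The set `𝔉` of all spanning rooted forests `(F, R)`. -/
noncomputable def rootedForests (α : Type*) [Fintype α] [DecidableEq α] :
    Finset (Finset (Sym2 α) × Finset α) :=
  Finset.univ.filter fun FR => IsRootedSpanningForest FR.1 FR.2

/-- The set `𝔉^{ij}` of spanning rooted forests in which `i` and `j` belong to the same
tree and that tree is rooted at `i`. -/
noncomputable def rootedForestsSame {α : Type*} [Fintype α] [DecidableEq α] (i j : α) :
    Finset (Finset (Sym2 α) × Finset α) :=
  Finset.univ.filter fun FR => IsRootedSpanningForest FR.1 FR.2 ∧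
    (SimpleGraph.fromEdgeSet (↑FR.1 : Set (Sym2 α))).Reachable i j ∧ i ∈ FR.2



set_option linter.unusedSectionVars false

variable {α : Type*} [Fintype α] [DecidableEq α]

/-- A functional map is acyclic if every periodic point is a fixed point. -/
def Acy (p : α → α) : Prop := ∀ v k, k ≠ 0 → p^[k] v = v → p v = v

lemma exists_stab {p : α → α} (hp : Acy p) (v : α) :
    ∃ k, p (p^[k] v) = p^[k] v := by
  have : ¬ Function.Injective (fun i : Fin (Fintype.card α + 1) => p^[(i : ℕ)] v) := by
    intro hinj
    have := Fintype.card_le_of_injective _ hinj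
    simp at this
  rw [Function.not_injective_iff] at this
  obtain ⟨i, j, hij, hne⟩ := this
  have hvne : (i : ℕ) ≠ (j : ℕ) := fun h => hne (Fin.ext h)
  rcases Nat.lt_or_ge (i : ℕ) (j : ℕ) with h | h
  · refine ⟨(i : ℕ), hp _ ((j : ℕ) - (i : ℕ)) (by omega) ?_⟩
    rw [← Function.iterate_add_apply]
    rw [show (j:ℕ) - (i:ℕ) + (i:ℕ) = (j:ℕ) by omega]
    exact hij.symm
  · refine ⟨(j : ℕ), hp _ ((i : ℕ) - (j : ℕ)) (by omega) ?_⟩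
    rw [← Function.iterate_add_apply]
    rw [show (i:ℕ) - (j:ℕ) + (j:ℕ) = (i:ℕ) by omega]
    exact hij

/-- Depth: number of steps to reach a fixed point. -/
noncomputable def dpth (p : α → α) (v : α) : ℕ :=
  if h : ∃ k, p (p^[k] v) = p^[k] v then Nat.find h else 0

lemma dpth_spec {p : α → α} (hp : Acy p) (v : α) :
    p (p^[dpth p v] v) = p^[dpth p v] v := by
  rw [dpth, dif_pos (exists_stab hp v)]
  exact Nat.find_spec (exists_stab hp v)

lemma dpth_eq_zero {p : α → α} (hp : Acy p) {v : α} (h : p v = v) : dpth p v = 0 := by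
  rw [dpth, dif_pos (exists_stab hp v)]
  simp only [Nat.find_eq_zero]
  simpa using h

lemma dpth_succ {p : α → α} (hp : Acy p) {v : α} (h : p v ≠ v) :
    dpth p v = dpth p (p v) + 1 := by
  have h1 : ∃ k, p (p^[k] v) = p^[k] v := exists_stab hp v
  have h2 : ∃ k, p (p^[k] (p v)) = p^[k] (p v) := exists_stab hp (p v)
  rw [dpth, dif_pos h1, dpth, dif_pos h2]
  have key : ∀ k, p (p^[k] (p v)) = p^[k] (p v) ↔ p (p^[k+1] v) = p^[k+1] v := by
    intro k; rw [Function.iterate_succ_apply]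
  rcases Nat.exists_eq_succ_of_ne_zero (show Nat.find h1 ≠ 0 by
    intro h0
    exact h (by simpa [h0] using Nat.find_spec h1)) with ⟨m, hm⟩
  have hms : p (p^[m+1] v) = p^[m+1] v := by
    have := Nat.find_spec h1
    rwa [hm] at this
  have : Nat.find h2 = m := by
    refine le_antisymm (Nat.find_le ((key m).mpr hms)) ?_
    by_contra hlt
    push_neg at hlt
    have := Nat.find_spec h2
    have hlt' : Nat.find h2 + 1 < Nat.find h1 := by omega
    exact Nat.find_min h1 hlt' ((key (Nat.find h2)).mp (Nat.find_spec h2))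
  omega

lemma dpth_apply_le {p : α → α} (hp : Acy p) (v : α) : dpth p (p v) ≤ dpth p v := by
  by_cases h : p v = v
  · rw [h]
  · rw [dpth_succ hp h]; omega

/-- The root of `v`: the fixed point reached by iterating `p`. -/
noncomputable def rt (p : α → α) (v : α) : α := p^[dpth p v] v

lemma rt_fixed {p : α → α} (hp : Acy p) (v : α) : p (rt p v) = rt p v := dpth_spec hp v

lemma rt_of_fixed {p : α → α} (hp : Acy p) {v : α} (h : p v = v) : rt p v = v := by
  rw [rt, dpth_eq_zero hp h]; rfl

lemma rt_apply {p : α → α} (hp : Acy p) (v : α) : rt p (p v) = rt p v := by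
  by_cases h : p v = v
  · rw [h]
  · rw [rt, rt, dpth_succ hp h, Function.iterate_succ_apply]

open SimpleGraph Finset

/-- The edge set of the forest associated to a parent map. -/
noncomputable def Fp (p : α → α) : Finset (Sym2 α) :=
  (Finset.univ.filter fun v => p v ≠ v).image fun v => s(v, p v)

/-- The root set of a parent map. -/
noncomputable def Rp (p : α → α) : Finset α := Finset.univ.filter fun v => p v = v

/-- The forest graph of a parent map. -/
noncomputable def Gp (p : α → α) : SimpleGraph α := SimpleGraph.fromEdgeSet (↑(Fp p))

lemma gp_adj {p : α → α} {a b : α} :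
    (Gp p).Adj a b ↔ (p a = b ∨ p b = a) ∧ a ≠ b := by
  rw [Gp, SimpleGraph.fromEdgeSet_adj]
  constructor
  · rintro ⟨he, hne⟩
    refine ⟨?_, hne⟩
    simp only [Finset.coe_image, Set.mem_image, Finset.mem_coe, Fp,
      Finset.mem_image, Finset.mem_filter, Finset.mem_univ, true_and] at he
    obtain ⟨v, hv, hveq⟩ := he
    rw [Sym2.eq_iff] at hveq
    rcases hveq with ⟨rfl, rfl⟩ | ⟨h1, h2⟩
    · exact Or.inl rfl
    · subst h1; subst h2; exact Or.inr rfl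
  · rintro ⟨hor, hne⟩
    refine ⟨?_, hne⟩
    simp only [Finset.mem_coe, Fp, Finset.mem_image, Finset.mem_filter, Finset.mem_univ, true_and]
    rcases hor with h | h
    · exact ⟨a, by rw [h]; exact fun hh => hne hh.symm, by rw [h]⟩
    · exact ⟨b, by rw [h]; exact hne, by rw [h, Sym2.eq_swap]⟩

lemma gp_step_eq {p : α → α} (hp : Acy p) {a b : α} (hadj : (Gp p).Adj a b)
    (hle : dpth p b ≤ dpth p a) : p a = b := by
  rw [gp_adj] at hadj
  rcases hadj.1 with h | h
  · exact h
  · exfalso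
    have hb : p b ≠ b := by rw [h]; exact hadj.2
    rw [dpth_succ hp hb, h] at hle
    omega

/-- Canonical walk following iterates of `p`. -/
noncomputable def itWalk (p : α → α) (hp : Acy p) : (k : ℕ) → (v : α) → (Gp p).Walk v (p^[k] v)
  | 0, _ => SimpleGraph.Walk.nil
  | k+1, v =>
    if h : p v = v then
      (SimpleGraph.Walk.nil : (Gp p).Walk v v).copy rfl
        (Function.iterate_fixed h (k+1)).symm
    else
      SimpleGraph.Walk.cons (by rw [gp_adj]; exact ⟨Or.inl rfl, fun hh => h hh.symm⟩)
        (itWalk p hp k (p v))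

lemma itWalk_support {p : α → α} (hp : Acy p) :
    ∀ (k : ℕ) (v : α), ∀ x ∈ (itWalk p hp k v).support, ∃ i, x = p^[i] v := by
  intro k
  induction k with
  | zero => intro v x hx; simp [itWalk] at hx; exact ⟨0, hx⟩
  | succ k ih =>
    intro v x hx
    rw [itWalk] at hx
    split_ifs at hx with h
    · change x ∈ ((SimpleGraph.Walk.nil : (Gp p).Walk v v).copy rfl
        (Function.iterate_fixed h (k+1)).symm).support at hx
      have hx' : x ∈ (SimpleGraph.Walk.nil : (Gp p).Walk v v).support :=
        (congrArg (x ∈ ·) (SimpleGraph.Walk.support_copy _ _ _)).mp hx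
      simp at hx'; exact ⟨0, hx'⟩
    · change x ∈ (SimpleGraph.Walk.cons _ (itWalk p hp k (p v)) :
        (Gp p).Walk v (p^[k] (p v))).support at hx
      rw [SimpleGraph.Walk.support_cons] at hx
      rcases List.mem_cons.mp hx with rfl | hx
      · exact ⟨0, rfl⟩
      · obtain ⟨i, rfl⟩ := ih (p v) x hx
        exact ⟨i + 1, (Function.iterate_succ_apply p i v).symm⟩

lemma dpth_iterate_le {p : α → α} (hp : Acy p) (v : α) (i : ℕ) :
    dpth p (p^[i] v) ≤ dpth p v := by
  induction i with
  | zero => rfl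
  | succ i ih =>
    rw [Function.iterate_succ_apply']
    exact le_trans (dpth_apply_le hp _) ih

lemma itWalk_isPath {p : α → α} (hp : Acy p) :
    ∀ (k : ℕ) (v : α), (itWalk p hp k v).IsPath := by
  intro k
  induction k with
  | zero => intro v; simp [itWalk]
  | succ k ih =>
    intro v
    rw [itWalk]
    split_ifs with h
    · change ((SimpleGraph.Walk.nil : (Gp p).Walk v v).copy rfl
        (Function.iterate_fixed h (k+1)).symm).IsPath
      exact (SimpleGraph.Walk.isPath_copy _ _ _).mpr SimpleGraph.Walk.IsPath.nil
    · change (SimpleGraph.Walk.cons _ (itWalk p hp k (p v)) :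
        (Gp p).Walk v (p^[k] (p v))).IsPath
      rw [SimpleGraph.Walk.cons_isPath_iff]
      refine ⟨ih (p v), fun hv => ?_⟩
      obtain ⟨i, hi⟩ := itWalk_support hp k (p v) v hv
      have h1 : dpth p v ≤ dpth p (p v) := by
        have h2 := dpth_iterate_le hp (p v) i
        rwa [← hi] at h2
      rw [dpth_succ hp h] at h1
      omega

lemma reachable_rt {p : α → α} (hp : Acy p) (v : α) : (Gp p).Reachable v (rt p v) :=
  ⟨itWalk p hp (dpth p v) v⟩

lemma rt_eq_of_adj {p : α → α} (hp : Acy p) {a b : α} (hadj : (Gp p).Adj a b) :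
    rt p a = rt p b := by
  rw [gp_adj] at hadj
  rcases hadj.1 with h | h
  · rw [← h, rt_apply hp]
  · rw [← h, rt_apply hp]

lemma rt_eq_of_reachable {p : α → α} (hp : Acy p) {a b : α} (hr : (Gp p).Reachable a b) :
    rt p a = rt p b := by
  obtain ⟨w⟩ := hr
  induction w with
  | nil => rfl
  | cons hadj w ih => exact (rt_eq_of_adj hp hadj).trans ih

lemma gp_root_unique {p : α → α} (hp : Acy p) (v : α) :
    ∃! r, r ∈ Rp p ∧ (Gp p).Reachable v r := by
  refine ⟨rt p v, ⟨?_, reachable_rt hp v⟩, ?_⟩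
  · simp only [Rp, Finset.mem_filter, Finset.mem_univ, true_and]
    exact rt_fixed hp v
  · rintro r ⟨hrR, hreach⟩
    simp only [Rp, Finset.mem_filter, Finset.mem_univ, true_and] at hrR
    rw [← rt_of_fixed hp hrR, rt_eq_of_reachable hp hreach.symm]

lemma gp_acyclic {p : α → α} (hp : Acy p) : (Gp p).IsAcyclic := by
  intro v c hc
  -- find max-depth vertex on the cycle
  obtain ⟨m, hmem, hmax⟩ := Finset.exists_max_image (c.support.toFinset)
    (fun x => dpth p x) ⟨v, by simp [SimpleGraph.Walk.start_mem_support]⟩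
  rw [List.mem_toFinset] at hmem
  set c' := c.rotate m hmem with hc'
  have hc'c : c'.IsCycle := hc.rotate hmem
  have hsupmax : ∀ x ∈ c'.support, dpth p x ≤ dpth p m := by
    intro x hx
    rw [SimpleGraph.Walk.support_eq_cons] at hx
    rcases List.mem_cons.mp hx with rfl | hx
    · exact le_refl _
    · refine hmax x ?_
      rw [List.mem_toFinset]
      have hperm := SimpleGraph.Walk.support_rotate c m hmem
      have : x ∈ c.support.tail := hperm.mem_iff.mp hx
      rw [SimpleGraph.Walk.support_eq_cons c]
      exact List.mem_cons_of_mem _ this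
  clear_value c'
  clear hc' hc
  cases c' with
  | nil => exact hc'c.ne_nil rfl
  | @cons _ a _ hma q =>
    rw [SimpleGraph.Walk.cons_isCycle_iff] at hc'c
    obtain ⟨hq, hedge⟩ := hc'c
    obtain ⟨b, hmb, q2, hq2eq⟩ := SimpleGraph.Walk.exists_eq_cons_of_ne hma.ne q.reverse
    have hab : a ≠ b := by
      rintro rfl
      apply hedge
      have : s(m, a) ∈ q.reverse.edges := by
        rw [hq2eq, SimpleGraph.Walk.edges_cons]
        exact List.mem_cons_self
      rwa [SimpleGraph.Walk.edges_reverse, List.mem_reverse] at this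
    have hbsup : b ∈ SimpleGraph.Walk.support (SimpleGraph.Walk.cons hma q) := by
      have : b ∈ q.reverse.support := by
        rw [hq2eq, SimpleGraph.Walk.support_cons]
        exact List.mem_cons_of_mem _ (SimpleGraph.Walk.start_mem_support q2)
      rw [SimpleGraph.Walk.support_reverse, List.mem_reverse] at this
      rw [SimpleGraph.Walk.support_cons]
      exact List.mem_cons_of_mem _ this
    have hasup : a ∈ SimpleGraph.Walk.support (SimpleGraph.Walk.cons hma q) := by
      rw [SimpleGraph.Walk.support_cons]
      exact List.mem_cons_of_mem _ (SimpleGraph.Walk.start_mem_support q)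
    have hpa : p m = a := gp_step_eq hp hma (hsupmax a hasup)
    have hpb : p m = b := gp_step_eq hp hmb (hsupmax b hbsup)
    exact hab (hpa ▸ hpb)

lemma phi_isForest {p : α → α} (hp : Acy p) : IsRootedSpanningForest (Fp p) (Rp p) := by
  refine ⟨?_, gp_acyclic hp, gp_root_unique hp⟩
  intro e he
  simp only [Fp, Finset.mem_image, Finset.mem_filter, Finset.mem_univ, true_and] at he
  obtain ⟨v, hv, rfl⟩ := he
  simpa using fun h => hv h.symm

section Psi

variable {F : Finset (Sym2 α)} {R : Finset α}

/-- The root of the tree containing `v`. -/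
noncomputable def groot (hF : IsRootedSpanningForest F R) (v : α) : α :=
  (hF.2.2 v).choose

lemma groot_mem (hF : IsRootedSpanningForest F R) (v : α) : groot hF v ∈ R :=
  (hF.2.2 v).choose_spec.1.1

lemma groot_reachable (hF : IsRootedSpanningForest F R) (v : α) :
    (SimpleGraph.fromEdgeSet (↑F : Set (Sym2 α))).Reachable v (groot hF v) :=
  (hF.2.2 v).choose_spec.1.2

lemma groot_unique (hF : IsRootedSpanningForest F R) {v r : α} (hr : r ∈ R)
    (hreach : (SimpleGraph.fromEdgeSet (↑F : Set (Sym2 α))).Reachable v r) :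
    r = groot hF v :=
  (hF.2.2 v).choose_spec.2 r ⟨hr, hreach⟩

lemma groot_eq_self (hF : IsRootedSpanningForest F R) {v : α} (hv : v ∈ R) :
    groot hF v = v :=
  (groot_unique hF hv (SimpleGraph.Reachable.refl v)).symm

/-- The path from `v` to its root. -/
noncomputable def gpath (hF : IsRootedSpanningForest F R) (v : α) :
    (SimpleGraph.fromEdgeSet (↑F : Set (Sym2 α))).Path v (groot hF v) :=
  (groot_reachable hF v).some.toPath

lemma gpath_unique (hF : IsRootedSpanningForest F R) {v : α}
    (w : (SimpleGraph.fromEdgeSet (↑F : Set (Sym2 α))).Walk v (groot hF v))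
    (hw : w.IsPath) : (gpath hF v).val = w :=
  congrArg Subtype.val (hF.2.1.path_unique (gpath hF v) ⟨w, hw⟩)

/-- The parent map of a rooted spanning forest. -/
noncomputable def psi (hF : IsRootedSpanningForest F R) : α → α := fun v =>
  if v ∈ R then v else (gpath hF v).val.getVert 1

lemma gpath_nil (hF : IsRootedSpanningForest F R) {v : α} (hv : v ∈ R) :
    (gpath hF v).val.length = 0 := by
  have h := gpath_unique hF ((SimpleGraph.Walk.nil :
      (SimpleGraph.fromEdgeSet (↑F : Set (Sym2 α))).Walk v v).copy rfl
      (groot_eq_self hF hv).symm) (by simp)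
  rw [h]
  simp

lemma gpath_cons (hF : IsRootedSpanningForest F R) {v : α} (hv : v ∉ R) :
    ∃ (u : α) (h : (SimpleGraph.fromEdgeSet (↑F : Set (Sym2 α))).Adj v u)
      (q : (SimpleGraph.fromEdgeSet (↑F : Set (Sym2 α))).Walk u (groot hF v)),
      (gpath hF v).val = SimpleGraph.Walk.cons h q := by
  have hne : v ≠ groot hF v := by
    intro h
    exact hv (h ▸ groot_mem hF v)
  exact SimpleGraph.Walk.exists_eq_cons_of_ne hne (gpath hF v).val

lemma psi_of_not_mem (hF : IsRootedSpanningForest F R) {v : α} (hv : v ∉ R) :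
    psi hF v = (gpath hF v).val.getVert 1 := by rw [psi, if_neg hv]

lemma psi_of_mem (hF : IsRootedSpanningForest F R) {v : α} (hv : v ∈ R) :
    psi hF v = v := by rw [psi, if_pos hv]

lemma psi_adj (hF : IsRootedSpanningForest F R) {v : α} (hv : v ∉ R) :
    (SimpleGraph.fromEdgeSet (↑F : Set (Sym2 α))).Adj v (psi hF v) := by
  obtain ⟨u, h, q, heq⟩ := gpath_cons hF hv
  rw [psi_of_not_mem hF hv, heq, SimpleGraph.Walk.getVert_cons_succ, SimpleGraph.Walk.getVert_zero]
  exact h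

lemma psi_ne (hF : IsRootedSpanningForest F R) {v : α} (hv : v ∉ R) :
    psi hF v ≠ v := ((psi_adj hF hv).ne).symm

lemma psi_fixed_iff (hF : IsRootedSpanningForest F R) {v : α} :
    psi hF v = v ↔ v ∈ R := by
  constructor
  · intro h
    by_contra hv
    exact psi_ne hF hv h
  · exact psi_of_mem hF

/-- step along gpath decreases path length -/
lemma gpath_psi_length (hF : IsRootedSpanningForest F R) {v : α} (hv : v ∉ R) :
    (gpath hF (psi hF v)).val.length + 1 = (gpath hF v).val.length := by
  obtain ⟨u, h, q, heq⟩ := gpath_cons hF hv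
  have hu : psi hF v = u := by
    rw [psi_of_not_mem hF hv, heq, SimpleGraph.Walk.getVert_cons_succ, SimpleGraph.Walk.getVert_zero]
  subst hu
  have hroots : groot hF (psi hF v) = groot hF v := by
    refine (groot_unique hF (groot_mem hF v) ⟨q⟩).symm
  have hq : q.IsPath := by
    have := (gpath hF v).property
    rw [heq] at this
    exact this.of_cons
  have := gpath_unique hF (q.copy rfl hroots.symm) (by simpa using hq)
  rw [this, heq]
  simp

lemma psi_acy (hF : IsRootedSpanningForest F R) : Acy (psi hF) := by
  have hdec : ∀ w : α, (gpath hF (psi hF w)).val.length ≤ (gpath hF w).val.length := by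
    intro w
    by_cases hw : w ∈ R
    · rw [psi_of_mem hF hw]
    · have := gpath_psi_length hF hw; omega
  have hiter : ∀ (k : ℕ) (w : α),
      (gpath hF ((psi hF)^[k] w)).val.length ≤ (gpath hF w).val.length := by
    intro k
    induction k with
    | zero => intro w; exact le_refl _
    | succ k ih =>
      intro w
      rw [Function.iterate_succ_apply']
      exact le_trans (hdec _) (ih w)
  intro v k hk hfix
  by_contra hpv
  have hv : v ∉ R := fun h => hpv (psi_of_mem hF h)
  obtain ⟨k', rfl⟩ := Nat.exists_eq_succ_of_ne_zero hk
  have h1 := hiter k' (psi hF v)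
  rw [← Function.iterate_succ_apply, hfix] at h1
  have h2 := gpath_psi_length hF hv
  omega

end Psi

section PsiEdge

variable {F : Finset (Sym2 α)} {R : Finset α}

lemma psi_step (hF : IsRootedSpanningForest F R) {a b : α}
    (hadj : (SimpleGraph.fromEdgeSet (↑F : Set (Sym2 α))).Adj b a)
    (hns : b ∉ (gpath hF a).val.support) : psi hF b = a := by
  set W := SimpleGraph.Walk.cons hadj (gpath hF a).val with hW
  have hWpath : W.IsPath := by
    rw [hW, SimpleGraph.Walk.cons_isPath_iff]
    exact ⟨(gpath hF a).property, hns⟩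
  have hroots : groot hF a = groot hF b :=
    groot_unique hF (groot_mem hF a) ⟨W⟩
  have hgb : (gpath hF b).val = W.copy rfl hroots := by
    exact gpath_unique hF (W.copy rfl hroots) (by simpa using hWpath)
  have hbR : b ∉ R := by
    intro hbR
    have h0 := gpath_nil hF hbR
    rw [hgb] at h0
    simp [hW] at h0
  rw [psi_of_not_mem hF hbR, hgb]
  simp [hW, SimpleGraph.Walk.getVert_cons_succ, SimpleGraph.Walk.getVert_zero]

lemma psi_edge (hF : IsRootedSpanningForest F R) {a b : α}
    (hadj : (SimpleGraph.fromEdgeSet (↑F : Set (Sym2 α))).Adj a b) :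
    psi hF a = b ∨ psi hF b = a := by
  by_cases hb : b ∈ (gpath hF a).val.support
  · by_cases ha : a ∈ (gpath hF b).val.support
    · exfalso
      set P := (gpath hF a).val with hP
      set dr := P.dropUntil b hb with hdr
      have hPpath : P.IsPath := (gpath hF a).property
      have hdrpath : dr.IsPath := by
        have := hPpath
        rw [← SimpleGraph.Walk.take_spec P hb] at this
        exact this.of_append_right
      have hroots : groot hF a = groot hF b :=
        groot_unique hF (groot_mem hF a) ⟨dr⟩
      have hgb : (gpath hF b).val = dr.copy rfl hroots :=
        gpath_unique hF (dr.copy rfl hroots) (by simpa using hdrpath)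
      rw [hgb, SimpleGraph.Walk.support_copy] at ha
      -- a appears both in takeUntil and in dropUntil: contradiction with nodup
      have hndp : P.support.Nodup := hPpath.support_nodup
      rw [← SimpleGraph.Walk.take_spec P hb, SimpleGraph.Walk.support_append] at hndp
      rw [List.nodup_append] at hndp
      have hatake : a ∈ (P.takeUntil b hb).support :=
        SimpleGraph.Walk.start_mem_support _
      have hadrop : a ∈ dr.support.tail := by
        rw [SimpleGraph.Walk.support_eq_cons dr] at ha
        rcases List.mem_cons.mp ha with rfl | h
        · exact absurd rfl hadj.ne
        · exact h
      exact hndp.2.2 a hatake a hadrop rfl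
    · exact Or.inl (psi_step hF hadj ha)
  · exact Or.inr (psi_step hF hadj.symm hb)

lemma psi_Rp (hF : IsRootedSpanningForest F R) : Rp (psi hF) = R := by
  ext v
  simp only [Rp, Finset.mem_filter, Finset.mem_univ, true_and]
  exact psi_fixed_iff hF

lemma psi_Fp (hF : IsRootedSpanningForest F R) : Fp (psi hF) = F := by
  apply Finset.Subset.antisymm
  · intro e he
    simp only [Fp, Finset.mem_image, Finset.mem_filter, Finset.mem_univ, true_and] at he
    obtain ⟨v, hv, rfl⟩ := he
    have hvR : v ∉ R := fun h => hv (psi_of_mem hF h)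
    have := psi_adj hF hvR
    rw [SimpleGraph.fromEdgeSet_adj] at this
    exact this.1
  · intro e he
    induction e with
    | h a b =>
      have hne : a ≠ b := by
        intro h
        exact hF.1 _ he (by rw [h]; exact Sym2.mk_isDiag_iff.mpr rfl)
      have hadj : (SimpleGraph.fromEdgeSet (↑F : Set (Sym2 α))).Adj a b :=
        (SimpleGraph.fromEdgeSet_adj _).mpr ⟨he, hne⟩
      simp only [Fp, Finset.mem_image, Finset.mem_filter, Finset.mem_univ, true_and]
      rcases psi_edge hF hadj with h | h
      · exact ⟨a, by rw [h]; exact fun hh => hne hh.symm, by rw [h]⟩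
      · exact ⟨b, by rw [h]; exact hne, by rw [h, Sym2.eq_swap]⟩

end PsiEdge

lemma itWalk_getVert_one' {p : α → α} (hp : Acy p) (k : ℕ) (v : α) (h : p v ≠ v) :
    (itWalk p hp (k+1) v).getVert 1 = p v := by
  rw [itWalk, dif_neg h]
  change (SimpleGraph.Walk.cons _ (itWalk p hp k (p v)) :
    (Gp p).Walk v (p^[k] (p v))).getVert 1 = p v
  rw [SimpleGraph.Walk.getVert_cons_succ, SimpleGraph.Walk.getVert_zero]

lemma itWalk_getVert_one {p : α → α} (hp : Acy p) (v : α) (h : p v ≠ v) :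
    (itWalk p hp (dpth p v) v).getVert 1 = p v := by
  have hd : dpth p v ≠ 0 := by
    intro h0
    rw [dpth_succ hp h] at h0
    omega
  obtain ⟨k, hk⟩ := Nat.exists_eq_succ_of_ne_zero hd
  rw [hk]
  exact itWalk_getVert_one' hp k v h

lemma psi_phi {p : α → α} (hp : Acy p) : psi (phi_isForest hp) = p := by
  funext v
  set hF := phi_isForest hp
  by_cases h : p v = v
  · rw [psi_of_mem hF (by simp only [Rp, Finset.mem_filter, Finset.mem_univ, true_and]; exact h), h]
  · have hvR : v ∉ Rp p := by
      simp only [Rp, Finset.mem_filter, Finset.mem_univ, true_and]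
      exact h
    rw [psi_of_not_mem hF hvR]
    have hrtR : rt p v ∈ Rp p := by
      simp only [Rp, Finset.mem_filter, Finset.mem_univ, true_and]
      exact rt_fixed hp v
    have hroot : rt p v = groot hF v :=
      groot_unique hF hrtR (reachable_rt hp v)
    have hW : (gpath hF v).val = (itWalk p hp (dpth p v) v).copy rfl hroot :=
      gpath_unique hF _ ((SimpleGraph.Walk.isPath_copy _ _ _).mpr (itWalk_isPath hp (dpth p v) v))
    rw [hW]
    exact (SimpleGraph.Walk.getVert_copy _ _ _ _).trans (itWalk_getVert_one hp v h)

lemma weight_eq {p : α → α} (hp : Acy p) (ε : α → α → ℝ) (hsym : ∀ a b, ε a b = ε b a) :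
    edgeWt ε hsym (Fp p) = ∏ v ∈ Finset.univ.filter (fun v => p v ≠ v), ε v (p v) := by
  rw [edgeWt, Fp, Finset.prod_image]
  · refine Finset.prod_congr rfl fun v _ => ?_
    simp
  · intro v hv w hw hvw
    rw [Sym2.eq_iff] at hvw
    rcases hvw with ⟨h1, _⟩ | ⟨h1, h2⟩
    · exact h1
    · exfalso
      simp only [Finset.mem_coe, Finset.mem_filter, Finset.mem_univ, true_and] at hv
      apply hv
      refine hp v 2 (by omega) ?_
      show p (p v) = v
      rw [h2, ← h1]

/-! ### Determinant side -/

/-- The signed routing matrix of a parent map. -/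
noncomputable def yMat (p : α → α) : α → α → ℝ := fun v =>
  if p v = v then Pi.single v 1 else Pi.single v 1 - Pi.single (p v) 1

lemma exists_leaf {p : α → α} (hp : Acy p) (hne : ∃ v, p v ≠ v) :
    ∃ v, p v ≠ v ∧ ∀ u, u ≠ v → p u ≠ v := by
  by_contra hcon
  push_neg at hcon
  obtain ⟨v₀, hv₀⟩ := hne
  have H : ∀ w : {v // p v ≠ v}, ∃ u : {v // p v ≠ v}, (u : α) ≠ (w : α) ∧ p u = w := by
    rintro ⟨w, hw⟩
    obtain ⟨u, hu1, hu2⟩ := hcon w hw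
    exact ⟨⟨u, by rw [hu2]; exact Ne.symm hu1⟩, hu1, hu2⟩
  let f : {v // p v ≠ v} → {v // p v ≠ v} := fun w => (H w).choose
  let s : ℕ → {v // p v ≠ v} := fun n => f^[n] ⟨v₀, hv₀⟩
  have hstep : ∀ n, p (s (n+1)) = (s n : α) := by
    intro n
    have hs : s (n+1) = f (s n) := Function.iterate_succ_apply' f n _
    rw [hs]
    exact (H (s n)).choose_spec.2
  have hiter : ∀ (t i : ℕ), p^[t] (s (i + t) : α) = (s i : α) := by
    intro t
    induction t with
    | zero => intro i; rfl
    | succ t ih =>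
      intro i
      rw [show i + (t+1) = (i + t) + 1 by omega, Function.iterate_succ_apply, hstep]
      exact ih i
  have hninj : ¬ Function.Injective (fun i : Fin (Fintype.card α + 1) => ((s (i : ℕ)) : α)) := by
    intro hinj
    have := Fintype.card_le_of_injective _ hinj
    simp at this
  rw [Function.not_injective_iff] at hninj
  obtain ⟨i, j, hij, hne'⟩ := hninj
  have hvne : (i : ℕ) ≠ (j : ℕ) := fun h => hne' (Fin.ext h)
  -- wlog i < j
  rcases Nat.lt_or_ge (i : ℕ) (j : ℕ) with h | h
  · have : p^[(j:ℕ) - (i:ℕ)] ((s (j : ℕ)) : α) = ((s (j:ℕ)) : α) := by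
      have := hiter ((j:ℕ) - (i:ℕ)) (i : ℕ)
      rw [show (i:ℕ) + ((j:ℕ) - (i:ℕ)) = (j:ℕ) by omega] at this
      rw [this, hij]
    exact (s (j:ℕ)).2 (hp _ _ (by omega) this)
  · have hlt : (j : ℕ) < (i : ℕ) := by omega
    have : p^[(i:ℕ) - (j:ℕ)] ((s (i : ℕ)) : α) = ((s (i:ℕ)) : α) := by
      have := hiter ((i:ℕ) - (j:ℕ)) (j : ℕ)
      rw [show (j:ℕ) + ((i:ℕ) - (j:ℕ)) = (i:ℕ) by omega] at this
      rw [this, ← hij]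
    exact (s (i:ℕ)).2 (hp _ _ (by omega) this)

lemma det_yMat_of_not_acy {p : α → α} (hp : ¬ Acy p) : (Matrix.of (yMat p)).det = 0 := by
  rw [Acy] at hp
  push_neg at hp
  obtain ⟨v, k, hk, hfix, hnf⟩ := hp
  set C : Finset α := (Finset.range k).image (fun i => p^[i] v) with hC
  have hmemiter : ∀ j : ℕ, p^[j] v ∈ C := by
    intro j
    induction j using Nat.strong_induction_on with
    | _ j ih =>
      by_cases hj : j < k
      · exact Finset.mem_image.mpr ⟨j, Finset.mem_range.mpr hj, rfl⟩
      · have hj' : j - k < j := by omega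
        have heq : p^[j] v = p^[j - k] v := by
          conv_lhs => rw [show j = (j - k) + k by omega]
          rw [Function.iterate_add_apply, hfix]
        rw [heq]
        exact ih _ hj'
  have hCnonfix : ∀ a ∈ C, p a ≠ a := by
    intro a ha hfa
    rw [hC, Finset.mem_image] at ha
    obtain ⟨i, hi, rfl⟩ := ha
    rw [Finset.mem_range] at hi
    apply hnf
    have h2 : p^[k - i] (p^[i] v) = v := by
      rw [← Function.iterate_add_apply]
      conv_lhs => rw [show k - i + i = k by omega]
      exact hfix
    have hv : v = p^[i] v :=
      calc v = p^[k - i] (p^[i] v) := h2.symm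
      _ = p^[i] v := Function.iterate_fixed hfa (k - i)
    calc p v = p (p^[i] v) := congrArg p hv
    _ = p^[i] v := hfa
    _ = v := hv.symm
  have hmapsto : ∀ a ∈ C, p a ∈ C := by
    intro a ha
    rw [hC, Finset.mem_image] at ha
    obtain ⟨i, _, rfl⟩ := ha
    rw [← Function.iterate_succ_apply' p i v]
    exact hmemiter _
  have hinvto : ∀ a ∈ C, p^[k-1] a ∈ C := by
    intro a ha
    rw [hC, Finset.mem_image] at ha
    obtain ⟨i, _, rfl⟩ := ha
    rw [← Function.iterate_add_apply]
    exact hmemiter _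
  have hleft : ∀ a ∈ C, p^[k-1] (p a) = a := by
    intro a ha
    rw [hC, Finset.mem_image] at ha
    obtain ⟨i, _, rfl⟩ := ha
    rw [← Function.iterate_succ_apply p (k-1) (p^[i] v),
      ← Function.iterate_add_apply p (k-1+1) i v]
    conv_lhs => rw [show k - 1 + 1 + i = i + k by omega]
    rw [Function.iterate_add_apply, hfix]
  have hright : ∀ a ∈ C, p (p^[k-1] a) = a := by
    intro a ha
    rw [hC, Finset.mem_image] at ha
    obtain ⟨i, _, rfl⟩ := ha
    rw [← Function.iterate_succ_apply' p (k-1) (p^[i] v),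
      ← Function.iterate_add_apply p (k-1+1) i v]
    conv_lhs => rw [show k - 1 + 1 + i = i + k by omega]
    rw [Function.iterate_add_apply, hfix]
  set u : α → ℝ := fun a => if a ∈ C then 1 else 0 with hu
  have hune : u ≠ 0 := by
    intro h0
    have h1 : u v = 0 := by rw [h0]; rfl
    rw [hu] at h1
    simp only [show v ∈ C from by simpa using hmemiter 0, if_pos] at h1
    norm_num at h1
  rw [← Matrix.exists_vecMul_eq_zero_iff]
  refine ⟨u, hune, ?_⟩
  funext w
  show ∑ a, u a * Matrix.of (yMat p) a w = 0
  have hterm : ∀ a, u a * Matrix.of (yMat p) a w = if a ∈ C then yMat p a w else 0 := by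
    intro a
    by_cases h : a ∈ C <;> simp [hu, h]
  rw [Finset.sum_congr rfl (fun a _ => hterm a), Finset.sum_ite_mem, Finset.univ_inter]
  have hYc : ∀ a ∈ C, yMat p a w = (Pi.single a 1 : α → ℝ) w - (Pi.single (p a) 1 : α → ℝ) w := by
    intro a ha
    rw [yMat, if_neg (hCnonfix a ha)]
    simp
  rw [Finset.sum_congr rfl hYc, Finset.sum_sub_distrib]
  have hre : ∑ a ∈ C, (Pi.single (p a) 1 : α → ℝ) w = ∑ a ∈ C, (Pi.single a 1 : α → ℝ) w := by
    refine Finset.sum_nbij' (fun a => p a) (fun a => p^[k-1] a) ?_ ?_ ?_ ?_ ?_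
    · exact hmapsto
    · exact hinvto
    · exact hleft
    · exact hright
    · intro a _; rfl
  rw [hre, sub_self]

lemma acy_update {p : α → α} (hp : Acy p) (v : α) : Acy (Function.update p v v) := by
  set p' := Function.update p v v with hp'
  intro w k hk hfix
  by_contra hne
  have hwv : w ≠ v := by
    intro h
    rw [h] at hne
    exact hne (Function.update_self v v p)
  by_cases hexi : ∃ i, i < k ∧ p'^[i] w = v
  · obtain ⟨i, hik, hiv⟩ := hexi
    have : p'^[k] w = v := by
      rw [show k = (k - i) + i by omega, Function.iterate_add_apply, hiv]
      exact Function.iterate_fixed (Function.update_self v v p) _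
    rw [hfix] at this
    exact hwv this
  · push_neg at hexi
    have hagree : ∀ i, i ≤ k → p'^[i] w = p^[i] w := by
      intro i
      induction i with
      | zero => intro _; rfl
      | succ i ih =>
        intro hik
        rw [Function.iterate_succ_apply', Function.iterate_succ_apply', ih (by omega)]
        have hne' : p^[i] w ≠ v := by
          rw [← ih (by omega)]
          exact hexi i (by omega)
        rw [hp', Function.update_of_ne hne']
    have hfx : p^[k] w = w := by rw [← hagree k (le_refl k)]; exact hfix
    have := hp w k hk hfx
    apply hne
    rw [hp', Function.update_of_ne hwv, this]

lemma det_yMat_of_acy_aux : ∀ (m : ℕ) (p : α → α), Acy p →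
    (Finset.univ.filter fun v => p v ≠ v).card = m → (Matrix.of (yMat p)).det = 1 := by
  intro m
  induction m with
  | zero =>
    intro p hp hcard
    have hfix : ∀ v, p v = v := by
      intro v
      by_contra h
      have : v ∈ Finset.univ.filter fun v => p v ≠ v := by simp [h]
      rw [Finset.card_eq_zero] at hcard
      rw [hcard] at this
      exact absurd this (Finset.notMem_empty v)
    have : Matrix.of (yMat p) = (1 : Matrix α α ℝ) := by
      ext a b
      rw [Matrix.of_apply, yMat, if_pos (hfix a), Matrix.one_apply, Pi.single_apply]
      by_cases h : a = b <;> simp [h, eq_comm]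
    rw [this, Matrix.det_one]
  | succ m ih =>
    intro p hp hcard
    have hne : ∃ v, p v ≠ v := by
      by_contra h
      push_neg at h
      have : (Finset.univ.filter fun v => p v ≠ v) = ∅ := by
        ext v; simp [h v]
      rw [this] at hcard
      simp at hcard
    obtain ⟨v, hv, hleaf⟩ := exists_leaf hp hne
    set p' := Function.update p v v with hp'def
    have hp' : Acy p' := acy_update hp v
    have hrow : ∀ w, w ≠ v → yMat p' w = yMat p w := by
      intro w hw
      rw [yMat, yMat, hp'def, Function.update_of_ne hw]
    -- N p = (N p').updateRow v (single v - single (p v))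
    have hmat : Matrix.of (yMat p) =
        (Matrix.of (yMat p')).updateRow v (Pi.single v 1 - Pi.single (p v) 1) := by
      ext a b
      by_cases ha : a = v
      · subst ha
        rw [Matrix.updateRow_self, Matrix.of_apply, yMat, if_neg hv]
      · rw [Matrix.updateRow_ne ha, Matrix.of_apply, Matrix.of_apply, hrow a ha]
    have hsplit : (Matrix.of (yMat p)).det = (Matrix.of (yMat p')).det
        - ((Matrix.of (yMat p')).updateRow v (Pi.single (p v) 1)).det := by
      rw [hmat, sub_eq_add_neg (Pi.single v 1), Matrix.det_updateRow_add]
      congr 1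
      · have : yMat p' v = Pi.single v 1 := by
          rw [yMat, if_pos]
          exact Function.update_self v v p
        conv_lhs => rw [show (Pi.single v 1 : α → ℝ) = Matrix.of (yMat p') v from this.symm]
        rw [Matrix.updateRow_eq_self]
      · have hneg : (-Pi.single (p v) 1 : α → ℝ) = (-1 : ℝ) • (Pi.single (p v) 1 : α → ℝ) := by
          funext z
          simp
        rw [hneg, Matrix.det_updateRow_smul]
        simp
    have hzero : ((Matrix.of (yMat p')).updateRow v (Pi.single (p v) 1)).det = 0 := by
      apply Matrix.det_eq_zero_of_column_eq_zero v
      intro w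
      by_cases hwv : w = v
      · subst hwv
        rw [Matrix.updateRow_self]
        exact Pi.single_eq_of_ne (Ne.symm hv) 1
      · rw [Matrix.updateRow_ne hwv, Matrix.of_apply, yMat]
        by_cases hfw : p' w = w
        · rw [if_pos hfw]
          exact Pi.single_eq_of_ne (Ne.symm hwv) 1
        · rw [if_neg hfw]
          have hpw : p' w = p w := by rw [hp'def, Function.update_of_ne hwv]
          have : p w ≠ v := hleaf w hwv
          simp only [Pi.sub_apply]
          rw [Pi.single_eq_of_ne (Ne.symm hwv), Pi.single_eq_of_ne]
          · norm_num
          · rw [hpw]; exact Ne.symm this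
    have hcard' : (Finset.univ.filter fun w => p' w ≠ w).card = m := by
      have : (Finset.univ.filter fun w => p' w ≠ w) =
          (Finset.univ.filter fun w => p w ≠ w).erase v := by
        ext w
        simp only [Finset.mem_filter, Finset.mem_univ, true_and, Finset.mem_erase]
        constructor
        · intro h
          have hwv : w ≠ v := by
            intro hh
            rw [hh, hp'def] at h
            exact h (Function.update_self v v p)
          rw [hp'def, Function.update_of_ne hwv] at h
          exact ⟨hwv, h⟩
        · rintro ⟨hwv, h⟩
          rw [hp'def, Function.update_of_ne hwv]
          exact h
      rw [this, Finset.card_erase_of_mem (by simp [hv]), hcard]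
      omega
    rw [hsplit, hzero, ih p' hp' hcard', sub_zero]

lemma det_yMat_of_acy {p : α → α} (hp : Acy p) : (Matrix.of (yMat p)).det = 1 :=
  det_yMat_of_acy_aux _ p hp rfl

theorem det_one_add_lap (ε : α → α → ℝ) (hsym : ∀ a b, ε a b = ε b a)
    (hdiag : ∀ a, ε a a = 0) :
    (1 + lap ε).det = ∑ p ∈ Finset.univ.filter (fun p : α → α => Acy p),
      ∏ v ∈ Finset.univ.filter (fun v => p v ≠ v), ε v (p v) := by
  classical
  set x : α → α → (α → ℝ) := fun v u =>
    if u = v then Pi.single v 1 else ε v u • (Pi.single v 1 - Pi.single u 1) with hx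
  have hrow : (1 + lap ε) = Matrix.of (fun v => ∑ u, x v u) := by
    ext v w
    rw [Matrix.of_apply]
    have hsum : (∑ u, x v u) w = ∑ u, x v u w := by
      rw [Finset.sum_apply]
    rw [hsum, ← Finset.add_sum_erase _ _ (Finset.mem_univ v)]
    have hxvv : x v v w = (Pi.single v 1 : α → ℝ) w := by rw [hx]; simp
    have hxvu : ∀ u, u ≠ v → x v u w =
        ε v u * ((Pi.single v 1 : α → ℝ) w - (Pi.single u 1 : α → ℝ) w) := by
      intro u hu
      rw [hx]
      simp only [if_neg hu]
      rfl
    rw [hxvv]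
    by_cases hw : w = v
    · subst hw
      have h1 : ∀ u ∈ Finset.univ.erase w, x w u w = ε w u := by
        intro u hu
        rw [Finset.mem_erase] at hu
        rw [hxvu u hu.1, Pi.single_eq_same, Pi.single_eq_of_ne (Ne.symm hu.1)]
        ring
      rw [Finset.sum_congr rfl h1, Matrix.add_apply, Matrix.one_apply_eq, Pi.single_eq_same]
      congr 1
      rw [lap, Matrix.of_apply, if_pos rfl]
    · have h1 : ∀ u ∈ Finset.univ.erase v, x v u w =
          (if u = w then -ε v u else 0) := by
        intro u hu
        rw [Finset.mem_erase] at hu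
        rw [hxvu u hu.1, Pi.single_eq_of_ne hw]
        by_cases huw : u = w
        · subst huw; rw [if_pos rfl, Pi.single_eq_same]; ring
        · rw [if_neg huw, Pi.single_eq_of_ne (Ne.symm huw)]; ring
      rw [Finset.sum_congr rfl h1, Finset.sum_ite_eq' (Finset.univ.erase v) w
        (fun u => -ε v u)]
      rw [if_pos (Finset.mem_erase.mpr ⟨Ne.symm (fun h => hw h.symm), Finset.mem_univ w⟩)]
      have hvw : v ≠ w := fun h => hw h.symm
      rw [Matrix.add_apply, Matrix.one_apply_ne hvw, lap, Matrix.of_apply, if_neg hvw,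
        Pi.single_eq_of_ne hw]
  rw [hrow]
  have hdet1 : (Matrix.of (fun v => ∑ u, x v u)).det =
      Matrix.detRowAlternating (fun v => ∑ u : α, x v u) := rfl
  rw [hdet1]
  rw [show (Matrix.detRowAlternating (fun v => ∑ u : α, x v u) : ℝ) =
    Matrix.detRowAlternating.toMultilinearMap (fun v => ∑ u : α, x v u) from rfl]
  rw [MultilinearMap.map_sum]
  -- now handle each r : α → α
  have hterm : ∀ r : α → α,
      Matrix.detRowAlternating.toMultilinearMap (fun v => x v (r v)) =
      (if Acy r then ∏ v ∈ Finset.univ.filter (fun v => r v ≠ v), ε v (r v) else 0) := by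
    intro r
    set c : α → ℝ := fun v => if r v = v then 1 else ε v (r v) with hc
    have hxy : (fun v => x v (r v)) = fun v => c v • yMat r v := by
      funext v
      show (if r v = v then (Pi.single v 1 : α → ℝ)
          else ε v (r v) • (Pi.single v 1 - Pi.single (r v) 1)) =
        (if r v = v then (1:ℝ) else ε v (r v)) • yMat r v
      rw [yMat]
      by_cases h : r v = v
      · rw [if_pos h, if_pos h, if_pos h, one_smul]
      · rw [if_neg h, if_neg h, if_neg h]
    rw [hxy, MultilinearMap.map_smul_univ]
    have hyd : Matrix.detRowAlternating.toMultilinearMap (yMat r) =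
        (Matrix.of (yMat r)).det := rfl
    rw [hyd, smul_eq_mul]
    have hprod : ∏ v, c v = ∏ v ∈ Finset.univ.filter (fun v => r v ≠ v), ε v (r v) := by
      rw [Finset.prod_filter]
      refine Finset.prod_congr rfl fun v _ => ?_
      rw [hc]
      by_cases h : r v = v <;> simp [h]
    by_cases hacy : Acy r
    · rw [det_yMat_of_acy hacy, if_pos hacy, mul_one, hprod]
    · rw [det_yMat_of_not_acy hacy, if_neg hacy, mul_zero]
  rw [Finset.sum_congr rfl (fun r _ => hterm r), Finset.sum_filter]

theorem matrix_forest_det (ε : α → α → ℝ)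
    (hsym : ∀ a b, ε a b = ε b a) (hdiag : ∀ a, ε a a = 0) :
    (1 + lap ε).det = ∑ FR ∈ rootedForests α, edgeWt ε hsym FR.1 := by
  rw [det_one_add_lap ε hsym hdiag]
  refine Finset.sum_bij'
    (i := fun (p : α → α) (_ : p ∈ Finset.univ.filter (fun p : α → α => Acy p)) =>
      ((Fp p, Rp p) : Finset (Sym2 α) × Finset α))
    (j := fun FR hFR => psi (by
      have := Finset.mem_filter.mp hFR
      exact this.2))
    ?_ ?_ ?_ ?_ ?_
  · intro p hp
    have hacy : Acy p := (Finset.mem_filter.mp hp).2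
    rw [rootedForests, Finset.mem_filter]
    exact ⟨Finset.mem_univ _, phi_isForest hacy⟩
  · intro FR hFR
    rw [Finset.mem_filter]
    exact ⟨Finset.mem_univ _, psi_acy _⟩
  · intro p hp
    exact psi_phi (Finset.mem_filter.mp hp).2
  · intro FR hFR
    have hF := (Finset.mem_filter.mp hFR).2
    exact Prod.ext (psi_Fp hF) (psi_Rp hF)
  · intro p hp
    exact (weight_eq (Finset.mem_filter.mp hp).2 ε hsym).symm

/-- **Theorem 5** (Matrix-Forest Theorem for graphs, determinant form). For any weighted
graph `G`, `det W = ε(𝔉)`, where `W = I + L(G)` and `𝔉` is the set of all spanning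
rooted forests of `G`. -/
theorem matrix_forest_det_graph (n : ℕ) (ε : Fin n → Fin n → ℝ)
    (hsym : ∀ a b, ε a b = ε b a) (hdiag : ∀ a, ε a a = 0) :
    (1 + lap ε).det = ∑ FR ∈ rootedForests (Fin n), edgeWt ε hsym FR.1 :=
  matrix_forest_det ε hsym hdiag
end

section
/- Theorem 7, part 1 (relative forest-accessibilities of a digraph). For any weighted digraph Γ on a finite vertex set V = {1,…,n}, if the matrix W = I + L(Γ) is invertible with inverse Q = (q_{ij}), then for all i, j ∈ V, q_{ij} = ε(𝔉^{j→i}) / ε(𝔉). -/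
open scoped Classical

/-! ### Auxiliary machinery for the matrix-forest theorem -/

namespace MFT

open Finset Equiv Relation Function

variable {α : Type*} [Fintype α] [DecidableEq α]

set_option linter.unusedSectionVars false

/-- The "follow the parent pointer" step function of a partial parent map. -/
def fs (c : α → Option α) : α → α := fun u => (c u).getD u

/-- One step of the parent-pointer relation. -/
def Step (c : α → Option α) (a b : α) : Prop := c a = some b

lemma csome {c : α → Option α} {u : α} (h : c u ≠ none) : c u = some (fs c u) := by
  cases hc : c u with
  | none => exact absurd hc h
  | some v => simp [fs, hc]

lemma fs_eq {c : α → Option α} {u v : α} (h : c u = some v) : fs c u = v := by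
  simp [fs, h]

lemma fs_stuck {c : α → Option α} {r : α} (h : c r = none) : ∀ k, (fs c)^[k] r = r := by
  intro k
  induction k with
  | zero => rfl
  | succ k ih => rw [Function.iterate_succ_apply', ih]; simp [fs, h]

lemma reflTransGen_iterate {c : α → Option α} {a b : α}
    (h : Relation.ReflTransGen (Step c) a b) : ∃ k, (fs c)^[k] a = b := by
  induction h with
  | refl => exact ⟨0, rfl⟩
  | tail h1 h2 ih =>
      obtain ⟨k, hk⟩ := ih
      exact ⟨k + 1, by rw [Function.iterate_succ_apply', hk]; exact fs_eq h2⟩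

lemma iterate_reflTransGen {c : α → Option α} {a : α} (k : ℕ)
    (hsome : ∀ l, l < k → c ((fs c)^[l] a) ≠ none) :
    Relation.ReflTransGen (Step c) a ((fs c)^[k] a) := by
  induction k with
  | zero => exact .refl
  | succ k ih =>
      refine (ih fun l hl => hsome l (hl.trans (Nat.lt_succ_self k))).tail ?_
      rw [Function.iterate_succ_apply']
      exact csome (hsome k (Nat.lt_succ_self k))

lemma transGen_iterate {c : α → Option α} {a b : α} (h : Relation.TransGen (Step c) a b) :
    c a ≠ none ∧ ∃ k, 0 < k ∧ (fs c)^[k] a = b := by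
  induction h with
  | single h1 =>
      refine ⟨by rw [h1]; simp, 1, one_pos, fs_eq h1⟩
  | tail h1 h2 ih =>
      obtain ⟨ha, k, hk, hkb⟩ := ih
      exact ⟨ha, k + 1, Nat.succ_pos k,
        by rw [Function.iterate_succ_apply', hkb]; exact fs_eq h2⟩

lemma cyc_all_some {c : α → Option α} {a : α} {k : ℕ} (hk : 0 < k)
    (hka : (fs c)^[k] a = a) (ha : c a ≠ none) : ∀ l, c ((fs c)^[l] a) ≠ none := by
  intro l hnone
  rcases Nat.eq_zero_or_pos l with rfl | hl
  · exact ha hnone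
  have hmul : (fs c)^[k * l] a = a := by
    rw [Function.iterate_mul]
    exact Function.iterate_fixed hka l
  have hge : l ≤ k * l := Nat.le_mul_of_pos_left l hk
  have : (fs c)^[k * l] a = (fs c)^[l] a := by
    have h2 := Function.iterate_add_apply (fs c) (k * l - l) l a
    rw [Nat.sub_add_cancel hge] at h2
    rw [h2]
    exact fs_stuck hnone _
  have haeq : a = (fs c)^[l] a := hmul.symm.trans this
  exact ha (by rw [haeq]; exact hnone)

lemma cyc_iff {c : α → Option α} {a : α} :
    Relation.TransGen (Step c) a a ↔ c a ≠ none ∧ ∃ k, 0 < k ∧ (fs c)^[k] a = a := by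
  constructor
  · exact transGen_iterate
  · rintro ⟨ha, k, hk, hka⟩
    have hsome := cyc_all_some hk hka ha
    have h1 : Relation.ReflTransGen (Step c) (fs c a) ((fs c)^[k - 1] (fs c a)) :=
      iterate_reflTransGen _ (fun l _ => by
        have : (fs c)^[l] (fs c a) = (fs c)^[l + 1] a := by
          rw [Function.iterate_succ_apply]
        rw [this]; exact hsome (l + 1))
    have h2 : (fs c)^[k - 1] (fs c a) = a := by
      have h3 := Function.iterate_succ_apply (fs c) (k - 1) a
      rw [show (k - 1).succ = k from by omega] at h3
      rw [← h3, hka]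
    exact Relation.TransGen.head' (csome ha) (by rwa [h2] at h1)

/-! ### Configurations and weights -/

/-- The weight of a partial parent map. -/
noncomputable def wgt (ε : α → α → ℝ) (c : α → Option α) : ℝ :=
  ∏ u, (c u).elim 1 (fun m => ε m u)

/-- Compatibility of a permutation with a configuration. -/
def Compat (j i : α) (σ : Equiv.Perm α) (c : α → Option α) : Prop :=
  σ j = i ∧ c j = none ∧ ∀ u, u ≠ j → σ u ≠ u → c u = some (σ u)

/-- The number of non-fixed points of `σ` other than `j`. -/
noncomputable def nu (j : α) (σ : Equiv.Perm α) : ℕ :=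
  (Finset.univ.filter fun u => u ≠ j ∧ σ u ≠ u).card

/-- The signed term attached to a permutation. -/
noncomputable def trm (j : α) (σ : Equiv.Perm α) : ℝ :=
  ((Equiv.Perm.sign σ : ℤ) : ℝ) * (-1) ^ (nu j σ)

/-! ### Lists of iterates and their cycle permutations -/

/-- The list `[g 0, g 1, ..., g (N-1)]`. -/
def iterL (g : ℕ → α) (N : ℕ) : List α := (List.range N).map g

lemma iterL_length (g : ℕ → α) (N : ℕ) : (iterL g N).length = N := by simp [iterL]

lemma iterL_mem {g : ℕ → α} {N : ℕ} {x : α} : x ∈ iterL g N ↔ ∃ l, l < N ∧ g l = x := by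
  simp [iterL]

lemma iterL_nodup {g : ℕ → α} {N : ℕ}
    (hinj : ∀ x, x < N → ∀ y, y < N → g x = g y → x = y) : (iterL g N).Nodup :=
  List.Nodup.map_on
    (fun x hx y hy h => hinj x (by simpa using hx) y (by simpa using hy) h)
    List.nodup_range

lemma iterL_formPerm {g : ℕ → α} {N : ℕ}
    (hnd : (iterL g N).Nodup) {l : ℕ} (h : l < N) :
    (iterL g N).formPerm (g l) = g ((l + 1) % N) := by
  have hl' : l < (iterL g N).length := by rw [iterL_length]; exact h
  have h1 := List.formPerm_apply_getElem (iterL g N) hnd l hl'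
  simpa [iterL] using h1

/-! ### Expansion of the determinant -/

theorem det_expand (ε : α → α → ℝ) (hdiag : ∀ a, ε a a = 0) (i j : α) :
    ((1 + kirchhoff ε).updateRow j (Pi.single i 1)).det
      = ∑ c : α → Option α,
          (∑ σ ∈ Finset.univ.filter (fun σ : Equiv.Perm α => Compat j i σ c), trm j σ)
            * wgt ε c := by
  classical
  set W := 1 + kirchhoff ε with hWdef
  set G : Equiv.Perm α → α → Option α → ℝ := fun σ u o =>
    if u = j then (if o = none then (if σ j = i then 1 else 0) else 0)
    else if σ u = u then o.elim 1 (fun m => ε m u)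
    else if o = some (σ u) then -ε (σ u) u else 0 with hG
  have hWu : ∀ (σ : Equiv.Perm α) (u : α),
      (W.updateRow j (Pi.single i 1)) u (σ u) = ∑ o : Option α, G σ u o := by
    intro σ u
    by_cases hu : u = j
    · subst hu
      rw [Matrix.updateRow_apply, if_pos rfl, Pi.single_apply, Fintype.sum_option]
      simp [hG]
    · rw [Matrix.updateRow_apply, if_neg hu]
      have hker : kirchhoff ε u (σ u)
          = if u = σ u then ∑ k ∈ Finset.univ.erase u, ε k u else -ε (σ u) u := rfl
      rw [hWdef, Matrix.add_apply, Matrix.one_apply, hker, Fintype.sum_option]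
      by_cases hfix : σ u = u
      · rw [if_pos hfix.symm, if_pos hfix.symm, Finset.sum_erase (f := fun k => ε k u) _ (hdiag u)]
        simp [hG, hu, hfix]
      · rw [if_neg (fun h => hfix h.symm), if_neg (fun h => hfix h.symm)]
        simp [hG, hu, hfix, Finset.sum_ite_eq']
  have hps : ∀ σ : Equiv.Perm α, (∏ u, (W.updateRow j (Pi.single i 1)) u (σ u))
      = ∑ c : α → Option α, ∏ u, G σ u (c u) := by
    intro σ
    calc (∏ u, (W.updateRow j (Pi.single i 1)) u (σ u))
        = ∏ u, ∑ o : Option α, G σ u o := Finset.prod_congr rfl (fun u _ => hWu σ u)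
      _ = ∑ c : α → Option α, ∏ u, G σ u (c u) := Fintype.prod_sum _
  rw [← Matrix.det_transpose, Matrix.det_apply']
  simp_rw [Matrix.transpose_apply]
  have step1 : (∑ σ : Equiv.Perm α, ((Equiv.Perm.sign σ : ℤ) : ℝ)
        * ∏ u, (W.updateRow j (Pi.single i 1)) u (σ u))
      = ∑ c : α → Option α, ∑ σ : Equiv.Perm α,
          ((Equiv.Perm.sign σ : ℤ) : ℝ) * ∏ u, G σ u (c u) := by
    simp_rw [hps, Finset.mul_sum]
    exact Finset.sum_comm
  rw [step1]
  refine Finset.sum_congr rfl (fun c _ => ?_)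
  have hterm : ∀ σ : Equiv.Perm α, ((Equiv.Perm.sign σ : ℤ) : ℝ) * ∏ u, G σ u (c u)
      = if Compat j i σ c then trm j σ * wgt ε c else 0 := by
    intro σ
    by_cases hcpt : Compat j i σ c
    · rw [if_pos hcpt]
      obtain ⟨h1, h2, h3⟩ := hcpt
      have hpe : (∏ u, G σ u (c u))
          = ∏ u, (if u ≠ j ∧ σ u ≠ u then (-1 : ℝ) else 1)
              * (c u).elim 1 (fun m => ε m u) := by
        refine Finset.prod_congr rfl (fun u _ => ?_)
        by_cases hu : u = j
        · subst hu; simp [hG, h2, h1]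
        · by_cases hfix : σ u = u
          · simp [hG, hu, hfix]
          · simp [hG, hu, hfix, h3 u hu hfix]
      rw [hpe, Finset.prod_mul_distrib]
      have hsgnprod : (∏ u, (if u ≠ j ∧ σ u ≠ u then (-1 : ℝ) else 1))
          = (-1) ^ (nu j σ) := by
        rw [Finset.prod_ite (fun _ => (-1 : ℝ)) (fun _ => (1 : ℝ)),
          Finset.prod_const, Finset.prod_const_one, mul_one, nu]
      rw [hsgnprod, trm, wgt]
      ring
    · rw [if_neg hcpt]
      have hz : ∃ u, G σ u (c u) = 0 := by
        by_cases h1 : σ j = i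
        · by_cases h2 : c j = none
          · have h3 : ¬ ∀ u, u ≠ j → σ u ≠ u → c u = some (σ u) :=
              fun h => hcpt ⟨h1, h2, h⟩
            push_neg at h3
            obtain ⟨u, hu, hfix, hcu⟩ := h3
            exact ⟨u, by simp [hG, hu, hfix, hcu]⟩
          · exact ⟨j, by simp [hG, h2]⟩
        · exact ⟨j, by simp [hG, h1]⟩
      obtain ⟨u, hu⟩ := hz
      rw [Finset.prod_eq_zero (Finset.mem_univ u) hu, mul_zero]
  rw [Finset.sum_congr rfl (fun σ _ => hterm σ), ← Finset.sum_filter, ← Finset.sum_mul]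

/-! ### Compatible permutations: existence of the chain -/

lemma pow_fixed {σ : Equiv.Perm α} {u : α} (h : σ u = u) : ∀ m, (σ ^ m) u = u := by
  intro m
  induction m with
  | zero => simp
  | succ m ih => rw [pow_succ, Equiv.Perm.mul_apply, h, ih]

lemma compat_reaches {c : α → Option α} {i j : α} {σ : Equiv.Perm α}
    (hcpt : Compat j i σ c) : Relation.ReflTransGen (Step c) i j := by
  obtain ⟨h1, h2, h3⟩ := hcpt
  have hord : 0 < orderOf σ := orderOf_pos σ
  have hKey : ∀ d, d ≤ orderOf σ →
      Relation.ReflTransGen (Step c) ((σ ^ (orderOf σ - d)) j) j := by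
    intro d
    induction d with
    | zero =>
        intro _
        rw [Nat.sub_zero, pow_orderOf_eq_one]
        exact .refl
    | succ d ih =>
        intro hd
        set u := (σ ^ (orderOf σ - (d + 1))) j with hu
        by_cases huj : u = j
        · rw [huj]
        · have hfix : σ u ≠ u := by
            intro hfixu
            apply huj
            have e1 : (σ ^ orderOf σ) j = j := by rw [pow_orderOf_eq_one]; rfl
            have e2 : (σ ^ orderOf σ) j = u := by
              have hsplit : orderOf σ = (d + 1) + (orderOf σ - (d + 1)) :=
                (Nat.add_sub_cancel' hd).symm
              rw [hsplit, pow_add, Equiv.Perm.mul_apply, ← hu]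
              exact pow_fixed hfixu _
            rw [← e2, e1]
          have hstep : Step c u (σ u) := h3 u huj hfix
          have hnext : σ u = (σ ^ (orderOf σ - d)) j := by
            have : orderOf σ - d = (orderOf σ - (d + 1)) + 1 := by omega
            rw [this, pow_succ', Equiv.Perm.mul_apply, ← hu]
          exact Relation.ReflTransGen.head hstep (hnext ▸ ih (by omega))
  have := hKey (orderOf σ - 1) (by omega)
  have h1' : orderOf σ - (orderOf σ - 1) = 1 := by omega
  rw [h1', pow_one, h1] at this
  exact this

/-! ### The acyclic case: a unique compatible permutation -/

lemma compat_sum_acyclic {c : α → Option α} {i j : α} (hcj : c j = none)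
    (hacyc : ∀ a, ¬ Relation.TransGen (Step c) a a)
    (hreach : Relation.ReflTransGen (Step c) i j) :
    (∑ σ ∈ Finset.univ.filter (fun σ : Equiv.Perm α => Compat j i σ c), trm j σ) = 1 := by
  classical
  have hex : ∃ k, (fs c)^[k] i = j := reflTransGen_iterate hreach
  set K := Nat.find hex with hKdef
  have hK : (fs c)^[K] i = j := Nat.find_spec hex
  have hKmin : ∀ m, m < K → (fs c)^[m] i ≠ j := fun m hm => Nat.find_min hex hm
  set g : ℕ → α := fun l => (fs c)^[l] i with hg
  have hsome : ∀ l, l < K → c (g l) ≠ none := by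
    intro l hl hnone
    have h2 := Function.iterate_add_apply (fs c) (K - l) l i
    rw [Nat.sub_add_cancel hl.le] at h2
    have h3 : (fs c)^[K] i = g l := by rw [h2]; exact fs_stuck hnone _
    exact hKmin l hl (h3.symm.trans hK)
  have haux : ∀ x y, x < y → y < K + 1 → g x ≠ g y := by
    intro x y hxy hy heq
    have hyK : y ≤ K := Nat.lt_succ_iff.mp hy
    have e1 : (fs c)^[K] i = (fs c)^[K - y] (g y) := by
      have h2 := Function.iterate_add_apply (fs c) (K - y) y i
      rw [Nat.sub_add_cancel hyK] at h2
      exact h2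
    have e2 : (fs c)^[K - y] (g x) = g (K - y + x) :=
      (Function.iterate_add_apply (fs c) (K - y) x i).symm
    have e3 : g (K - y + x) = j := by
      rw [← e2, heq, ← e1, hK]
    exact hKmin _ (by omega) e3
  have hinj : ∀ x, x < K + 1 → ∀ y, y < K + 1 → g x = g y → x = y := by
    intro x hx y hy hxy
    rcases Nat.lt_trichotomy x y with h | h | h
    · exact absurd hxy (haux x y h hy)
    · exact h
    · exact absurd hxy.symm (haux y x h hx)
  set L := iterL g (K + 1) with hL
  have hnd : L.Nodup := iterL_nodup hinj
  set σ₀ := L.formPerm with hσ₀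
  have hmemL : ∀ x, x ∈ L ↔ ∃ l, l < K + 1 ∧ g l = x := fun x => iterL_mem
  have hjL : g K = j := hK
  have hjmem : j ∈ L := (hmemL j).mpr ⟨K, Nat.lt_succ_self K, hjL⟩
  have hρ : ∀ l, l < K + 1 → σ₀ (g l) = g ((l + 1) % (K + 1)) :=
    fun l hl => iterL_formPerm hnd hl
  have hσ₀j : σ₀ j = i := by
    have h5 := hρ K (Nat.lt_succ_self K)
    rw [hjL, Nat.mod_self] at h5
    exact h5
  have hout : ∀ x, x ∉ L → σ₀ x = x := fun x hx => List.formPerm_apply_of_notMem hx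
  have hchain : ∀ l, l < K → σ₀ (g l) = g (l + 1) := by
    intro l hl
    rw [hρ l (by omega), Nat.mod_eq_of_lt (by omega)]
  have hcpt0 : Compat j i σ₀ c := by
    refine ⟨hσ₀j, hcj, fun u hu hfix => ?_⟩
    have huL : u ∈ L := by
      by_contra hx; exact hfix (hout u hx)
    obtain ⟨l, hl, rfl⟩ := (hmemL u).mp huL
    have hlK : l < K := by
      rcases Nat.lt_or_ge l K with h | h
      · exact h
      · exfalso
        have : l = K := by omega
        subst this
        exact hu hjL
    rw [hchain l hlK, csome (hsome l hlK)]
    congr 1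
    exact (Function.iterate_succ_apply' (fs c) l i).symm
  have huniq : ∀ σ : Equiv.Perm α, Compat j i σ c → σ = σ₀ := by
    intro σ hcpt
    obtain ⟨h1, h2, h3⟩ := hcpt
    have hA : ∀ l, l ≤ K → (σ ^ (l + 1)) j = g l := by
      intro l
      induction l with
      | zero => intro _; rw [pow_one, h1]; rfl
      | succ l ih =>
          intro hl
          have hIH := ih (by omega)
          have huj : g l ≠ j := hKmin l (by omega)
          have hfix : σ (g l) ≠ g l := by
            intro hfixu
            apply huj
            have e1 : (σ ^ ((l + 1) * orderOf σ)) j = j := by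
              rw [mul_comm, pow_mul, pow_orderOf_eq_one, one_pow]; rfl
            have e2 : (σ ^ ((l + 1) * orderOf σ)) j = g l := by
              have hle : l + 1 ≤ (l + 1) * orderOf σ :=
                Nat.le_mul_of_pos_right _ (orderOf_pos σ)
              have hsplit : (l + 1) * orderOf σ = ((l + 1) * orderOf σ - (l + 1)) + (l + 1) := by
                omega
              rw [hsplit, pow_add, Equiv.Perm.mul_apply, hIH]
              exact pow_fixed hfixu _
            rw [← e2, e1]
          have hcu : c (g l) = some (σ (g l)) := h3 _ huj hfix
          have hfu : fs c (g l) = σ (g l) := fs_eq hcu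
          have hnext : g (l + 1) = fs c (g l) := Function.iterate_succ_apply' (fs c) l i
          rw [pow_succ', Equiv.Perm.mul_apply, hIH, hnext]
          exact hfu.symm
    have hperK : (σ ^ (K + 1)) j = j := by rw [hA K le_rfl, hjL]
    have horb : ∀ m, ∃ t, t ≤ K ∧ (σ ^ m) j = (σ ^ t) j := by
      intro m
      induction m with
      | zero => exact ⟨0, Nat.zero_le K, rfl⟩
      | succ m ih =>
          obtain ⟨t, htK, ht⟩ := ih
          rcases Nat.lt_or_ge t K with h | h
          · refine ⟨t + 1, by omega, ?_⟩
            rw [pow_succ', Equiv.Perm.mul_apply, ht, ← Equiv.Perm.mul_apply, ← pow_succ']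
          · have htK' : t = K := by omega
            refine ⟨0, Nat.zero_le K, ?_⟩
            rw [pow_succ', Equiv.Perm.mul_apply, ht, htK', ← Equiv.Perm.mul_apply,
              ← pow_succ', hperK]
            rfl
    have hmemorb : ∀ m, (σ ^ m) j ∈ L := by
      intro m
      obtain ⟨t, htK, ht⟩ := horb m
      rw [ht]
      rcases Nat.eq_zero_or_pos t with rfl | hpos
      · rw [pow_zero]; exact hjmem
      · have ht1 : t - 1 + 1 = t := by omega
        have := hA (t - 1) (by omega)
        rw [ht1] at this
        rw [this]
        exact (hmemL _).mpr ⟨t - 1, by omega, rfl⟩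
    have hLorb : ∀ x ∈ L, ∃ t, (σ ^ (t + 1)) j = x := by
      intro x hx
      obtain ⟨l, hl, rfl⟩ := (hmemL x).mp hx
      exact ⟨l, hA l (by omega)⟩
    have hpre : ∀ x, σ x ∈ L → x ∈ L := by
      intro x hx
      obtain ⟨t, ht⟩ := hLorb _ hx
      rw [pow_succ', Equiv.Perm.mul_apply] at ht
      have hxx : x = (σ ^ t) j := (σ.injective ht).symm
      rw [hxx]
      exact hmemorb t
    have hB : ∀ x, x ∉ L → σ x = x := by
      intro x hxL
      by_contra hmove
      have hsub : ∀ k, (σ ^ k) x ∉ L ∧ σ ((σ ^ k) x) ≠ (σ ^ k) x := by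
        intro k
        induction k with
        | zero =>
            constructor
            · rw [pow_zero]; exact hxL
            · rw [pow_zero]; exact hmove
        | succ k ih =>
            obtain ⟨hk1, hk2⟩ := ih
            have hx' : (σ ^ (k + 1)) x = σ ((σ ^ k) x) := by
              rw [pow_succ', Equiv.Perm.mul_apply]
            constructor
            · rw [hx']; intro hmem; exact hk1 (hpre _ hmem)
            · rw [hx']; intro heq; exact hk2 (σ.injective heq)
      have hstep : ∀ k, σ ((σ ^ k) x) = fs c ((σ ^ k) x) := by
        intro k
        have h := hsub k
        have hne : (σ ^ k) x ≠ j := fun hh => h.1 (hh ▸ hjmem)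
        exact (fs_eq (h3 _ hne h.2)).symm
      have hiter : ∀ k, (σ ^ k) x = (fs c)^[k] x := by
        intro k
        induction k with
        | zero => simp
        | succ k ih =>
            rw [pow_succ', Equiv.Perm.mul_apply, hstep k, ih,
              Function.iterate_succ_apply']
      have hxj : x ≠ j := fun hh => hxL (hh ▸ hjmem)
      have hcyc : Relation.TransGen (Step c) x x := by
        rw [cyc_iff]
        refine ⟨?_, orderOf σ, orderOf_pos σ, ?_⟩
        · rw [h3 x hxj hmove]; simp
        · rw [← hiter, pow_orderOf_eq_one]; rfl
      exact hacyc x hcyc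
    apply Equiv.ext
    intro x
    by_cases hxL : x ∈ L
    · obtain ⟨l, hl, rfl⟩ := (hmemL x).mp hxL
      rcases Nat.lt_or_ge l K with hlK | hge
      · have e1 : σ (g l) = g (l + 1) := by
          have h5 := hA (l + 1) (by omega)
          rw [pow_succ', Equiv.Perm.mul_apply, hA l (by omega)] at h5
          exact h5
        rw [e1, ← hchain l hlK]
      · have : l = K := by omega
        subst this
        rw [hjL, h1, hσ₀j]
    · rw [hB x hxL, hout x hxL]
  rw [Finset.sum_eq_single_of_mem σ₀
    (Finset.mem_filter.mpr ⟨Finset.mem_univ _, hcpt0⟩)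
    (fun σ hσ hne => absurd (huniq σ (Finset.mem_filter.mp hσ).2) hne)]
  rcases Nat.eq_zero_or_pos K with hK0 | hKpos
  · have hL1 : L = [i] := by
      rw [hL, hK0]
      simp [iterL, hg]
    have hone : σ₀ = 1 := by rw [hσ₀, hL1, List.formPerm_singleton]
    rw [hone, trm]
    have hnu1 : nu j (1 : Equiv.Perm α) = 0 := by
      rw [nu]
      simp
    rw [hnu1]
    simp
  · have hlen2 : 2 ≤ L.length := by rw [hL, iterL_length]; omega
    have hcyc : σ₀.IsCycle := List.isCycle_formPerm hnd hlen2
    have hLne : ∀ x : α, L ≠ [x] := by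
      intro x hx
      rw [hx] at hlen2
      simp at hlen2
    have hsupp : σ₀.support = L.toFinset := List.support_formPerm_of_nodup L hnd hLne
    have hcard : σ₀.support.card = K + 1 := by
      rw [hsupp, List.toFinset_card_of_nodup hnd, hL, iterL_length]
    have hij : i ≠ j := by
      have := hKmin 0 hKpos
      exact this
    have hnu : nu j σ₀ = K := by
      have hset : (Finset.univ.filter fun u => u ≠ j ∧ σ₀ u ≠ u) = σ₀.support.erase j := by
        ext u
        simp only [Finset.mem_filter, Finset.mem_univ, true_and, Finset.mem_erase,
          Equiv.Perm.mem_support]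
      have hjsupp : j ∈ σ₀.support := by
        rw [Equiv.Perm.mem_support, hσ₀j]
        exact hij
      rw [nu, hset, Finset.card_erase_of_mem hjsupp, hcard]
      omega
    have hsgn : Equiv.Perm.sign σ₀ = -(-1 : ℤˣ) ^ (K + 1) := by
      rw [hcyc.sign, hcard]
    rw [trm, hsgn, hnu]
    have hcast : (((-(-1 : ℤˣ) ^ (K + 1) : ℤˣ) : ℤ) : ℝ) = -(-1 : ℝ) ^ (K + 1) := by
      push_cast
      ring
    rw [hcast, pow_succ]
    have h2 : -((-1 : ℝ) ^ K * -1) * (-1 : ℝ) ^ K = (-1 : ℝ) ^ K * (-1 : ℝ) ^ K := by ring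
    rw [h2, ← pow_add, show K + K = 2 * K by ring, pow_mul]
    norm_num

/-! ### The cyclic case: a sign-reversing involution -/

lemma compat_sum_cyclic {c : α → Option α} {i j : α} (hcj : c j = none)
    (hloop : ∀ u, c u ≠ some u) (a : α) (hcyca : Relation.TransGen (Step c) a a) :
    (∑ σ ∈ Finset.univ.filter (fun σ : Equiv.Perm α => Compat j i σ c), trm j σ) = 0 := by
  classical
  obtain ⟨ha, hexT⟩ := cyc_iff.mp hcyca
  set T := Nat.find hexT with hTdef
  obtain ⟨hTpos, hTa⟩ : 0 < T ∧ (fs c)^[T] a = a := Nat.find_spec hexT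
  have hTmin : ∀ t, t < T → ¬(0 < t ∧ (fs c)^[t] a = a) := fun t ht => Nat.find_min hexT ht
  set g : ℕ → α := fun l => (fs c)^[l] a with hg
  have hsome : ∀ l, c (g l) ≠ none := cyc_all_some hTpos hTa ha
  have hT2 : 2 ≤ T := by
    by_contra h
    have hT1 : T = 1 := by omega
    have hfa : fs c a = a := by
      have := hTa
      rw [hT1] at this
      simpa using this
    exact hloop a ((csome ha).trans (by rw [hfa]))
  have haux : ∀ x y, x < y → y < T → g x ≠ g y := by
    intro x y hxy hy heq
    have e1 : (fs c)^[T - y] (g y) = a := by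
      have h2 := Function.iterate_add_apply (fs c) (T - y) y a
      rw [Nat.sub_add_cancel hy.le] at h2
      exact h2.symm.trans hTa
    have e2 : (fs c)^[T - y + x] a = a := by
      rw [Function.iterate_add_apply]
      show (fs c)^[T - y] (g x) = a
      rw [heq]
      exact e1
    exact hTmin (T - y + x) (by omega) ⟨by omega, e2⟩
  have hinj : ∀ x, x < T → ∀ y, y < T → g x = g y → x = y := by
    intro x hx y hy hxy
    rcases Nat.lt_trichotomy x y with h | h | h
    · exact absurd hxy (haux x y h hy)
    · exact h
    · exact absurd hxy.symm (haux y x h hx)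
  set Lc := iterL g T with hLc
  have hnd : Lc.Nodup := iterL_nodup hinj
  set ρ := Lc.formPerm with hρdef
  have hmemLc : ∀ x, x ∈ Lc ↔ ∃ l, l < T ∧ g l = x := fun x => iterL_mem
  have ha0 : a ∈ Lc := (hmemLc a).mpr ⟨0, hTpos, rfl⟩
  have hsomeL : ∀ x ∈ Lc, c x ≠ none := by
    intro x hx
    obtain ⟨l, _, rfl⟩ := (hmemLc x).mp hx
    exact hsome l
  have hstepg : ∀ l, fs c (g l) = g (l + 1) := fun l =>
    (Function.iterate_succ_apply' (fs c) l a).symm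
  have hfmem : ∀ x ∈ Lc, fs c x ∈ Lc := by
    intro x hx
    obtain ⟨l, hl, rfl⟩ := (hmemLc x).mp hx
    rw [hstepg l]
    rcases Nat.lt_or_ge (l + 1) T with h | h
    · exact (hmemLc _).mpr ⟨l + 1, h, rfl⟩
    · have hlT : l + 1 = T := by omega
      have : g (l + 1) = g 0 := by rw [hlT]; exact hTa
      rw [this]
      exact (hmemLc _).mpr ⟨0, hTpos, rfl⟩
  have hρf : ∀ x ∈ Lc, ρ x = fs c x := by
    intro x hx
    obtain ⟨l, hl, rfl⟩ := (hmemLc x).mp hx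
    rw [iterL_formPerm hnd hl, hstepg l]
    rcases Nat.lt_or_ge (l + 1) T with h | h
    · rw [Nat.mod_eq_of_lt h]
    · have hlT : l + 1 = T := by omega
      rw [hlT, Nat.mod_self]
      show g 0 = g T
      exact hTa.symm
  have hfix_ne : ∀ x ∈ Lc, fs c x ≠ x := by
    intro x hx h
    exact hloop x ((csome (hsomeL x hx)).trans (by rw [h]))
  have hjL : j ∉ Lc := fun hj => hsomeL j hj hcj
  have hρout : ∀ x, x ∉ Lc → ρ x = x := fun x hx => List.formPerm_apply_of_notMem hx
  have hρmem : ∀ x ∈ Lc, ρ x ∈ Lc := fun x hx => List.formPerm_apply_mem_of_mem hx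
  have hρinvmem : ∀ x ∈ Lc, ρ⁻¹ x ∈ Lc := by
    intro x hx
    by_contra h
    have h2 := hρout _ h
    rw [show ρ (ρ⁻¹ x) = x from Equiv.apply_symm_apply ρ x] at h2
    rw [h2] at hx
    exact h hx
  have hρinvout : ∀ x, x ∉ Lc → ρ⁻¹ x = x := by
    intro x hx
    have h2 := hρout x hx
    calc ρ⁻¹ x = ρ⁻¹ (ρ x) := by rw [h2]
      _ = x := Equiv.symm_apply_apply ρ x
  have hlen2 : 2 ≤ Lc.length := by rw [hLc, iterL_length]; omega
  have hLne : ∀ x : α, Lc ≠ [x] := by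
    intro x hx
    rw [hx] at hlen2
    simp at hlen2
  have hsgnρ : Equiv.Perm.sign ρ = -(-1 : ℤˣ) ^ T := by
    rw [(List.isCycle_formPerm hnd hlen2).sign]
    congr 1
    rw [List.support_formPerm_of_nodup Lc hnd hLne, List.toFinset_card_of_nodup hnd,
      hLc, iterL_length]
  have hdich : ∀ σ : Equiv.Perm α, Compat j i σ c →
      (∀ x ∈ Lc, σ x = x) ∨ (∀ x ∈ Lc, σ x = fs c x) := by
    intro σ hcpt
    obtain ⟨h1, h2, h3⟩ := hcpt
    by_cases hall : ∀ x ∈ Lc, σ x = x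
    · exact Or.inl hall
    · right
      push_neg at hall
      obtain ⟨x₀, hx₀L, hx₀⟩ := hall
      have hchain : ∀ k, σ ((fs c)^[k] x₀) ≠ (fs c)^[k] x₀ ∧ (fs c)^[k] x₀ ∈ Lc := by
        intro k
        induction k with
        | zero => exact ⟨by simpa using hx₀, by simpa using hx₀L⟩
        | succ k ih =>
            obtain ⟨hne, hmem⟩ := ih
            have hyj : (fs c)^[k] x₀ ≠ j := fun h => hjL (h ▸ hmem)
            have hσy : σ ((fs c)^[k] x₀) = fs c ((fs c)^[k] x₀) :=
              (fs_eq (h3 _ hyj hne)).symm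
            have hmem' : (fs c)^[k + 1] x₀ ∈ Lc := by
              rw [Function.iterate_succ_apply']
              exact hfmem _ hmem
            refine ⟨?_, hmem'⟩
            rw [Function.iterate_succ_apply']
            intro heq
            rw [← hσy] at heq
            exact hne (σ.injective heq)
      intro x hx
      obtain ⟨l, hl, rfl⟩ := (hmemLc x).mp hx
      obtain ⟨l₀, hl₀, hx₀eq⟩ := (hmemLc x₀).mp hx₀L
      have hd : (fs c)^[l + (T - l₀)] x₀ = g l := by
        rw [← hx₀eq]
        show (fs c)^[l + (T - l₀)] ((fs c)^[l₀] a) = g l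
        rw [← Function.iterate_add_apply]
        have he : l + (T - l₀) + l₀ = l + T := by omega
        rw [he, Function.iterate_add_apply, hTa]
      have hcl := hchain (l + (T - l₀))
      rw [hd] at hcl
      have hyj : g l ≠ j := fun h => hjL (h ▸ hx)
      exact (fs_eq (h3 _ hyj hcl.1)).symm
  have htoggle : ∀ σ : Equiv.Perm α, Compat j i σ c → (∀ x ∈ Lc, σ x = x) →
      Compat j i (σ * ρ) c ∧ (∀ x ∈ Lc, (σ * ρ) x = fs c x)
        ∧ trm j (σ * ρ) = -trm j σ := by
    intro σ hcpt hfixed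
    obtain ⟨h1, h2, h3⟩ := hcpt
    have hLval : ∀ x ∈ Lc, (σ * ρ) x = fs c x := by
      intro x hx
      rw [Equiv.Perm.mul_apply, hfixed _ (hρmem x hx)]
      exact hρf x hx
    have hout' : ∀ x, x ∉ Lc → (σ * ρ) x = σ x := by
      intro x hx
      rw [Equiv.Perm.mul_apply, hρout x hx]
    have hcpt' : Compat j i (σ * ρ) c := by
      refine ⟨?_, h2, ?_⟩
      · rw [hout' j hjL, h1]
      · intro u hu hne
        by_cases huL : u ∈ Lc
        · rw [hLval u huL]
          exact csome (hsomeL u huL)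
        · rw [hout' u huL] at hne ⊢
          exact h3 u hu hne
    have hfilter : (Finset.univ.filter fun u => u ≠ j ∧ (σ * ρ) u ≠ u)
        = (Finset.univ.filter fun u => u ≠ j ∧ σ u ≠ u) ∪ Lc.toFinset := by
      ext u
      simp only [Finset.mem_filter, Finset.mem_univ, true_and, Finset.mem_union,
        List.mem_toFinset]
      by_cases hu : u ∈ Lc
      · constructor
        · intro _; exact Or.inr hu
        · intro _
          refine ⟨fun h => hjL (h ▸ hu), ?_⟩
          rw [hLval u hu]
          exact hfix_ne u hu
      · rw [hout' u hu]
        constructor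
        · exact fun h => Or.inl h
        · rintro (h | h)
          · exact h
          · exact absurd h hu
    have hdisj : Disjoint (Finset.univ.filter fun u => u ≠ j ∧ σ u ≠ u) Lc.toFinset := by
      rw [Finset.disjoint_right]
      intro u huT hufil
      rw [List.mem_toFinset] at huT
      rw [Finset.mem_filter] at hufil
      exact hufil.2.2 (hfixed u huT)
    have hnueq : nu j (σ * ρ) = nu j σ + T := by
      rw [nu, hfilter, Finset.card_union_of_disjoint hdisj,
        List.toFinset_card_of_nodup hnd, hLc, iterL_length, nu]
    have htrm : trm j (σ * ρ) = -trm j σ := by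
      rw [trm, map_mul, hsgnρ, hnueq, pow_add, trm]
      have hc : ((((Equiv.Perm.sign σ * (-(-1 : ℤˣ) ^ T)) : ℤˣ) : ℤ) : ℝ)
          = ((Equiv.Perm.sign σ : ℤ) : ℝ) * (-(-1 : ℝ) ^ T) := by push_cast; ring
      rw [hc]
      have hTT : ((-1 : ℝ) ^ T) * ((-1 : ℝ) ^ T) = 1 := by
        rw [← pow_add, show T + T = 2 * T by ring, pow_mul]; norm_num
      calc ((Equiv.Perm.sign σ : ℤ) : ℝ) * (-(-1 : ℝ) ^ T) * ((-1) ^ nu j σ * (-1) ^ T)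
          = -(((Equiv.Perm.sign σ : ℤ) : ℝ) * (-1) ^ nu j σ)
              * ((-1 : ℝ) ^ T * (-1 : ℝ) ^ T) := by ring
        _ = -(((Equiv.Perm.sign σ : ℤ) : ℝ) * (-1) ^ nu j σ) := by rw [hTT, mul_one]
    exact ⟨hcpt', hLval, htrm⟩
  set Φ : Equiv.Perm α → Equiv.Perm α :=
    fun σ => if σ a = a then σ * ρ else σ * ρ⁻¹ with hΦdef
  have hmain : ∀ σ : Equiv.Perm α, Compat j i σ c →
      Compat j i (Φ σ) c ∧ trm j (Φ σ) = -trm j σ ∧ Φ σ ≠ σ ∧ Φ (Φ σ) = σ := by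
    intro σ hcpt
    have hfne : fs c a ≠ a := hfix_ne a ha0
    rcases hdich σ hcpt with hfixed | hmove
    · have hfa : σ a = a := hfixed a ha0
      have ht := htoggle σ hcpt hfixed
      have hΦσ : Φ σ = σ * ρ := by simp only [hΦdef]; rw [if_pos hfa]
      have hmova : (σ * ρ) a = fs c a := ht.2.1 a ha0
      have hΦa : (σ * ρ) a ≠ a := by rw [hmova]; exact hfne
      refine ⟨by rw [hΦσ]; exact ht.1, by rw [hΦσ]; exact ht.2.2, ?_, ?_⟩
      · rw [hΦσ]
        intro h
        rw [h, hfa] at hmova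
        exact hfne hmova.symm
      · rw [hΦσ]
        have : Φ (σ * ρ) = (σ * ρ) * ρ⁻¹ := by simp only [hΦdef]; rw [if_neg hΦa]
        rw [this, mul_inv_cancel_right]
    · have hfa : σ a ≠ a := fun h => hfix_ne a ha0 ((hmove a ha0).symm.trans h)
      set τ := σ * ρ⁻¹ with hτ
      have hτfix : ∀ x ∈ Lc, τ x = x := by
        intro x hx
        rw [hτ, Equiv.Perm.mul_apply, hmove _ (hρinvmem x hx), ← hρf _ (hρinvmem x hx),
          show ρ (ρ⁻¹ x) = x from Equiv.apply_symm_apply ρ x]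
      have hτcpt : Compat j i τ c := by
        obtain ⟨h1, h2, h3⟩ := hcpt
        refine ⟨?_, h2, ?_⟩
        · rw [hτ, Equiv.Perm.mul_apply, hρinvout j hjL, h1]
        · intro u hu hne
          by_cases huL : u ∈ Lc
          · exact absurd (hτfix u huL) hne
          · rw [hτ, Equiv.Perm.mul_apply, hρinvout u huL] at hne ⊢
            exact h3 u hu hne
      have ht := htoggle τ hτcpt hτfix
      have hτρ : τ * ρ = σ := by rw [hτ]; exact inv_mul_cancel_right σ ρ
      have hΦσ : Φ σ = τ := by simp only [hΦdef]; rw [if_neg hfa]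
      refine ⟨by rw [hΦσ]; exact hτcpt, ?_, ?_, ?_⟩
      · rw [hΦσ]
        have h5 := ht.2.2
        rw [hτρ] at h5
        linarith
      · rw [hΦσ]
        intro h
        rw [← h] at hfa
        exact hfa (hτfix a ha0)
      · rw [hΦσ]
        have : Φ τ = τ * ρ := by simp only [hΦdef]; rw [if_pos (hτfix a ha0)]
        rw [this, hτρ]
  refine Finset.sum_involution (fun σ _ => Φ σ) ?_ ?_ ?_ ?_
  · intro σ hσ
    rw [(hmain σ (Finset.mem_filter.mp hσ).2).2.1]
    ring
  · intro σ hσ _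
    exact (hmain σ (Finset.mem_filter.mp hσ).2).2.2.1
  · intro σ hσ
    exact Finset.mem_filter.mpr ⟨Finset.mem_univ _, (hmain σ (Finset.mem_filter.mp hσ).2).1⟩
  · intro σ hσ
    exact (hmain σ (Finset.mem_filter.mp hσ).2).2.2.2

/-! ### Combined evaluation of the compatible sum -/

theorem key_compat_sum (i j : α) (c : α → Option α) (hcj : c j = none)
    (hloop : ∀ u, c u ≠ some u) :
    (∑ σ ∈ Finset.univ.filter (fun σ : Equiv.Perm α => Compat j i σ c), trm j σ)
      = if (∀ a, ¬ Relation.TransGen (Step c) a a) ∧ Relation.ReflTransGen (Step c) i j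
          then 1 else 0 := by
  by_cases hacyc : ∀ a, ¬ Relation.TransGen (Step c) a a
  · by_cases hreach : Relation.ReflTransGen (Step c) i j
    · rw [if_pos ⟨hacyc, hreach⟩]
      exact compat_sum_acyclic hcj hacyc hreach
    · rw [if_neg (by tauto)]
      apply Finset.sum_eq_zero
      intro σ hσ
      exact ((hreach (compat_reaches (Finset.mem_filter.mp hσ).2))).elim
  · rw [if_neg (by tauto)]
    push_neg at hacyc
    obtain ⟨a, ha⟩ := hacyc
    exact compat_sum_cyclic hcj hloop a ha

/-! ### From configurations to forests -/

/-- The arc set of a configuration. -/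
noncomputable def toF (c : α → Option α) : Finset (α × α) :=
  Finset.univ.filter fun p : α × α => c p.2 = some p.1

lemma mem_toF {c : α → Option α} {p : α × α} : p ∈ toF c ↔ c p.2 = some p.1 := by
  simp [toF]

/-- The configuration of a forest. -/
noncomputable def toC (F : Finset (α × α)) : α → Option α := fun u =>
  if h : ∃ a, (a, u) ∈ F then some h.choose else none

lemma transGen_toF {c : α → Option α} {a : α} :
    Relation.TransGen (fun x y => (x, y) ∈ toF c) a a ↔ Relation.TransGen (Step c) a a := by
  have h1 : ∀ x y : α, ((x, y) ∈ toF c) ↔ Function.swap (Step c) x y := by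
    intro x y; rw [mem_toF]; rfl
  constructor
  · intro h
    exact Relation.transGen_swap.mp (Relation.TransGen.mono (fun x y hxy => (h1 x y).mp hxy) _ _ h)
  · intro h
    exact Relation.TransGen.mono (fun x y hxy => (h1 x y).mpr hxy) _ _ (Relation.transGen_swap.mpr h)

lemma reflTransGen_toF {c : α → Option α} {x y : α} :
    Relation.ReflTransGen (fun a b => (a, b) ∈ toF c) x y
      ↔ Relation.ReflTransGen (Step c) y x := by
  have h1 : ∀ x y : α, ((x, y) ∈ toF c) ↔ Function.swap (Step c) x y := by
    intro x y; rw [mem_toF]; rfl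
  constructor
  · intro h
    exact Relation.reflTransGen_swap.mp (Relation.ReflTransGen.mono (fun a b hab => (h1 a b).mp hab) _ _ h)
  · intro h
    exact Relation.ReflTransGen.mono (fun a b hab => (h1 a b).mpr hab) _ _ (Relation.reflTransGen_swap.mpr h)

lemma toC_mem {F : Finset (α × α)} (hdeg : ∀ b, (F.filter fun p => p.2 = b).card ≤ 1)
    {a u : α} : (a, u) ∈ F ↔ toC F u = some a := by
  constructor
  · intro h
    have hex : ∃ a', (a', u) ∈ F := ⟨a, h⟩
    have hch : (hex.choose, u) ∈ F := hex.choose_spec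
    have : ((a, u) : α × α) = (hex.choose, u) := by
      have hc1 : ((a, u) : α × α) ∈ F.filter fun p => p.2 = u :=
        Finset.mem_filter.mpr ⟨h, rfl⟩
      have hc2 : ((hex.choose, u) : α × α) ∈ F.filter fun p => p.2 = u :=
        Finset.mem_filter.mpr ⟨hch, rfl⟩
      exact Finset.card_le_one.mp (hdeg u) _ hc1 _ hc2
    rw [toC, dif_pos hex]
    rw [Prod.mk.injEq] at this
    rw [this.1]
  · intro h
    rw [toC] at h
    by_cases hex : ∃ a', (a', u) ∈ F
    · rw [dif_pos hex] at h
      have hch := hex.choose_spec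
      have heq : hex.choose = a := by injection h
      rwa [heq] at hch
    · rw [dif_neg hex] at h
      exact absurd h (by simp)

lemma toF_toC {F : Finset (α × α)} (hdeg : ∀ b, (F.filter fun p => p.2 = b).card ≤ 1) :
    toF (toC F) = F := by
  ext p
  cases p with
  | mk a u => rw [mem_toF]; exact (toC_mem hdeg).symm

lemma wgt_toF (ε : α → α → ℝ) (c : α → Option α) : wgt ε c = arcWt ε (toF c) := by
  rw [wgt, arcWt, ← Finset.prod_filter_mul_prod_filter_not Finset.univ (fun u => c u ≠ none)]
  have h2 : (∏ u ∈ Finset.univ.filter (fun u => ¬ c u ≠ none),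
      (c u).elim 1 (fun m => ε m u)) = 1 := by
    apply Finset.prod_eq_one
    intro u hu
    have : c u = none := not_not.mp (Finset.mem_filter.mp hu).2
    rw [this]
    rfl
  rw [h2, mul_one]
  refine Finset.prod_nbij' (fun u => (fs c u, u)) (fun p => p.2) ?_ ?_ ?_ ?_ ?_
  · intro u hu
    rw [mem_toF]
    exact csome (Finset.mem_filter.mp hu).2
  · intro p hp
    rw [mem_toF] at hp
    refine Finset.mem_filter.mpr ⟨Finset.mem_univ _, ?_⟩
    rw [hp]
    simp
  · intro u _; rfl
  · intro p hp
    rw [mem_toF] at hp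
    exact Prod.ext (fs_eq hp) rfl
  · intro u hu
    rw [csome (Finset.mem_filter.mp hu).2]
    rfl

lemma good_sum (ε : α → α → ℝ) (i j : α) :
    (∑ c ∈ Finset.univ.filter (fun c : α → Option α =>
        c j = none ∧ (∀ a, ¬ Relation.TransGen (Step c) a a)
          ∧ Relation.ReflTransGen (Step c) i j), wgt ε c)
      = ∑ F ∈ divForestsFromTo j i, arcWt ε F := by
  classical
  refine Finset.sum_nbij' toF toC ?_ ?_ ?_ ?_ ?_
  · intro c hc
    obtain ⟨hcj, hacyc, hreach⟩ := (Finset.mem_filter.mp hc).2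
    rw [divForestsFromTo, Finset.mem_filter]
    refine ⟨Finset.mem_univ _, ⟨?_, ?_, ?_⟩, ?_, ?_⟩
    · intro p hp heq
      rw [mem_toF] at hp
      exact hacyc p.2 (Relation.TransGen.single (show Step c p.2 p.2 from heq ▸ hp))
    · intro b
      rw [Finset.card_le_one]
      intro x hx y hy
      obtain ⟨hx1, hx2⟩ := Finset.mem_filter.mp hx
      obtain ⟨hy1, hy2⟩ := Finset.mem_filter.mp hy
      rw [mem_toF] at hx1 hy1
      rw [hx2] at hx1
      rw [hy2] at hy1
      have : x.1 = y.1 := by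
        rw [hx1] at hy1
        exact (Option.some.injEq _ _).mp hy1
      exact Prod.ext this (hx2.trans hy2.symm)
    · intro a ha
      exact hacyc a (transGen_toF.mp ha)
    · intro a ha
      rw [mem_toF] at ha
      rw [hcj] at ha
      exact absurd ha (by simp)
    · exact reflTransGen_toF.mpr hreach
  · intro F hF
    obtain ⟨⟨hne, hdeg, hacF⟩, hroot, hpath⟩ := (Finset.mem_filter.mp hF).2
    have hFc : toF (toC F) = F := toF_toC hdeg
    refine Finset.mem_filter.mpr ⟨Finset.mem_univ _, ?_, ?_, ?_⟩
    · rw [toC, dif_neg]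
      rintro ⟨a, ha⟩
      exact hroot a ha
    · intro a ha
      apply hacF a
      have := transGen_toF.mpr ha
      rwa [hFc] at this
    · apply reflTransGen_toF.mp
      rw [hFc]
      exact hpath
  · intro c hc
    funext u
    cases hcu : c u with
    | none =>
        rw [toC, dif_neg]
        rintro ⟨a, ha⟩
        rw [mem_toF, hcu] at ha
        exact absurd ha (by simp)
    | some v =>
        have hv : (v, u) ∈ toF (c) := mem_toF.mpr hcu
        have hdeg : ∀ b, ((toF c).filter fun p => p.2 = b).card ≤ 1 := by
          intro b
      
          rw [Finset.card_le_one]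
          intro x hx y hy
          obtain ⟨hx1, hx2⟩ := Finset.mem_filter.mp hx
          obtain ⟨hy1, hy2⟩ := Finset.mem_filter.mp hy
          rw [mem_toF] at hx1 hy1
          rw [hx2] at hx1
          rw [hy2] at hy1
          rw [hx1] at hy1
          exact Prod.ext ((Option.some.injEq _ _).mp hy1) (hx2.trans hy2.symm)
        exact (toC_mem hdeg).mp hv
  · intro F hF
    exact toF_toC (Finset.mem_filter.mp hF).2.1.2.1
  · intro c _
    exact wgt_toF ε c

/-! ### Partition of forests by the root reaching a given vertex -/

lemma forest_partition (ε : α → α → ℝ) (i : α) :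
    (∑ j : α, ∑ F ∈ divForestsFromTo j i, arcWt ε F)
      = ∑ F ∈ divForests α, arcWt ε F := by
  classical
  have hsplit : ∀ j : α, divForestsFromTo j i
      = (divForests α).filter (fun F => (∀ a, (a, j) ∉ F)
          ∧ Relation.ReflTransGen (fun x y : α => (x, y) ∈ F) j i) := by
    intro j
    rw [divForestsFromTo, divForests, Finset.filter_filter]
  simp_rw [hsplit, Finset.sum_filter]
  rw [Finset.sum_comm]
  apply Finset.sum_congr rfl
  intro F hF
  obtain ⟨hne, hdeg, hacF⟩ := (Finset.mem_filter.mp hF).2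
  set c := toC F with hc
  have hFc : toF c = F := toF_toC hdeg
  have hacc : ∀ a, ¬ Relation.TransGen (Step c) a a := by
    intro a ha
    apply hacF a
    have := transGen_toF.mpr ha
    rwa [hFc] at this
  have hex : ∃ k, c ((fs c)^[k] i) = none := by
    by_contra hall
    push_neg at hall
    have key : ∀ x y : ℕ, x < y → (fs c)^[x] i = (fs c)^[y] i → False := by
      intro x y hlt he
      have hv : (fs c)^[y - x] ((fs c)^[x] i) = (fs c)^[x] i := by
        rw [← Function.iterate_add_apply, Nat.sub_add_cancel hlt.le, ← he]
      exact hacc _ (cyc_iff.mpr ⟨hall x, y - x, by omega, hv⟩)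
    obtain ⟨x, y, hxy, heq⟩ :=
      Finite.exists_ne_map_eq_of_infinite (fun k : ℕ => (fs c)^[k] i)
    rcases hxy.lt_or_gt with h | h
    · exact key x y h heq
    · exact key y x h heq.symm
  set K := Nat.find hex with hK
  have hKspec : c ((fs c)^[K] i) = none := Nat.find_spec hex
  set r := (fs c)^[K] i with hr
  have hroot_r : ∀ a, (a, r) ∉ F := by
    intro a haF
    rw [← hFc, mem_toF] at haF
    rw [hKspec] at haF
    exact absurd haF (by simp)
  have hreach_r : Relation.ReflTransGen (fun x y : α => (x, y) ∈ F) r i := by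
    have h1 : Relation.ReflTransGen (Step c) i r :=
      iterate_reflTransGen K (fun l hl => Nat.find_min hex hl)
    have h2 := reflTransGen_toF.mpr h1
    rwa [hFc] at h2
  have huniq : ∀ j : α, (∀ a, (a, j) ∉ F) →
      Relation.ReflTransGen (fun x y : α => (x, y) ∈ F) j i → j = r := by
    intro j hroot hpath
    have hcj : c j = none := by
      cases hcj' : c j with
      | none => rfl
      | some a => exact absurd ((toC_mem hdeg).mpr hcj') (hroot a)
    have h1 : Relation.ReflTransGen (Step c) i j := by
      rw [← hFc] at hpath
      exact reflTransGen_toF.mp hpath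
    obtain ⟨k, hk⟩ := reflTransGen_iterate h1
    rcases le_or_gt k K with h | h
    · have hrj : (fs c)^[K] i = j := by
        have h2 := Function.iterate_add_apply (fs c) (K - k) k i
        rw [Nat.sub_add_cancel h] at h2
        rw [h2, hk]
        exact fs_stuck hcj _
      exact hrj.symm
    · rw [← hk]
      have h2 := Function.iterate_add_apply (fs c) (k - K) K i
      rw [Nat.sub_add_cancel h.le] at h2
      rw [h2]
      exact fs_stuck hKspec _
  rw [Finset.sum_eq_single_of_mem r (Finset.mem_univ r) ?_]
  · rw [if_pos ⟨hroot_r, hreach_r⟩]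
  · intro j _ hne
    rw [if_neg]
    rintro ⟨hroot, hpath⟩
    exact hne (huniq j hroot hpath)

end MFT

set_option maxHeartbeats 1000000 in
/-- **Theorem 7, part 1** (relative forest-accessibilities of a digraph). If
`W = I + L(Γ)` is invertible with inverse `Q = (q_{ij})`, then
`q_{ij} = ε(𝔉^{j→i}) / ε(𝔉)`. -/
theorem forest_accessibility_digraph (n : ℕ) (ε : Fin n → Fin n → ℝ)
    (hdiag : ∀ a, ε a a = 0) (hW : IsUnit (1 + kirchhoff ε)) (i j : Fin n) :
    (1 + kirchhoff ε)⁻¹ i j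
      = (∑ F ∈ divForestsFromTo j i, arcWt ε F)
          / (∑ F ∈ divForests (Fin n), arcWt ε F) := by
  classical
  set W := 1 + kirchhoff ε with hWdef
  have lemA : ∀ i' j' : Fin n, W.adjugate i' j'
      = ∑ F ∈ divForestsFromTo j' i', arcWt ε F := by
    intro i' j'
    rw [Matrix.adjugate_apply, hWdef, MFT.det_expand ε hdiag i' j']
    have h1 : ∀ c : Fin n → Option (Fin n),
        (∑ σ ∈ Finset.univ.filter (fun σ : Equiv.Perm (Fin n) =>
            MFT.Compat j' i' σ c), MFT.trm j' σ) * MFT.wgt ε c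
        = (if c j' = none ∧ (∀ a, ¬ Relation.TransGen (MFT.Step c) a a)
              ∧ Relation.ReflTransGen (MFT.Step c) i' j'
            then MFT.wgt ε c else 0) := by
      intro c
      by_cases hloop : ∀ u, c u ≠ some u
      · by_cases hcj : c j' = none
        · rw [MFT.key_compat_sum i' j' c hcj hloop]
          by_cases hcond : (∀ a, ¬ Relation.TransGen (MFT.Step c) a a)
              ∧ Relation.ReflTransGen (MFT.Step c) i' j'
          · rw [if_pos hcond, if_pos ⟨hcj, hcond.1, hcond.2⟩, one_mul]
          · rw [if_neg hcond, if_neg (by tauto), zero_mul]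
        · have hempty : (Finset.univ.filter (fun σ : Equiv.Perm (Fin n) =>
              MFT.Compat j' i' σ c)) = ∅ := by
            rw [Finset.filter_eq_empty_iff]
            intro σ _
            exact fun hcpt => hcj hcpt.2.1
          rw [hempty, Finset.sum_empty, zero_mul, if_neg (by tauto)]
      · push_neg at hloop
        obtain ⟨u, hu⟩ := hloop
        have hwgt : MFT.wgt ε c = 0 := by
          rw [MFT.wgt]
          apply Finset.prod_eq_zero (Finset.mem_univ u)
          rw [hu]
          simpa using hdiag u
        rw [hwgt, mul_zero, ite_self]
    rw [Finset.sum_congr rfl (fun c _ => h1 c), ← Finset.sum_filter]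
    have hgs := MFT.good_sum ε i' j'
    convert hgs using 2
    ext c
    simp only [Finset.mem_filter, Finset.mem_univ, true_and]
  have hWv : Matrix.mulVec W (fun _ => (1 : ℝ)) = fun _ => (1 : ℝ) := by
    funext u
    show (∑ x, W u x * 1) = 1
    simp only [mul_one]
    have hWx : ∀ x, W u x = (if u = x then (1 : ℝ) else 0) + kirchhoff ε u x := by
      intro x
      rw [hWdef, Matrix.add_apply, Matrix.one_apply]
    rw [Finset.sum_congr rfl (fun x _ => hWx x), Finset.sum_add_distrib]
    have h1 : (∑ x, if u = x then (1 : ℝ) else 0) = 1 := by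
      rw [Finset.sum_ite_eq]
      simp
    have hksum : (∑ x, kirchhoff ε u x) = 0 := by
      rw [← Finset.sum_erase_add _ _ (Finset.mem_univ u)]
      have h2 : (∑ x ∈ Finset.univ.erase u, kirchhoff ε u x)
          = ∑ x ∈ Finset.univ.erase u, -ε x u := by
        apply Finset.sum_congr rfl
        intro x hx
        have hux : ¬ u = x := fun h => (Finset.mem_erase.mp hx).1 h.symm
        show (if u = x then _ else -ε x u) = -ε x u
        rw [if_neg hux]
      have h3 : kirchhoff ε u u = ∑ k ∈ Finset.univ.erase u, ε k u := by
        show (if u = u then _ else _) = _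
        rw [if_pos rfl]
      rw [h2, h3, Finset.sum_neg_distrib, neg_add_cancel]
    rw [h1, hksum, add_zero]
  have hdet : W.det = ∑ F ∈ divForests (Fin n), arcWt ε F := by
    have hadj := Matrix.adjugate_mul W
    have h1 : Matrix.mulVec W.adjugate (Matrix.mulVec W (fun _ => (1 : ℝ)))
        = W.det • (fun _ => (1 : ℝ)) := by
      rw [Matrix.mulVec_mulVec, hadj, Matrix.smul_mulVec, Matrix.one_mulVec]
    rw [hWv] at h1
    have h2 := congrFun h1 i
    have h3 : (∑ j' : Fin n, W.adjugate i j') = W.det := by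
      have h4 : (Matrix.mulVec W.adjugate (fun _ => (1 : ℝ))) i = ∑ j' : Fin n, W.adjugate i j' := by
        show (∑ x, W.adjugate i x * 1) = _
        simp only [mul_one]
      rw [← h4, h2]
      simp
    rw [← h3, Finset.sum_congr rfl (fun j' _ => lemA i j')]
    exact MFT.forest_partition ε i
  rw [Matrix.inv_def, Matrix.smul_apply, Ring.inverse_eq_inv, lemA i j, hdet, smul_eq_mul,
    div_eq_mul_inv, mul_comm]
end
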